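/- arXiv:1909.06832 — 8 statements merged into one kernel-verified Lean document; each statement's English description precedes it below -/
import Mathlib

section
/- Let D ⊆ ℝ^d be open and let 0 < δ < σ. Then there is a constant C, depending only on d and on the mollifier φ, such that for every u ∈ L²(D): ‖ů_δ − u‖²_{L²(D(σ))} ≤ C δ² F_δ^{σ,1}(u), where F_δ^{σ,1}(u) = ∫_{D(σ)} ∫_{{|ξ|≤1}} ((u(x+δξ) − u(x))/δ)² dξ dx. -/
open MeasureTheory Metric
open scoped ENNReal

/-- Closeness of the local average `ů_δ` to `u`:
for an open set `D ⊆ ℝ^d` and `0 < δ < σ` there is a constant `C`, depending only on the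
dimension `d` and the mollifier `φ`, such that for every `u ∈ L²(D)`,
`‖ů_δ − u‖²_{L²(D(σ))} ≤ C δ² F_δ^{σ,1}(u)`. -/
theorem stmt_1 (d : ℕ) (hd : 1 ≤ d)
    (φ : EuclideanSpace ℝ (Fin d) → ℝ)
    (hφsmooth : ContDiff ℝ (⊤ : ℕ∞) φ)
    (hφsupp : tsupport φ ⊆ closedBall (0 : EuclideanSpace ℝ (Fin d)) 1)
    (hφnonneg : ∀ ξ, 0 ≤ φ ξ)
    (hφsymm : ∀ ξ, φ (-ξ) = φ ξ)
    (hφint : (∫ ξ : EuclideanSpace ℝ (Fin d), φ ξ) = 1) :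
    ∃ C : ℝ, 0 < C ∧
      ∀ (D : Set (EuclideanSpace ℝ (Fin d))), IsOpen D →
        ∀ δ σ : ℝ, 0 < δ → δ < σ →
          ∀ u : EuclideanSpace ℝ (Fin d) → ℝ, MemLp u 2 (volume.restrict D) →
            (∫⁻ x in {x ∈ D | σ < infDist x (frontier D)},
                ENNReal.ofReal
                  (((∫ ξ in closedBall (0 : EuclideanSpace ℝ (Fin d)) 1,
                        u (x + δ • ξ) * φ ξ) - u x) ^ 2)) ≤
              ENNReal.ofReal (C * δ ^ 2) *
                ∫⁻ x in {x ∈ D | σ < infDist x (frontier D)},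
                  ∫⁻ ξ in closedBall (0 : EuclideanSpace ℝ (Fin d)) 1,
                    ENNReal.ofReal (((u (x + δ • ξ) - u x) / δ) ^ 2) := by
  classical
  set B : ℝ := ∫ ξ in closedBall (0 : EuclideanSpace ℝ (Fin d)) 1, φ ξ ^ 2 with hBdef
  have hφc : Continuous φ := hφsmooth.continuous
  have hBnonneg : 0 ≤ B :=
    setIntegral_nonneg measurableSet_closedBall fun ξ _ => sq_nonneg _
  refine ⟨B + 1, by linarith, ?_⟩
  intro D hD δ σ hδ hσ u hu
  have hσpos : 0 < σ := hδ.trans hσ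
  set S := {x ∈ D | σ < infDist x (frontier D)} with hSdef
  -- key pointwise estimate
  have key : ∀ x ∈ S,
      ENNReal.ofReal
          (((∫ ξ in closedBall (0 : EuclideanSpace ℝ (Fin d)) 1,
              u (x + δ • ξ) * φ ξ) - u x) ^ 2) ≤
        ENNReal.ofReal ((B + 1) * δ ^ 2) *
          ∫⁻ ξ in closedBall (0 : EuclideanSpace ℝ (Fin d)) 1,
            ENNReal.ofReal (((u (x + δ • ξ) - u x) / δ) ^ 2) := by
    intro x hx
    obtain ⟨hxD, hxσ⟩ := hx
    -- the ball of radius σ around x is inside D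
    have hball : ball x σ ⊆ D := by
      by_cases hDuniv : D = Set.univ
      · rw [hDuniv]; exact Set.subset_univ _
      · obtain ⟨y, hy, hxy⟩ := exists_mem_frontier_infDist_compl_eq_dist hxD hDuniv
        have h1 : σ ≤ infDist x Dᶜ := by
          rw [hxy]
          exact le_trans hxσ.le (infDist_le_dist_of_mem hy)
        exact (ball_subset_ball h1).trans ball_infDist_compl_subset
    have hTD : ∀ ξ ∈ closedBall (0 : EuclideanSpace ℝ (Fin d)) 1, x + δ • ξ ∈ D := by
      intro ξ hξ
      apply hball
      have hdist : dist (x + δ • ξ) x = δ * ‖ξ‖ := by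
        simp [dist_eq_norm, norm_smul, abs_of_pos hδ]
      rw [mem_ball, hdist]
      have : ‖ξ‖ ≤ 1 := mem_closedBall_zero_iff.mp hξ
      nlinarith
    -- quasi measure preserving map
    have qT : Measure.QuasiMeasurePreserving
        (fun ξ : EuclideanSpace ℝ (Fin d) => x + δ • ξ) volume volume := by
      have h1 : Measure.QuasiMeasurePreserving
          (fun ξ : EuclideanSpace ℝ (Fin d) => δ • ξ) volume volume :=
        Measure.quasiMeasurePreserving_smul (μ := volume) (ne_of_gt hδ)
      have h2 : Measure.QuasiMeasurePreserving
          (fun y : EuclideanSpace ℝ (Fin d) => x + y) volume volume :=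
        (measurePreserving_add_left volume x).quasiMeasurePreserving
      exact h2.comp h1
    have qTr : Measure.QuasiMeasurePreserving
        (fun ξ : EuclideanSpace ℝ (Fin d) => x + δ • ξ)
        (volume.restrict (closedBall (0 : EuclideanSpace ℝ (Fin d)) 1))
        (volume.restrict D) := by
      refine ⟨qT.measurable, Measure.AbsolutelyContinuous.mk fun s hs h0 => ?_⟩
      rw [Measure.map_apply qT.measurable hs, Measure.restrict_apply (qT.measurable hs)]
      rw [Measure.restrict_apply hs] at h0
      refine measure_mono_null (fun ξ hξ => ?_) (qT.preimage_null h0)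
      exact ⟨hξ.1, hTD ξ hξ.2⟩
    have hum : AEStronglyMeasurable (fun ξ => u (x + δ • ξ))
        (volume.restrict (closedBall (0 : EuclideanSpace ℝ (Fin d)) 1)) :=
      hu.1.comp_quasiMeasurePreserving qTr
    set f : EuclideanSpace ℝ (Fin d) → ℝ := fun ξ => u (x + δ • ξ) - u x with hfdef
    have hfm : AEStronglyMeasurable f
        (volume.restrict (closedBall (0 : EuclideanSpace ℝ (Fin d)) 1)) :=
      hum.sub aestronglyMeasurable_const
    set A : ℝ≥0∞ := ∫⁻ ξ in closedBall (0 : EuclideanSpace ℝ (Fin d)) 1,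
      ENNReal.ofReal (f ξ ^ 2) with hAdef
    -- RHS inner integral in terms of A
    have hRHS : (∫⁻ ξ in closedBall (0 : EuclideanSpace ℝ (Fin d)) 1,
        ENNReal.ofReal ((f ξ / δ) ^ 2)) = ENNReal.ofReal ((δ ^ 2)⁻¹) * A := by
      rw [hAdef, ← lintegral_const_mul' _ _ ENNReal.ofReal_ne_top]
      congr 1
      funext ξ
      rw [← ENNReal.ofReal_mul (by positivity)]
      congr 1
      field_simp
    by_cases hA : A = ⊤
    · -- infinite right-hand side
      rw [hRHS, hA, ENNReal.mul_top (by
          simp only [ne_eq, ENNReal.ofReal_eq_zero, not_le]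
          positivity),
        ENNReal.mul_top (by
          simp only [ne_eq, ENNReal.ofReal_eq_zero, not_le]
          positivity)]
      exact le_top
    · -- finite case: Cauchy-Schwarz
      have hAlt : A < ⊤ := lt_top_iff_ne_top.mpr hA
      have hf2m : AEStronglyMeasurable (fun ξ => f ξ ^ 2)
          (volume.restrict (closedBall (0 : EuclideanSpace ℝ (Fin d)) 1)) := by
        exact hfm.pow 2
      have hf2int : Integrable (fun ξ => f ξ ^ 2)
          (volume.restrict (closedBall (0 : EuclideanSpace ℝ (Fin d)) 1)) := by
        refine ⟨hf2m, ?_⟩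
        rw [hasFiniteIntegral_iff_ofReal (Filter.Eventually.of_forall fun ξ => sq_nonneg _)]
        exact hAlt
      have hφ2int : Integrable (fun ξ => φ ξ ^ 2)
          (volume.restrict (closedBall (0 : EuclideanSpace ℝ (Fin d)) 1)) :=
        ContinuousOn.integrableOn_compact (isCompact_closedBall _ _)
          ((hφc.pow 2).continuousOn)
      have hφint' : Integrable φ
          (volume.restrict (closedBall (0 : EuclideanSpace ℝ (Fin d)) 1)) :=
        ContinuousOn.integrableOn_compact (isCompact_closedBall _ _) hφc.continuousOn
      have hfφint : Integrable (fun ξ => f ξ * φ ξ)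
          (volume.restrict (closedBall (0 : EuclideanSpace ℝ (Fin d)) 1)) := by
        refine Integrable.mono' ((hf2int.add hφ2int).div_const 2)
          (hfm.mul hφc.aestronglyMeasurable)
          (Filter.Eventually.of_forall fun ξ => ?_)
        rw [Real.norm_eq_abs, abs_mul]
        have habs : ∀ a b : ℝ, |a| * |b| ≤ (a ^ 2 + b ^ 2) / 2 := fun a b => by
          nlinarith [sq_nonneg (|a| - |b|), sq_abs a, sq_abs b, abs_nonneg a, abs_nonneg b]
        exact habs (f ξ) (φ ξ)
      have huφint : Integrable (fun ξ => u (x + δ • ξ) * φ ξ)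
          (volume.restrict (closedBall (0 : EuclideanSpace ℝ (Fin d)) 1)) := by
        have heq : (fun ξ => u (x + δ • ξ) * φ ξ)
            = fun ξ => f ξ * φ ξ + u x * φ ξ := by
          funext ξ; rw [hfdef]; ring
        rw [heq]
        exact hfφint.add (hφint'.const_mul (u x))
      have hφball : (∫ ξ in closedBall (0 : EuclideanSpace ℝ (Fin d)) 1, φ ξ) = 1 := by
        rw [setIntegral_eq_integral_of_forall_compl_eq_zero
          (fun ξ hξ => image_eq_zero_of_notMem_tsupport fun h => hξ (hφsupp h))]
        exact hφint
      have hsplit : (∫ ξ in closedBall (0 : EuclideanSpace ℝ (Fin d)) 1,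
          u (x + δ • ξ) * φ ξ)
          = (∫ ξ in closedBall (0 : EuclideanSpace ℝ (Fin d)) 1, f ξ * φ ξ) + u x := by
        have heq : (fun ξ => u (x + δ • ξ) * φ ξ)
            = fun ξ => f ξ * φ ξ + u x * φ ξ := by
          funext ξ; rw [hfdef]; ring
        rw [heq, integral_add hfφint (hφint'.const_mul (u x)), integral_const_mul, hφball,
          mul_one]
      set I : ℝ := ∫ ξ in closedBall (0 : EuclideanSpace ℝ (Fin d)) 1, f ξ * φ ξ with hIdef
      -- Cauchy-Schwarz via lintegral Hölder
      have hFmeas : AEMeasurable (fun ξ => ENNReal.ofReal |f ξ|)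
          (volume.restrict (closedBall (0 : EuclideanSpace ℝ (Fin d)) 1)) :=
        (ENNReal.continuous_ofReal.comp continuous_abs).measurable.comp_aemeasurable
          hfm.aemeasurable
      have hGmeas : AEMeasurable (fun ξ => ENNReal.ofReal (φ ξ))
          (volume.restrict (closedBall (0 : EuclideanSpace ℝ (Fin d)) 1)) :=
        (ENNReal.continuous_ofReal.comp hφc).measurable.aemeasurable
      have hconj : Real.HolderConjugate 2 2 := Real.HolderConjugate.two_two
      have holder := ENNReal.lintegral_mul_le_Lp_mul_Lq
        (volume.restrict (closedBall (0 : EuclideanSpace ℝ (Fin d)) 1)) hconj hFmeas hGmeas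
      have hF2 : ∀ ξ : EuclideanSpace ℝ (Fin d),
          ENNReal.ofReal |f ξ| ^ (2 : ℝ) = ENNReal.ofReal (f ξ ^ 2) := by
        intro ξ
        rw [ENNReal.ofReal_rpow_of_nonneg (abs_nonneg _) (by norm_num)]
        congr 1
        rw [show (2 : ℝ) = ((2 : ℕ) : ℝ) by norm_num, Real.rpow_natCast, sq_abs]
      have hG2 : ∀ ξ : EuclideanSpace ℝ (Fin d),
          ENNReal.ofReal (φ ξ) ^ (2 : ℝ) = ENNReal.ofReal (φ ξ ^ 2) := by
        intro ξ
        rw [ENNReal.ofReal_rpow_of_nonneg (hφnonneg _) (by norm_num)]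
        congr 1
        rw [show (2 : ℝ) = ((2 : ℕ) : ℝ) by norm_num, Real.rpow_natCast]
      have hBl : (∫⁻ ξ in closedBall (0 : EuclideanSpace ℝ (Fin d)) 1,
          ENNReal.ofReal (φ ξ ^ 2)) = ENNReal.ofReal B := by
        rw [hBdef, ofReal_integral_eq_lintegral_ofReal hφ2int
          (Filter.Eventually.of_forall fun ξ => sq_nonneg _)]
      have holder' : (∫⁻ ξ in closedBall (0 : EuclideanSpace ℝ (Fin d)) 1,
          ENNReal.ofReal |f ξ * φ ξ|)
          ≤ A ^ (1 / 2 : ℝ) * (ENNReal.ofReal B) ^ (1 / 2 : ℝ) := by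
        calc (∫⁻ ξ in closedBall (0 : EuclideanSpace ℝ (Fin d)) 1,
              ENNReal.ofReal |f ξ * φ ξ|)
            = ∫⁻ ξ in closedBall (0 : EuclideanSpace ℝ (Fin d)) 1,
              (fun ξ => ENNReal.ofReal |f ξ|) ξ * (fun ξ => ENNReal.ofReal (φ ξ)) ξ := by
              congr 1
              funext ξ
              rw [abs_mul, abs_of_nonneg (hφnonneg ξ), ENNReal.ofReal_mul (abs_nonneg _)]
          _ ≤ (∫⁻ ξ in closedBall (0 : EuclideanSpace ℝ (Fin d)) 1,
                ENNReal.ofReal |f ξ| ^ (2 : ℝ)) ^ (1 / 2 : ℝ)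
              * (∫⁻ ξ in closedBall (0 : EuclideanSpace ℝ (Fin d)) 1,
                ENNReal.ofReal (φ ξ) ^ (2 : ℝ)) ^ (1 / 2 : ℝ) := holder
          _ = A ^ (1 / 2 : ℝ) * (ENNReal.ofReal B) ^ (1 / 2 : ℝ) := by
              simp_rw [hF2, hG2]
              rw [← hAdef, hBl]
      -- turn |I| into a lintegral
      have hIabs : ENNReal.ofReal (I ^ 2)
          ≤ (∫⁻ ξ in closedBall (0 : EuclideanSpace ℝ (Fin d)) 1,
              ENNReal.ofReal |f ξ * φ ξ|) ^ 2 := by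
        have h1 : |I| ≤ ∫ ξ in closedBall (0 : EuclideanSpace ℝ (Fin d)) 1,
            |f ξ * φ ξ| := by
          simpa only [Real.norm_eq_abs] using
            norm_integral_le_integral_norm (μ := volume.restrict
              (closedBall (0 : EuclideanSpace ℝ (Fin d)) 1)) (fun ξ => f ξ * φ ξ)
        have h2 : ENNReal.ofReal (∫ ξ in closedBall (0 : EuclideanSpace ℝ (Fin d)) 1,
            |f ξ * φ ξ|) = ∫⁻ ξ in closedBall (0 : EuclideanSpace ℝ (Fin d)) 1,
            ENNReal.ofReal |f ξ * φ ξ| :=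
          ofReal_integral_eq_lintegral_ofReal hfφint.abs
            (Filter.Eventually.of_forall fun ξ => abs_nonneg _)
        calc ENNReal.ofReal (I ^ 2) = ENNReal.ofReal (|I| ^ 2) := by rw [sq_abs]
          _ ≤ ENNReal.ofReal ((∫ ξ in closedBall (0 : EuclideanSpace ℝ (Fin d)) 1,
                |f ξ * φ ξ|) ^ 2) := by
              apply ENNReal.ofReal_le_ofReal
              have h0 : (0:ℝ) ≤ |I| := abs_nonneg _
              nlinarith
          _ = (ENNReal.ofReal (∫ ξ in closedBall (0 : EuclideanSpace ℝ (Fin d)) 1,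
                |f ξ * φ ξ|)) ^ 2 := by
              rw [← ENNReal.ofReal_pow (by positivity)]
          _ = _ := by rw [h2]
      have hsq : ∀ y : ℝ≥0∞, y ^ (1 / 2 : ℝ) * y ^ (1 / 2 : ℝ) = y := by
        intro y
        rw [← ENNReal.rpow_add_of_nonneg _ _ (by norm_num) (by norm_num)]
        norm_num
      have hCS : ENNReal.ofReal (I ^ 2) ≤ A * ENNReal.ofReal B := by
        refine hIabs.trans ?_
        calc (∫⁻ ξ in closedBall (0 : EuclideanSpace ℝ (Fin d)) 1,
              ENNReal.ofReal |f ξ * φ ξ|) ^ 2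
            ≤ (A ^ (1 / 2 : ℝ) * (ENNReal.ofReal B) ^ (1 / 2 : ℝ)) ^ 2 :=
              pow_le_pow_left' holder' 2
          _ = A * ENNReal.ofReal B := by
              rw [sq, mul_mul_mul_comm, hsq, hsq]
      -- assemble
      rw [hsplit, add_sub_cancel_right, hRHS]
      calc ENNReal.ofReal (I ^ 2) ≤ A * ENNReal.ofReal B := hCS
        _ ≤ ENNReal.ofReal (B + 1) * A := by
            rw [mul_comm]
            exact mul_le_mul_left (ENNReal.ofReal_le_ofReal (by linarith)) A
        _ = ENNReal.ofReal ((B + 1) * δ ^ 2) * (ENNReal.ofReal ((δ ^ 2)⁻¹) * A) := by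
            rw [← mul_assoc, ← ENNReal.ofReal_mul (by positivity)]
            congr 2
            field_simp
  -- conclude by integrating the pointwise bound
  have hSmeas : MeasurableSet S := by
    have : S = D ∩ {x | σ < infDist x (frontier D)} := rfl
    rw [this]
    exact hD.measurableSet.inter
      (measurableSet_lt measurable_const (continuous_infDist_pt _).measurable)
  calc (∫⁻ x in S, ENNReal.ofReal
        (((∫ ξ in closedBall (0 : EuclideanSpace ℝ (Fin d)) 1,
            u (x + δ • ξ) * φ ξ) - u x) ^ 2))
      ≤ ∫⁻ x in S, ENNReal.ofReal ((B + 1) * δ ^ 2) *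
          ∫⁻ ξ in closedBall (0 : EuclideanSpace ℝ (Fin d)) 1,
            ENNReal.ofReal (((u (x + δ • ξ) - u x) / δ) ^ 2) :=
        lintegral_mono_ae ((ae_restrict_iff' hSmeas).2
          (Filter.Eventually.of_forall key))
    _ = ENNReal.ofReal ((B + 1) * δ ^ 2) *
          ∫⁻ x in S, ∫⁻ ξ in closedBall (0 : EuclideanSpace ℝ (Fin d)) 1,
            ENNReal.ofReal (((u (x + δ • ξ) - u x) / δ) ^ 2) :=
        lintegral_const_mul' _ _ ENNReal.ofReal_ne_top
end

section
/- Let D ⊆ ℝ^d be open, let k ≥ 1, ε > 0, and let u ∈ L²(D). Then for every integer j ≥ 1: F_{jε}^{(j+k)ε,1}(u) ≤ F_ε^{kε,1}(u), i.e. ∫_{D((j+k)ε)} ∫_{{|ξ|≤1}} ((u(x+jεξ) − u(x))/(jε))² dξ dx ≤ ∫_{D(kε)} ∫_{{|ξ|≤1}} ((u(x+εξ) − u(x))/ε)² dξ dx. -/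
/-!
Writing `x + jεξ - x` as the telescoping sum of the `j` increments `x + (i+1)εξ - (x + iεξ)`,
Cauchy–Schwarz bounds the squared difference quotient at step `jε` by the mean of the squared
difference quotients at step `ε` of the translates `x + iεξ`. For fixed `ξ` each of these means is
an integral over the translated set `D((j+k)ε) + iεξ ⊆ D(kε)`, so translation invariance of
Lebesgue measure bounds it by `F_ε^{kε,1}(u)`.
-/

open MeasureTheory Metric
open scoped ENNReal

/-- The inner parallel set `D(t)`. -/
def innerParallel {X : Type*} [PseudoMetricSpace X] (D : Set X) (t : ℝ) : Set X :=
  {x ∈ D | t < infDist x (frontier D)}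

lemma MeasurableSet.innerParallel {X : Type*} [PseudoMetricSpace X] [MeasurableSpace X]
    [OpensMeasurableSpace X] {D : Set X} (hD : MeasurableSet D) (t : ℝ) :
    MeasurableSet (innerParallel D t) :=
  hD.inter (isOpen_lt continuous_const (continuous_infDist_pt _)).measurableSet

section Geometry

variable {E : Type*} [NormedAddCommGroup E] [NormedSpace ℝ E]

lemma mem_of_dist_lt_infDist_frontier {D : Set E} (hD : IsOpen D) {x y : E} (hx : x ∈ D)
    (h : dist y x < infDist x (frontier D)) : y ∈ D := by
  set B := ball x (infDist x (frontier D))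
  have hB : B ⊆ interior D ∪ interior Dᶜ := by
    rw [← compl_frontier_eq_union_interior]
    exact ball_infDist_subset_compl
  have hBD : B ⊆ interior D :=
    (convex_ball x _).isPreconnected.subset_left_of_subset_union isOpen_interior
      isOpen_interior (Disjoint.mono interior_subset interior_subset disjoint_compl_right) hB
      ⟨x, mem_ball_self (dist_nonneg.trans_lt h), hD.interior_eq.symm ▸ hx⟩
  exact interior_subset (hBD (mem_ball.2 h))

lemma add_mem_innerParallel {D : Set E} (hD : IsOpen D) {s t : ℝ} (hs : 0 ≤ s) {x v : E}
    (hx : x ∈ innerParallel D (s + t)) (hv : ‖v‖ ≤ t) : x + v ∈ innerParallel D s := by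
  have hdist : dist (x + v) x = ‖v‖ := by rw [dist_eq_norm, add_sub_cancel_left]
  refine ⟨mem_of_dist_lt_infDist_frontier hD hx.1 (by linarith [hx.2]), ?_⟩
  have := infDist_le_infDist_add_dist (x := x) (y := x + v) (s := frontier D)
  rw [dist_comm, hdist] at this
  linarith [hx.2]

lemma add_smul_mem_innerParallel {D : Set E} (hD : IsOpen D) {s t c : ℝ} (hs : 0 ≤ s)
    (hc : 0 ≤ c) (hct : c ≤ t) {x ξ : E} (hx : x ∈ innerParallel D (s + t))
    (hξ : ξ ∈ closedBall (0 : E) 1) : x + c • ξ ∈ innerParallel D s := by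
  refine add_mem_innerParallel hD hs hx ?_
  rw [norm_smul, Real.norm_of_nonneg hc]
  exact (mul_le_of_le_one_right hc (mem_closedBall_zero_iff.1 hξ)).trans hct

end Geometry

lemma sq_div_natCast_mul_le_inv_mul_sum (f : ℕ → ℝ) (j : ℕ) (ε : ℝ) :
    ((f j - f 0) / (j * ε)) ^ 2 ≤
      (j : ℝ)⁻¹ * ∑ i ∈ Finset.range j, ((f (i + 1) - f i) / ε) ^ 2 := by
  rcases Nat.eq_zero_or_pos j with rfl | hj
  · simp
  have hj' : (0 : ℝ) < j := by exact_mod_cast hj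
  have hsum : (f j - f 0) / (j * ε) = (j : ℝ)⁻¹ * ∑ i ∈ Finset.range j, (f (i + 1) - f i) / ε := by
    rw [← Finset.sum_div, Finset.sum_range_sub, mul_comm (j : ℝ), div_mul_eq_div_div,
      div_eq_inv_mul (_ / ε)]
  have hcs := sq_sum_le_card_mul_sum_sq (s := Finset.range j) (f := fun i => (f (i + 1) - f i) / ε)
  rw [Finset.card_range] at hcs
  calc ((f j - f 0) / (j * ε)) ^ 2
      = (j : ℝ)⁻¹ ^ 2 * (∑ i ∈ Finset.range j, (f (i + 1) - f i) / ε) ^ 2 := by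
        rw [hsum, mul_pow]
    _ ≤ (j : ℝ)⁻¹ ^ 2 * (j * ∑ i ∈ Finset.range j, ((f (i + 1) - f i) / ε) ^ 2) := by
        gcongr
    _ = (j : ℝ)⁻¹ * ∑ i ∈ Finset.range j, ((f (i + 1) - f i) / ε) ^ 2 := by
        field_simp

section Energy

variable {E : Type*} [NormedAddCommGroup E] [NormedSpace ℝ E] [MeasurableSpace E]

/-- `F_ε^{σ,r}(w)` of the paper is `diffQuotEnergy volume w (innerParallel D σ) ε r`. -/
noncomputable def diffQuotEnergy (μ : Measure E) (w : E → ℝ) (S : Set E) (c r : ℝ) : ℝ≥0∞ :=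
  ∫⁻ x in S, ∫⁻ ξ in closedBall 0 r, ENNReal.ofReal (((w (x + c • ξ) - w x) / c) ^ 2) ∂μ ∂μ

variable [BorelSpace E] [FiniteDimensional ℝ E] {μ : Measure E}

lemma diffQuotEnergy_congr_ae [μ.IsAddHaarMeasure] {D S : Set E} (hD : MeasurableSet D)
    (hS : MeasurableSet S) (hSD : S ⊆ D) {u g : E → ℝ} (hug : u =ᵐ[μ.restrict D] g) {c r : ℝ}
    (hc : c ≠ 0)
    (hmem : ∀ x ∈ S, ∀ ξ ∈ closedBall (0 : E) r, x + c • ξ ∈ D) :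
    diffQuotEnergy μ u S c r = diffQuotEnergy μ g S c r := by
  set N := {y | y ∈ D ∧ u y ≠ g y}
  have hN : μ N = 0 := by
    have h := (ae_restrict_iff' hD).1 hug
    rw [ae_iff] at h
    exact measure_mono_null (fun y hy => by simpa using ⟨hy.1, hy.2⟩) h
  have hNc : ∀ᵐ y ∂μ, y ∉ N := measure_eq_zero_iff_ae_notMem.1 hN
  have hEq : ∀ y ∈ D, y ∉ N → u y = g y := fun y hy hyN => by_contra fun h => hyN ⟨hy, h⟩
  refine setLIntegral_congr_fun_ae hS ?_
  filter_upwards [hNc] with x hxN hxS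
  have hshift : ∀ᵐ ξ ∂μ, x + c • ξ ∉ N := by
    refine measure_eq_zero_iff_ae_notMem.1 ?_
    change μ ((c • ·) ⁻¹' ((x + ·) ⁻¹' N)) = 0
    rw [Measure.addHaar_preimage_smul μ hc, measure_preimage_add μ x N, hN, mul_zero]
  refine setLIntegral_congr_fun_ae measurableSet_closedBall ?_
  filter_upwards [hshift] with ξ hξN hξ
  rw [hEq x (hSD hxS) hxN, hEq _ (hmem x hxS ξ hξ) hξN]

variable [SFinite μ] {g : E → ℝ}

lemma lintegral_shifted_diffQuot_le_diffQuotEnergy [μ.IsAddRightInvariant] (hg : Measurable g)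
    {S T : Set E} {a ε r : ℝ} (hST : ∀ ξ ∈ closedBall (0 : E) r, ∀ x ∈ S, x + a • ξ ∈ T) :
    ∫⁻ x in S, ∫⁻ ξ in closedBall 0 r,
        ENNReal.ofReal (((g (x + a • ξ + ε • ξ) - g (x + a • ξ)) / ε) ^ 2) ∂μ ∂μ ≤
      diffQuotEnergy μ g T ε r := by
  rw [diffQuotEnergy, lintegral_lintegral_swap (by fun_prop)]
  conv_rhs => rw [lintegral_lintegral_swap (by fun_prop)]
  refine setLIntegral_mono' (measurableSet_closedBall (x := (0 : E))) fun ξ hξ => ?_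
  calc ∫⁻ x in S, ENNReal.ofReal (((g (x + a • ξ + ε • ξ) - g (x + a • ξ)) / ε) ^ 2) ∂μ
      = ∫⁻ y in (· + a • ξ) '' S, ENNReal.ofReal (((g (y + ε • ξ) - g y) / ε) ^ 2) ∂μ :=
        (measurePreserving_add_right μ _).setLIntegral_comp_emb
          (MeasurableEquiv.addRight _).measurableEmbedding
          (fun y => ENNReal.ofReal (((g (y + ε • ξ) - g y) / ε) ^ 2)) S
    _ ≤ ∫⁻ y in T, ENNReal.ofReal (((g (y + ε • ξ) - g y) / ε) ^ 2) ∂μ :=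
        lintegral_mono_set (Set.image_subset_iff.2 fun x hx => hST ξ hξ x hx)

lemma diffQuotEnergy_natCast_mul_le_inv_mul_sum (hg : Measurable g) (S : Set E)
    (j : ℕ) (ε r : ℝ) :
    diffQuotEnergy μ g S (j * ε) r ≤ ENNReal.ofReal (j : ℝ)⁻¹ * ∑ i ∈ Finset.range j,
      ∫⁻ x in S, ∫⁻ ξ in closedBall 0 r,
        ENNReal.ofReal (((g (x + (i * ε) • ξ + ε • ξ) - g (x + (i * ε) • ξ)) / ε) ^ 2) ∂μ ∂μ := by
  have hpoint : ∀ x ξ : E, ENNReal.ofReal (((g (x + (j * ε) • ξ) - g x) / (j * ε)) ^ 2) ≤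
      ENNReal.ofReal (j : ℝ)⁻¹ * ∑ i ∈ Finset.range j,
        ENNReal.ofReal (((g (x + (i * ε) • ξ + ε • ξ) - g (x + (i * ε) • ξ)) / ε) ^ 2) := by
    intro x ξ
    have hstep : ∀ i : ℕ, x + (i * ε) • ξ + ε • ξ = x + (((i + 1 : ℕ) : ℝ) * ε) • ξ := by
      intro i; rw [add_assoc, ← add_smul]; push_cast; ring_nf
    have h := sq_div_natCast_mul_le_inv_mul_sum (fun i => g (x + ((i : ℝ) * ε) • ξ)) j ε
    simp only [hstep, Nat.cast_zero, zero_mul, zero_smul, add_zero] at h ⊢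
    rw [← ENNReal.ofReal_sum_of_nonneg fun _ _ => sq_nonneg _,
      ← ENNReal.ofReal_mul (by positivity)]
    exact ENNReal.ofReal_le_ofReal h
  calc diffQuotEnergy μ g S (j * ε) r
      ≤ ∫⁻ x in S, ∫⁻ ξ in closedBall 0 r, ENNReal.ofReal (j : ℝ)⁻¹ * ∑ i ∈ Finset.range j,
          ENNReal.ofReal (((g (x + (i * ε) • ξ + ε • ξ) - g (x + (i * ε) • ξ)) / ε) ^ 2)
          ∂μ ∂μ :=
        lintegral_mono fun x => lintegral_mono fun ξ => hpoint x ξ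
    _ = _ := by
        simp_rw [lintegral_const_mul' _ _ ENNReal.ofReal_ne_top]
        congr 1
        rw [← lintegral_finsetSum' _ fun i _ =>
          (Measurable.lintegral_prod_right (by fun_prop)).aemeasurable]
        exact lintegral_congr fun x => lintegral_finsetSum' _ fun i _ => by fun_prop

lemma diffQuotEnergy_natCast_mul_le [μ.IsAddRightInvariant] (hg : Measurable g) {S T : Set E}
    {j : ℕ} {ε r : ℝ}
    (hST : ∀ i < j, ∀ ξ ∈ closedBall (0 : E) r, ∀ x ∈ S, x + (i * ε) • ξ ∈ T) :
    diffQuotEnergy μ g S (j * ε) r ≤ diffQuotEnergy μ g T ε r := by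
  set R := diffQuotEnergy μ g T ε r
  calc diffQuotEnergy μ g S (j * ε) r
      ≤ ENNReal.ofReal (j : ℝ)⁻¹ * ∑ _i ∈ Finset.range j, R := by
        refine (diffQuotEnergy_natCast_mul_le_inv_mul_sum hg S j ε r).trans ?_
        gcongr with i hi
        exact lintegral_shifted_diffQuot_le_diffQuotEnergy hg (hST i (Finset.mem_range.1 hi))
    _ ≤ R := by
        rw [Finset.sum_const, Finset.card_range, nsmul_eq_mul, ← mul_assoc]
        rcases Nat.eq_zero_or_pos j with rfl | hj
        · simp
        rw [ENNReal.ofReal_inv_of_pos (by exact_mod_cast hj), ENNReal.ofReal_natCast,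
          ENNReal.inv_mul_cancel (by exact_mod_cast hj.ne') (ENNReal.natCast_ne_top j), one_mul]

end Energy

theorem stmt_2_general (d : ℕ)
    (D : Set (EuclideanSpace ℝ (Fin d))) (hD : IsOpen D)
    (k ε : ℝ) (hk : 1 ≤ k) (hε : 0 < ε)
    (u : EuclideanSpace ℝ (Fin d) → ℝ) (hu : MemLp u 2 (volume.restrict D))
    (j : ℕ) (hj : 1 ≤ j) :
    (∫⁻ x in {x ∈ D | ((j : ℝ) + k) * ε < infDist x (frontier D)},
        ∫⁻ ξ in closedBall (0 : EuclideanSpace ℝ (Fin d)) 1,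
          ENNReal.ofReal (((u (x + ((j : ℝ) * ε) • ξ) - u x) / ((j : ℝ) * ε)) ^ 2)) ≤
      ∫⁻ x in {x ∈ D | k * ε < infDist x (frontier D)},
        ∫⁻ ξ in closedBall (0 : EuclideanSpace ℝ (Fin d)) 1,
          ENNReal.ofReal (((u (x + ε • ξ) - u x) / ε) ^ 2) := by
  obtain ⟨g, hgm, hug⟩ := hu.aestronglyMeasurable
  have hshift : ∀ {i : ℕ}, i ≤ j → ∀ ξ ∈ closedBall 0 1, ∀ x ∈ innerParallel D ((j + k) * ε),
      x + (i * ε) • ξ ∈ innerParallel D (k * ε) := fun hi ξ hξ x hx =>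
    add_smul_mem_innerParallel (s := k * ε) (t := j * ε) hD (by positivity) (by positivity)
      (by gcongr) (by rwa [add_mul, add_comm] at hx) hξ
  have hstep : ∀ x ∈ innerParallel D (k * ε), ∀ ξ ∈ closedBall 0 1, x + ε • ξ ∈ D :=
    fun x hx ξ hξ => (add_smul_mem_innerParallel (s := k * ε - ε) hD (by nlinarith) hε.le le_rfl
      (by rwa [sub_add_cancel]) hξ).1
  change diffQuotEnergy volume u (innerParallel D ((j + k) * ε)) (j * ε) 1 ≤
    diffQuotEnergy volume u (innerParallel D (k * ε)) ε 1
  calc diffQuotEnergy volume u (innerParallel D ((j + k) * ε)) (j * ε) 1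
      = diffQuotEnergy volume g (innerParallel D ((j + k) * ε)) (j * ε) 1 :=
        diffQuotEnergy_congr_ae hD.measurableSet (hD.measurableSet.innerParallel _) (fun x hx => hx.1) hug
          (mul_pos (Nat.cast_pos.2 hj) hε).ne' fun x hx ξ hξ => (hshift le_rfl ξ hξ x hx).1
    _ ≤ diffQuotEnergy volume g (innerParallel D (k * ε)) ε 1 :=
        diffQuotEnergy_natCast_mul_le hgm.measurable fun i hi => hshift hi.le
    _ = diffQuotEnergy volume u (innerParallel D (k * ε)) ε 1 :=
        (diffQuotEnergy_congr_ae hD.measurableSet (hD.measurableSet.innerParallel _) (fun x hx => hx.1) hug hε.ne'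
          hstep).symm

/-- Multi-step estimate for convolution energies: for an open `D ⊆ ℝ^d`,
`k ≥ 1`, `ε > 0`, `u ∈ L²(D)` and every integer `j ≥ 1`,
`F_{jε}^{(j+k)ε,1}(u) ≤ F_ε^{kε,1}(u)`. -/
theorem stmt_2 (d : ℕ) (hd : 1 ≤ d)
    (D : Set (EuclideanSpace ℝ (Fin d))) (hD : IsOpen D)
    (k ε : ℝ) (hk : 1 ≤ k) (hε : 0 < ε)
    (u : EuclideanSpace ℝ (Fin d) → ℝ) (hu : MemLp u 2 (volume.restrict D))
    (j : ℕ) (hj : 1 ≤ j) :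
    (∫⁻ x in {x ∈ D | ((j : ℝ) + k) * ε < infDist x (frontier D)},
        ∫⁻ ξ in closedBall (0 : EuclideanSpace ℝ (Fin d)) 1,
          ENNReal.ofReal (((u (x + ((j : ℝ) * ε) • ξ) - u x) / ((j : ℝ) * ε)) ^ 2)) ≤
      ∫⁻ x in {x ∈ D | k * ε < infDist x (frontier D)},
        ∫⁻ ξ in closedBall (0 : EuclideanSpace ℝ (Fin d)) 1,
          ENNReal.ofReal (((u (x + ε • ξ) - u x) / ε) ^ 2) :=
  stmt_2_general d D hD k ε hk hε u hu j hj
end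

section
/- Let D ⊆ ℝ^d be open, k ≥ 1, and 0 < ε ≤ δ; set δ* = ⌊δ/ε⌋ ε. Then there is a constant C, depending only on d and on the mollifier φ, such that for every u ∈ L²(D): ∫_{D(δ*+kε)} (ů_{δ*}(x) − u(x))² dx ≤ C δ*² F_ε^{kε,1}(u) ≤ C δ² F_ε^{kε,1}(u). -/
open MeasureTheory Metric Set
open scoped ENNReal

section helpers

variable {E : Type*} [NormedAddCommGroup E] [NormedSpace ℝ E] [FiniteDimensional ℝ E]

/-- If `r < infDist x (frontier D)` and `x ∈ D`, then `closedBall x r ⊆ D`. -/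
lemma closedBall_subset_of_infDist_frontier {D : Set E} {x : E} {r : ℝ}
    (hx : x ∈ D) (hr : r < infDist x (frontier D)) : closedBall x r ⊆ D := by
  by_cases hD : D = univ
  · simp [hD]
  obtain ⟨y, hy, hyd⟩ := exists_mem_frontier_infDist_compl_eq_dist hx hD
  have h1 : infDist x (frontier D) ≤ infDist x Dᶜ := by
    rw [hyd]; exact infDist_le_dist_of_mem hy
  exact (closedBall_subset_ball (lt_of_lt_of_le hr h1)).trans ball_infDist_compl_subset

end helpers

section meas

variable {d : ℕ}
local notation "Ed" => EuclideanSpace ℝ (Fin d)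

lemma null_preimage_affine {c : ℝ} (hc : c ≠ 0) (x : Ed) {Z : Set Ed}
    (hZ : volume Z = 0) : volume ((fun ξ : Ed => x + c • ξ) ⁻¹' Z) = 0 := by
  have h1 : (fun ξ : Ed => x + c • ξ) ⁻¹' Z = (c • · : Ed → Ed) ⁻¹' ((x + ·) ⁻¹' Z) := rfl
  rw [h1, Measure.addHaar_preimage_smul volume hc, measure_preimage_add volume x Z, hZ, mul_zero]

/-- joint a.e.-measurability of the sheared composition. -/
lemma aemeasurable_shear {D A B : Set Ed} (hD : MeasurableSet D)
    (hA : MeasurableSet A) (hB : MeasurableSet B) (hB0 : (0:Ed) ∈ B)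
    {u : Ed → ℝ} (hu : AEMeasurable u (volume.restrict D)) (c : ℝ)
    (hmaps : ∀ x ∈ A, ∀ ξ ∈ B, x + c • ξ ∈ D) :
    AEMeasurable (fun p : Ed × Ed => u (p.1 + c • p.2))
      ((volume.restrict A).prod (volume.restrict B)) := by
  rcases eq_or_ne c 0 with rfl | hc
  · have hAD : A ⊆ D := fun x hx => by simpa using hmaps x hx 0 hB0
    have h1 : AEMeasurable u (volume.restrict A) :=
      hu.mono_measure (Measure.restrict_mono hAD le_rfl)
    have h2 : AEMeasurable (fun p : Ed × Ed => u p.1)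
        ((volume.restrict A).prod (volume.restrict B)) := h1.comp_fst
    simpa using h2
  · set T : Ed × Ed → Ed := fun p => p.1 + c • p.2 with hT
    have hTm : Measurable T := (continuous_fst.add (continuous_snd.const_smul c)).measurable
    have hqmp : Measure.QuasiMeasurePreserving T
        ((volume.restrict A).prod (volume.restrict B)) (volume.restrict D) := by
      refine ⟨hTm, Measure.AbsolutelyContinuous.mk fun S hS h0 => ?_⟩
      rw [Measure.restrict_apply hS] at h0
      rw [Measure.map_apply hTm hS, Measure.prod_restrict]
      have hsub : T ⁻¹' S ∩ A ×ˢ B ⊆ T ⁻¹' (S ∩ D) := by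
        rintro ⟨x, ξ⟩ ⟨h1, h2, h3⟩
        exact ⟨h1, hmaps x h2 ξ h3⟩
      have hZm : MeasurableSet (T ⁻¹' (S ∩ D)) := hTm (hS.inter hD)
      refine le_antisymm ?_ zero_le
      calc ((volume.prod volume).restrict (A ×ˢ B)) (T ⁻¹' S)
          = (volume.prod volume) (T ⁻¹' S ∩ A ×ˢ B) :=
            Measure.restrict_apply' (hA.prod hB)
        _ ≤ (volume.prod volume) (T ⁻¹' (S ∩ D)) := measure_mono hsub
        _ = 0 := by
            rw [Measure.prod_apply hZm]
            have h1 : ∀ x : Ed, volume (Prod.mk x ⁻¹' (T ⁻¹' S) ∩ Prod.mk x ⁻¹' (T ⁻¹' D)) = 0 :=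
              fun x => by
                have := null_preimage_affine (Z := S ∩ D) hc x h0
                rw [Set.preimage_inter] at this; exact this
            simp [h1]
    exact hu.comp_quasiMeasurePreserving hqmp

/-- single-variable version. -/
lemma aemeasurable_affine {D B : Set Ed} (hD : MeasurableSet D) (hB : MeasurableSet B)
    {u : Ed → ℝ} (hu : AEMeasurable u (volume.restrict D)) {c : ℝ} (hc : c ≠ 0) (x : Ed)
    (hmaps : ∀ ξ ∈ B, x + c • ξ ∈ D) :
    AEMeasurable (fun ξ : Ed => u (x + c • ξ)) (volume.restrict B) := by
  set T : Ed → Ed := fun ξ => x + c • ξ with hT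
  have hTm : Measurable T := (continuous_const.add (continuous_id.const_smul c)).measurable
  have hqmp : Measure.QuasiMeasurePreserving T (volume.restrict B) (volume.restrict D) := by
    refine ⟨hTm, Measure.AbsolutelyContinuous.mk fun S hS h0 => ?_⟩
    rw [Measure.restrict_apply hS] at h0
    rw [Measure.map_apply hTm hS, Measure.restrict_apply' hB]
    have hsub : T ⁻¹' S ∩ B ⊆ T ⁻¹' (S ∩ D) := fun ξ ⟨h1, h2⟩ => ⟨h1, hmaps ξ h2⟩
    exact le_antisymm (le_trans (measure_mono hsub) (null_preimage_affine hc x h0).le)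
      zero_le
  exact hu.comp_quasiMeasurePreserving hqmp

end meas

section trans

variable {d : ℕ}
local notation "Ed" => EuclideanSpace ℝ (Fin d)

lemma setLIntegral_comp_add {A : Set Ed} (hA : MeasurableSet A) (f : Ed → ℝ≥0∞) (v : Ed) :
    ∫⁻ x in A, f (x + v) = ∫⁻ y in (fun y : Ed => y - v) ⁻¹' A, f y := by
  have hA' : MeasurableSet ((fun y : Ed => y - v) ⁻¹' A) :=
    ((continuous_id.sub continuous_const).measurable) hA
  calc ∫⁻ x in A, f (x + v)
      = ∫⁻ x, A.indicator (fun x => f (x + v)) x := (lintegral_indicator hA _).symm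
    _ = ∫⁻ x, ((fun y : Ed => y - v) ⁻¹' A).indicator f (x + v) := by
        congr 1; funext x
        by_cases hx : x ∈ A <;> simp [Set.indicator, hx, add_sub_cancel_right]
    _ = ∫⁻ y, ((fun y : Ed => y - v) ⁻¹' A).indicator f y :=
        lintegral_add_right_eq_self _ v
    _ = ∫⁻ y in (fun y : Ed => y - v) ⁻¹' A, f y := lintegral_indicator hA' _

lemma setLIntegral_comp_affine_le {D : Set Ed} (hD : MeasurableSet D)
    (f : Ed → ℝ≥0∞) {c : ℝ} (hc : 0 < c) {x : Ed} (hball : closedBall x c ⊆ D) :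
    ∫⁻ ξ in closedBall (0:Ed) 1, f (x + c • ξ) ≤
      ENNReal.ofReal |(c ^ Module.finrank ℝ Ed)⁻¹| * ∫⁻ y in D, f y := by
  set g : Ed → ℝ≥0∞ := (closedBall x c).indicator f with hg
  have step1 : ∫⁻ ξ in closedBall (0:Ed) 1, f (x + c • ξ) ≤ ∫⁻ ξ : Ed, g (x + c • ξ) := by
    rw [← lintegral_indicator (measurableSet_closedBall) _]
    refine lintegral_mono fun ξ => ?_
    by_cases hξ : ξ ∈ closedBall (0:Ed) 1
    · have : x + c • ξ ∈ closedBall x c := by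
        rw [mem_closedBall, dist_self_add_left, norm_smul, Real.norm_eq_abs,
          abs_of_pos hc]
        calc c * ‖ξ‖ ≤ c * 1 := by
              gcongr
              simpa [mem_closedBall, dist_zero_right] using hξ
          _ = c := mul_one c
      simp [Set.indicator, hξ, hg, this]
    · simp [Set.indicator, hξ]
  have step2 : ∫⁻ ξ : Ed, g (x + c • ξ) = ∫⁻ ξ : Ed, (fun y => g (x + y)) (c • ξ) := rfl
  have step3 : ∫⁻ ξ : Ed, (fun y => g (x + y)) (c • ξ) =
      ENNReal.ofReal |(c ^ Module.finrank ℝ Ed)⁻¹| * ∫⁻ y : Ed, g (x + y) := by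
    have hemb : MeasurableEmbedding (fun ξ : Ed => c • ξ) :=
      (Homeomorph.smulOfNeZero c hc.ne').measurableEmbedding
    have h := hemb.lintegral_map (μ := volume) (fun y => g (x + y))
    rw [Measure.map_addHaar_smul volume hc.ne', lintegral_smul_measure] at h
    simpa using h.symm
  have step4 : ∫⁻ y : Ed, g (x + y) = ∫⁻ y : Ed, g y := lintegral_add_left_eq_self _ x
  have step5 : ∫⁻ y : Ed, g y ≤ ∫⁻ y in D, f y := by
    rw [hg, lintegral_indicator measurableSet_closedBall]
    exact lintegral_mono_set hball
  calc ∫⁻ ξ in closedBall (0:Ed) 1, f (x + c • ξ) ≤ ∫⁻ ξ : Ed, g (x + c • ξ) := step1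
    _ = ENNReal.ofReal |(c ^ Module.finrank ℝ Ed)⁻¹| * ∫⁻ y : Ed, g (x + y) := by
        rw [step2, step3]
    _ ≤ _ := by rw [step4]; exact mul_le_mul_right step5 _

end trans

section holder

variable {d : ℕ}
local notation "Ed" => EuclideanSpace ℝ (Fin d)

lemma sq_setIntegral_mul_le {φ : Ed → ℝ} (hφc : Continuous φ) (hφnonneg : ∀ ξ, 0 ≤ φ ξ)
    {C : ℝ} (hC0 : 0 ≤ C) (hφle : ∀ ξ, φ ξ ≤ C)
    (hφB : ∫⁻ ξ in closedBall (0:Ed) 1, ENNReal.ofReal (φ ξ) ≤ 1)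
    {f : Ed → ℝ} (hfm : AEMeasurable f (volume.restrict (closedBall (0:Ed) 1))) :
    ENNReal.ofReal ((∫ ξ in closedBall (0:Ed) 1, f ξ * φ ξ) ^ 2) ≤
      ENNReal.ofReal C * ∫⁻ ξ in closedBall (0:Ed) 1, ENNReal.ofReal (f ξ ^ 2) := by
  set μ := volume.restrict (closedBall (0:Ed) 1) with hμ
  set I := ∫ ξ, f ξ * φ ξ ∂μ with hI
  have hrpow2 : ∀ z : ℝ≥0∞, z ^ (2:ℝ) = z ^ 2 := fun z => by
    rw [← ENNReal.rpow_natCast z 2]; norm_num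
  have h1 : ENNReal.ofReal (I ^ 2) = ((‖I‖₊ : ℝ≥0∞)) ^ 2 := by
    rw [← enorm_eq_nnnorm, Real.enorm_eq_ofReal_abs, ← ENNReal.ofReal_pow (abs_nonneg I), sq_abs]
  set a : Ed → ℝ≥0∞ := fun ξ => ENNReal.ofReal (|f ξ| * Real.sqrt (φ ξ)) with ha
  set b : Ed → ℝ≥0∞ := fun ξ => ENNReal.ofReal (Real.sqrt (φ ξ)) with hb
  have h2 : (‖I‖₊ : ℝ≥0∞) ≤ ∫⁻ ξ, a ξ * b ξ ∂μ := by
    refine (enorm_integral_le_lintegral_enorm _).trans_eq (lintegral_congr fun ξ => ?_)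
    rw [ha, hb, ← ENNReal.ofReal_mul (by positivity), mul_assoc,
      Real.mul_self_sqrt (hφnonneg ξ), Real.enorm_eq_ofReal_abs, abs_mul,
      abs_of_nonneg (hφnonneg ξ)]
  have ham : AEMeasurable a μ :=
    ENNReal.measurable_ofReal.comp_aemeasurable
      (((continuous_abs.measurable.comp_aemeasurable hfm)).mul (Real.continuous_sqrt.comp hφc).aemeasurable)
  have hbm : AEMeasurable b μ :=
    (ENNReal.measurable_ofReal.comp (Real.continuous_sqrt.comp hφc).measurable).aemeasurable
  have hpq : (2:ℝ).HolderConjugate 2 := ⟨by norm_num, by norm_num, by norm_num⟩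
  have h3 := ENNReal.lintegral_mul_le_Lp_mul_Lq μ hpq ham hbm
  have ha2 : ∫⁻ ξ, a ξ ^ (2:ℝ) ∂μ ≤ ENNReal.ofReal C * ∫⁻ ξ, ENNReal.ofReal (f ξ ^ 2) ∂μ := by
    rw [← lintegral_const_mul' _ _ ENNReal.ofReal_ne_top]
    refine lintegral_mono fun ξ => ?_
    rw [hrpow2, ha, ← ENNReal.ofReal_pow (by positivity), ← ENNReal.ofReal_mul hC0]
    refine ENNReal.ofReal_le_ofReal ?_
    have : (|f ξ| * Real.sqrt (φ ξ)) ^ 2 = f ξ ^ 2 * φ ξ := by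
      rw [mul_pow, sq_abs, Real.sq_sqrt (hφnonneg ξ)]
    rw [this, mul_comm C]
    exact mul_le_mul_of_nonneg_left (hφle ξ) (sq_nonneg _)
  have hb2 : ∫⁻ ξ, b ξ ^ (2:ℝ) ∂μ ≤ 1 := by
    refine le_trans (le_of_eq (lintegral_congr fun ξ => ?_)) hφB
    rw [hrpow2, hb, ← ENNReal.ofReal_pow (Real.sqrt_nonneg _), Real.sq_sqrt (hφnonneg ξ)]
  have hhalf : ∀ z : ℝ≥0∞, (z ^ (1/(2:ℝ))) ^ 2 = z := fun z => by
    rw [← hrpow2, ← ENNReal.rpow_mul]; norm_num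
  calc ENNReal.ofReal (I ^ 2) = ((‖I‖₊ : ℝ≥0∞)) ^ 2 := h1
    _ ≤ (∫⁻ ξ, a ξ * b ξ ∂μ) ^ 2 := pow_le_pow_left' h2 2
    _ ≤ ((∫⁻ ξ, a ξ ^ (2:ℝ) ∂μ) ^ (1/(2:ℝ)) * (∫⁻ ξ, b ξ ^ (2:ℝ) ∂μ) ^ (1/(2:ℝ))) ^ 2 :=
        pow_le_pow_left' h3 2
    _ = (∫⁻ ξ, a ξ ^ (2:ℝ) ∂μ) * (∫⁻ ξ, b ξ ^ (2:ℝ) ∂μ) := by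
        rw [mul_pow, hhalf, hhalf]
    _ ≤ (ENNReal.ofReal C * ∫⁻ ξ, ENNReal.ofReal (f ξ ^ 2) ∂μ) * 1 := mul_le_mul' ha2 hb2
    _ = ENNReal.ofReal C * ∫⁻ ξ, ENNReal.ofReal (f ξ ^ 2) ∂μ := mul_one _

end holder

set_option maxHeartbeats 1000000 in
/-- Let `D ⊆ ℝ^d` be open, `k ≥ 1`, `0 < ε ≤ δ` and set `δ* = ⌊δ/ε⌋ ε`.
There is a constant `C`, depending only on the dimension `d` and the mollifier `φ`, such
that for every `u ∈ L²(D)`: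
`∫_{D(δ*+kε)} (ů_{δ*} − u)² ≤ C δ*² F_ε^{kε,1}(u) ≤ C δ² F_ε^{kε,1}(u)`. -/
theorem stmt_3 (d : ℕ) (hd : 1 ≤ d)
    (φ : EuclideanSpace ℝ (Fin d) → ℝ)
    (hφsmooth : ContDiff ℝ (⊤ : ℕ∞) φ)
    (hφsupp : tsupport φ ⊆ closedBall (0 : EuclideanSpace ℝ (Fin d)) 1)
    (hφnonneg : ∀ ξ, 0 ≤ φ ξ)
    (hφsymm : ∀ ξ, φ (-ξ) = φ ξ)
    (hφint : (∫ ξ : EuclideanSpace ℝ (Fin d), φ ξ) = 1) :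
    ∃ C : ℝ, 0 < C ∧
      ∀ (D : Set (EuclideanSpace ℝ (Fin d))), IsOpen D →
        ∀ k ε δ : ℝ, 1 ≤ k → 0 < ε → ε ≤ δ →
          ∀ u : EuclideanSpace ℝ (Fin d) → ℝ, MemLp u 2 (volume.restrict D) →
            (∫⁻ x in {x ∈ D | (⌊δ / ε⌋ : ℝ) * ε + k * ε < infDist x (frontier D)},
                ENNReal.ofReal
                  (((∫ ξ in closedBall (0 : EuclideanSpace ℝ (Fin d)) 1,
                        u (x + ((⌊δ / ε⌋ : ℝ) * ε) • ξ) * φ ξ) - u x) ^ 2)) ≤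
              ENNReal.ofReal (C * ((⌊δ / ε⌋ : ℝ) * ε) ^ 2) *
                (∫⁻ x in {x ∈ D | k * ε < infDist x (frontier D)},
                  ∫⁻ ξ in closedBall (0 : EuclideanSpace ℝ (Fin d)) 1,
                    ENNReal.ofReal (((u (x + ε • ξ) - u x) / ε) ^ 2)) ∧
            ENNReal.ofReal (C * ((⌊δ / ε⌋ : ℝ) * ε) ^ 2) *
                (∫⁻ x in {x ∈ D | k * ε < infDist x (frontier D)},
                  ∫⁻ ξ in closedBall (0 : EuclideanSpace ℝ (Fin d)) 1,
                    ENNReal.ofReal (((u (x + ε • ξ) - u x) / ε) ^ 2)) ≤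
              ENNReal.ofReal (C * δ ^ 2) *
                (∫⁻ x in {x ∈ D | k * ε < infDist x (frontier D)},
                  ∫⁻ ξ in closedBall (0 : EuclideanSpace ℝ (Fin d)) 1,
                    ENNReal.ofReal (((u (x + ε • ξ) - u x) / ε) ^ 2)) := by
  classical
  have hφcont : Continuous φ := hφsmooth.continuous
  have hφcs : HasCompactSupport φ :=
    IsCompact.of_isClosed_subset (isCompact_closedBall _ _) (isClosed_tsupport φ) hφsupp
  obtain ⟨M, hM⟩ := hφcs.exists_bound_of_continuous hφcont
  set C : ℝ := M + 1 with hCdef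
  have hC0 : 0 < C := by
    have h0 : (0:ℝ) ≤ M := (norm_nonneg (φ 0)).trans (hM 0)
    simp only [hCdef]; linarith
  have hφle : ∀ ξ, φ ξ ≤ C := fun ξ => by
    have h1 := hM ξ
    rw [Real.norm_eq_abs] at h1
    have := le_abs_self (φ ξ)
    simp only [hCdef]; linarith
  refine ⟨C, hC0, ?_⟩
  intro D hD k ε δ hk hε hεδ u hu
  set Bd := closedBall (0 : EuclideanSpace ℝ (Fin d)) 1 with hBd
  have hBm : MeasurableSet Bd := measurableSet_closedBall
  have hDm : MeasurableSet D := hD.measurableSet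
  -- integer part
  have hfloor1 : (1:ℤ) ≤ ⌊δ / ε⌋ := by
    rw [Int.le_floor]
    exact_mod_cast (one_le_div hε).mpr hεδ
  set N : ℕ := (⌊δ / ε⌋).toNat with hNdef
  have hN1 : 1 ≤ N := by
    have := Int.toNat_le_toNat hfloor1
    simpa [hNdef] using this
  have hNcast : ((⌊δ / ε⌋ : ℤ) : ℝ) = (N:ℝ) := by
    have h1 : ((N:ℕ):ℤ) = ⌊δ / ε⌋ := Int.toNat_of_nonneg (le_trans zero_le_one hfloor1)
    rw [← h1]
    push_cast
    ring
  simp only [hNcast]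
  set σ : ℝ := (N:ℝ) * ε with hσdef
  have hσpos : 0 < σ := by
    have : (0:ℝ) < (N:ℝ) := by exact_mod_cast hN1
    positivity
  have hσε : ε ≤ σ := by
    have : (1:ℝ) ≤ (N:ℝ) := by exact_mod_cast hN1
    nlinarith
  have hσδ : σ ≤ δ := by
    have h1 : ((⌊δ / ε⌋ : ℤ) : ℝ) ≤ δ / ε := Int.floor_le _
    rw [hNcast] at h1
    have h2 : (N:ℝ) * ε ≤ (δ / ε) * ε := by nlinarith
    rwa [div_mul_cancel₀ _ hε.ne'] at h2
  have hkε : 0 < k * ε := by nlinarith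
  have hεkε : ε ≤ k * ε := by nlinarith
  -- the sets
  set A : Set (EuclideanSpace ℝ (Fin d)) :=
    {x ∈ D | σ + k * ε < infDist x (frontier D)} with hAdef
  set A' : Set (EuclideanSpace ℝ (Fin d)) :=
    {x ∈ D | k * ε < infDist x (frontier D)} with hA'def
  have hAm : MeasurableSet A :=
    hDm.inter (measurableSet_lt measurable_const
      (lipschitz_infDist_pt (frontier D)).continuous.measurable)
  have hA'm : MeasurableSet A' :=
    hDm.inter (measurableSet_lt measurable_const
      (lipschitz_infDist_pt (frontier D)).continuous.measurable)
  -- facts about u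
  have hum : AEMeasurable u (volume.restrict D) := hu.aestronglyMeasurable.aemeasurable
  have hu2 : ∫⁻ y in D, ENNReal.ofReal (u y ^ 2) < ⊤ := by
    have h1 := hu.integrable_sq.hasFiniteIntegral
    refine lt_of_eq_of_lt (lintegral_congr fun y => ?_) h1
    rw [Real.enorm_eq_ofReal_abs, abs_of_nonneg (sq_nonneg _)]
  -- facts about φ
  have hφint' : Integrable φ volume := hφcont.integrable_of_hasCompactSupport hφcs
  have hphi0 : ∀ ξ, ξ ∉ Bd → φ ξ = 0 := fun ξ hξ =>
    image_eq_zero_of_notMem_tsupport (fun h => hξ (hφsupp h))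
  have hφB1 : ∫ ξ in Bd, φ ξ = 1 := by
    rw [setIntegral_eq_integral_of_forall_compl_eq_zero (fun ξ hξ => hphi0 ξ hξ)]
    exact hφint
  have hφB : ∫⁻ ξ in Bd, ENNReal.ofReal (φ ξ) ≤ 1 := by
    refine le_trans (setLIntegral_le_lintegral _ _) ?_
    rw [← ofReal_integral_eq_lintegral_ofReal hφint' (Filter.Eventually.of_forall hφnonneg),
      hφint]
    simp
  -- geometry
  have hballA : ∀ x ∈ A, closedBall x σ ⊆ D := fun x hx =>
    closedBall_subset_of_infDist_frontier hx.1 (lt_of_lt_of_le (by nlinarith) hx.2.le)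
  have hmem_cball : ∀ (x : EuclideanSpace ℝ (Fin d)) (c : ℝ), 0 ≤ c →
      ∀ ξ ∈ Bd, x + c • ξ ∈ closedBall x c := by
    intro x c hc ξ hξ
    rw [mem_closedBall, dist_self_add_left, norm_smul, Real.norm_eq_abs, abs_of_nonneg hc]
    have hξ1 : ‖ξ‖ ≤ 1 := by simpa [hBd, mem_closedBall, dist_zero_right] using hξ
    calc c * ‖ξ‖ ≤ c * 1 := by gcongr
      _ = c := mul_one c
  have hmapsA : ∀ c : ℝ, 0 ≤ c → c ≤ σ → ∀ x ∈ A, ∀ ξ ∈ Bd, x + c • ξ ∈ D := by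
    intro c hc hcσ x hx ξ hξ
    exact hballA x hx (closedBall_subset_closedBall hcσ (hmem_cball x c hc ξ hξ))
  have hmapsA' : ∀ x ∈ A', ∀ ξ ∈ Bd, x + ε • ξ ∈ D := by
    intro x hx ξ hξ
    exact closedBall_subset_of_infDist_frontier hx.1 (lt_of_le_of_lt hεkε hx.2)
      (hmem_cball x ε hε.le ξ hξ)
  -- key integrals
  set Kfin := ∫⁻ x in A', ∫⁻ ξ in Bd, ENNReal.ofReal (((u (x + ε • ξ) - u x) / ε) ^ 2)
    with hKfin
  set K := ∫⁻ x in A', ∫⁻ ξ in Bd, ENNReal.ofReal ((u (x + ε • ξ) - u x) ^ 2) with hK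
  have hKKfin : K = ENNReal.ofReal (ε ^ 2) * Kfin := by
    rw [hK, hKfin, ← lintegral_const_mul' _ _ ENNReal.ofReal_ne_top]
    refine lintegral_congr fun x => ?_
    rw [← lintegral_const_mul' _ _ ENNReal.ofReal_ne_top]
    refine lintegral_congr fun ξ => ?_
    rw [← ENNReal.ofReal_mul (sq_nonneg ε)]
    congr 1
    field_simp
  constructor
  · -- the main estimate
    have hB0 : (0 : EuclideanSpace ℝ (Fin d)) ∈ Bd := by
      simp [hBd]
    -- Step 1: pointwise Hölder bound for x ∈ A
    have step1 : ∀ x ∈ A,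
        ENNReal.ofReal (((∫ ξ in Bd, u (x + σ • ξ) * φ ξ) - u x) ^ 2) ≤
          ENNReal.ofReal C * ∫⁻ ξ in Bd, ENNReal.ofReal ((u (x + σ • ξ) - u x) ^ 2) := by
      intro x hx
      have hball := hballA x hx
      have hfm : AEMeasurable (fun ξ => u (x + σ • ξ)) (volume.restrict Bd) :=
        aemeasurable_affine hDm hBm hum hσpos.ne' x
          (fun ξ hξ => hmapsA σ hσpos.le le_rfl x hx ξ hξ)
      have hfin : ∫⁻ ξ in Bd, ENNReal.ofReal ((u (x + σ • ξ)) ^ 2) < ⊤ := by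
        refine lt_of_le_of_lt
          (setLIntegral_comp_affine_le hDm (fun y => ENNReal.ofReal (u y ^ 2)) hσpos hball) ?_
        exact ENNReal.mul_lt_top ENNReal.ofReal_lt_top hu2
      have hint1 : Integrable (fun ξ => u (x + σ • ξ) * φ ξ) (volume.restrict Bd) := by
        constructor
        · exact (hfm.mul hφcont.aemeasurable).aestronglyMeasurable
        · have hbound : ∀ ξ, (‖u (x + σ • ξ) * φ ξ‖₊ : ℝ≥0∞) ≤
              ENNReal.ofReal C * (1 + ENNReal.ofReal ((u (x + σ • ξ)) ^ 2)) := by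
            intro ξ
            rw [← enorm_eq_nnnorm, Real.enorm_eq_ofReal_abs, ← ENNReal.ofReal_one,
              ← ENNReal.ofReal_add zero_le_one (sq_nonneg _),
              ← ENNReal.ofReal_mul hC0.le]
            refine ENNReal.ofReal_le_ofReal ?_
            rw [abs_mul, abs_of_nonneg (hφnonneg ξ)]
            have h1 : |u (x + σ • ξ)| ≤ 1 + (u (x + σ • ξ)) ^ 2 := by
              nlinarith [abs_nonneg (u (x + σ • ξ)), sq_abs (u (x + σ • ξ))]
            nlinarith [hφnonneg ξ, hφle ξ, abs_nonneg (u (x + σ • ξ))]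
          refine lt_of_le_of_lt (lintegral_mono hbound) ?_
          rw [lintegral_const_mul' _ _ ENNReal.ofReal_ne_top,
            lintegral_add_left measurable_const]
          simp only [lintegral_one, Measure.restrict_apply, MeasurableSet.univ,
            Set.univ_inter]
          exact ENNReal.mul_lt_top ENNReal.ofReal_lt_top
            (ENNReal.add_lt_top.mpr ⟨measure_closedBall_lt_top, hfin⟩)
      have hint2 : Integrable (fun ξ => u x * φ ξ) (volume.restrict Bd) :=
        (hφint'.integrableOn).const_mul (u x)
      have hrw : (∫ ξ in Bd, u (x + σ • ξ) * φ ξ) - u x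
          = ∫ ξ in Bd, (u (x + σ • ξ) - u x) * φ ξ := by
        have h2 : ∫ ξ in Bd, (u (x + σ • ξ) - u x) * φ ξ
            = (∫ ξ in Bd, u (x + σ • ξ) * φ ξ) - ∫ ξ in Bd, u x * φ ξ := by
          simp_rw [sub_mul]
          exact integral_sub hint1 hint2
        rw [h2, integral_const_mul, hφB1, mul_one]
      rw [hrw]
      exact sq_setIntegral_mul_le hφcont hφnonneg hC0.le hφle hφB
        (hfm.sub aemeasurable_const)
    -- Step 2: telescoping pointwise bound
    have htel : ∀ x ξ : EuclideanSpace ℝ (Fin d),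
        ENNReal.ofReal ((u (x + σ • ξ) - u x) ^ 2) ≤
          (N : ℝ≥0∞) * ∑ j ∈ Finset.range N,
            ENNReal.ofReal ((u (x + (((j:ℝ)+1) * ε) • ξ) - u (x + ((j:ℝ) * ε) • ξ)) ^ 2) := by
      intro x ξ
      have hsum : u (x + σ • ξ) - u x = ∑ j ∈ Finset.range N,
          (u (x + (((j:ℝ)+1) * ε) • ξ) - u (x + ((j:ℝ) * ε) • ξ)) := by
        have h0 := Finset.sum_range_sub (f := fun j : ℕ => u (x + ((j:ℝ) * ε) • ξ)) N
        simp only [Nat.cast_add, Nat.cast_one, Nat.cast_zero, zero_mul, zero_smul,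
          add_zero] at h0
        rw [← h0]
      rw [hsum]
      have h1 : (∑ j ∈ Finset.range N,
            (u (x + (((j:ℝ)+1) * ε) • ξ) - u (x + ((j:ℝ) * ε) • ξ))) ^ 2
          ≤ (N:ℝ) * ∑ j ∈ Finset.range N,
            (u (x + (((j:ℝ)+1) * ε) • ξ) - u (x + ((j:ℝ) * ε) • ξ)) ^ 2 := by
        have h2 := sq_sum_le_card_mul_sum_sq (s := Finset.range N)
          (f := fun j : ℕ => u (x + (((j:ℝ)+1) * ε) • ξ) - u (x + ((j:ℝ) * ε) • ξ))
        simpa [Finset.card_range] using h2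
      refine le_trans (ENNReal.ofReal_le_ofReal h1) ?_
      rw [ENNReal.ofReal_mul (Nat.cast_nonneg N), ENNReal.ofReal_natCast,
        ENNReal.ofReal_sum_of_nonneg (fun j _ => sq_nonneg _)]
    -- Fj and measurability
    set π := (volume.restrict A).prod (volume.restrict Bd) with hπ
    set Fj : ℕ → (EuclideanSpace ℝ (Fin d) × EuclideanSpace ℝ (Fin d)) → ℝ≥0∞ := fun j p =>
      ENNReal.ofReal ((u (p.1 + (((j:ℝ)+1) * ε) • p.2) - u (p.1 + ((j:ℝ) * ε) • p.2)) ^ 2)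
      with hFj
    have hshear : ∀ c : ℝ, 0 ≤ c → c ≤ σ →
        AEMeasurable (fun p : EuclideanSpace ℝ (Fin d) × EuclideanSpace ℝ (Fin d) =>
          u (p.1 + c • p.2)) π :=
      fun c h0 h1 => aemeasurable_shear hDm hAm hBm hB0 hum c (hmapsA c h0 h1)
    have hFjm : ∀ j ∈ Finset.range N, AEMeasurable (Fj j) π := by
      intro j hj
      have hjN : (j:ℝ) + 1 ≤ (N:ℝ) := by exact_mod_cast Finset.mem_range.mp hj
      have hj1 : ((j:ℝ)+1) * ε ≤ σ := by rw [hσdef]; nlinarith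
      have hj0 : (j:ℝ) * ε ≤ σ := by nlinarith [Nat.cast_nonneg (α := ℝ) j]
      have h1 := hshear _ (by positivity) hj1
      have h2 := hshear _ (by positivity) hj0
      exact ENNReal.measurable_ofReal.comp_aemeasurable ((h1.sub h2).pow_const 2)
    have hSm : AEMeasurable (fun p => ∑ j ∈ Finset.range N, Fj j p) π :=
      Finset.aemeasurable_fun_sum _ hFjm
    -- translation bound, per j and ξ
    have htrans : ∀ j ∈ Finset.range N, ∀ ξ ∈ Bd,
        (∫⁻ x in A, Fj j (x, ξ)) ≤
          ∫⁻ y in A', ENNReal.ofReal ((u (y + ε • ξ) - u y) ^ 2) := by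
      intro j hj ξ hξ
      have hξ1 : ‖ξ‖ ≤ 1 := by simpa [hBd, mem_closedBall, dist_zero_right] using hξ
      set v : EuclideanSpace ℝ (Fin d) := ((j:ℝ) * ε) • ξ with hv
      have hveq : ∀ x : EuclideanSpace ℝ (Fin d),
          Fj j (x, ξ) = (fun y => ENNReal.ofReal ((u (y + ε • ξ) - u y) ^ 2)) (x + v) := by
        intro x
        have harg : x + (((j:ℝ)+1) * ε) • ξ = (x + v) + ε • ξ := by
          rw [hv, add_assoc, ← add_smul]
          congr 1
          ring
        simp only [hFj, hv, harg]
      have hnv : ‖v‖ ≤ σ - ε := by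
        rw [hv, norm_smul, Real.norm_eq_abs, abs_of_nonneg (by positivity)]
        have hjN : (j:ℝ) ≤ (N:ℝ) - 1 := by
          have h3 : (j:ℕ) + 1 ≤ N := Finset.mem_range.mp hj
          have h4 : ((j:ℝ)) + 1 ≤ (N:ℝ) := by exact_mod_cast h3
          linarith
        have hjε : 0 ≤ (j:ℝ) * ε := by positivity
        have h5 : (j:ℝ) * ε * ‖ξ‖ ≤ (j:ℝ) * ε := by
          nlinarith [mul_nonneg hjε (sub_nonneg.mpr hξ1)]
        have h6 : (j:ℝ) * ε ≤ ((N:ℝ) - 1) * ε := by nlinarith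
        have h7 : ((N:ℝ) - 1) * ε = σ - ε := by rw [hσdef]; ring
        linarith
      have hsubset : (fun y : EuclideanSpace ℝ (Fin d) => y - v) ⁻¹' A ⊆ A' := by
        intro y hy
        have hy' : y - v ∈ A := hy
        have hdist : dist y (y - v) = ‖v‖ := by
          rw [dist_eq_norm]
          simp
        have hyD : y ∈ D := by
          have hmem : y ∈ closedBall (y - v) (σ - ε) := by
            rw [mem_closedBall, hdist]
            exact hnv
          exact closedBall_subset_of_infDist_frontier hy'.1
            (show σ - ε < infDist (y - v) (frontier D) by linarith [hy'.2, hkε, hε]) hmem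
        have hyinf : k * ε < infDist y (frontier D) := by
          have h4 : infDist (y - v) (frontier D) ≤ infDist y (frontier D) + dist (y - v) y :=
            infDist_le_infDist_add_dist
          have h5 : dist (y - v) y = ‖v‖ := by rw [dist_comm]; exact hdist
          have h6 := hy'.2
          linarith
        exact ⟨hyD, hyinf⟩
      calc (∫⁻ x in A, Fj j (x, ξ))
          = ∫⁻ x in A, (fun y => ENNReal.ofReal ((u (y + ε • ξ) - u y) ^ 2)) (x + v) :=
            lintegral_congr fun x => hveq x
        _ = ∫⁻ y in (fun y : EuclideanSpace ℝ (Fin d) => y - v) ⁻¹' A,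
              ENNReal.ofReal ((u (y + ε • ξ) - u y) ^ 2) :=
            setLIntegral_comp_add hAm (fun y => ENNReal.ofReal ((u (y + ε • ξ) - u y) ^ 2)) v
        _ ≤ ∫⁻ y in A', ENNReal.ofReal ((u (y + ε • ξ) - u y) ^ 2) :=
            lintegral_mono_set hsubset
    -- measurability over A' × Bd, for the final swap
    have hf0m : AEMeasurable
        (fun p : EuclideanSpace ℝ (Fin d) × EuclideanSpace ℝ (Fin d) =>
          ENNReal.ofReal ((u (p.1 + ε • p.2) - u p.1) ^ 2))
        ((volume.restrict A').prod (volume.restrict Bd)) := by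
      have h1 := aemeasurable_shear hDm hA'm hBm hB0 hum ε hmapsA'
      have h2' := aemeasurable_shear hDm hA'm hBm hB0 hum 0
        (fun x hx ξ _ => by simpa using hx.1)
      have h2 : AEMeasurable
          (fun p : EuclideanSpace ℝ (Fin d) × EuclideanSpace ℝ (Fin d) => u p.1)
          ((volume.restrict A').prod (volume.restrict Bd)) := by
        simpa using h2'
      exact ENNReal.measurable_ofReal.comp_aemeasurable ((h1.sub h2).pow_const 2)
    have hswapK : ∫⁻ ξ in Bd, ∫⁻ y in A', ENNReal.ofReal ((u (y + ε • ξ) - u y) ^ 2) = K := by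
      rw [hK, ← MeasureTheory.lintegral_prod_symm _ hf0m, MeasureTheory.lintegral_prod _ hf0m]
    -- assemble
    have hmono1 : ∫⁻ x in A, ∫⁻ ξ in Bd, ENNReal.ofReal ((u (x + σ • ξ) - u x) ^ 2) ≤
        (N:ℝ≥0∞) * ∫⁻ x in A, ∫⁻ ξ in Bd, (∑ j ∈ Finset.range N, Fj j (x, ξ)) := by
      rw [← lintegral_const_mul' _ _ (ENNReal.natCast_ne_top N)]
      refine lintegral_mono fun x => ?_
      rw [← lintegral_const_mul' _ _ (ENNReal.natCast_ne_top N)]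
      exact lintegral_mono fun ξ => htel x ξ
    have hjbound : ∀ j ∈ Finset.range N, ∫⁻ p, Fj j p ∂π ≤ K := by
      intro j hj
      rw [hπ, MeasureTheory.lintegral_prod_symm _ (hFjm j hj)]
      rw [← hswapK]
      refine lintegral_mono_ae ((ae_restrict_mem hBm).mono fun ξ hξ => ?_)
      exact htrans j hj ξ hξ
    have hsum2 : ∫⁻ x in A, ∫⁻ ξ in Bd, (∑ j ∈ Finset.range N, Fj j (x, ξ)) ≤
        (N:ℝ≥0∞) * K := by
      have he1 : ∫⁻ x in A, ∫⁻ ξ in Bd, (∑ j ∈ Finset.range N, Fj j (x, ξ)) =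
          ∫⁻ p, (∑ j ∈ Finset.range N, Fj j p) ∂π := by
        rw [hπ, MeasureTheory.lintegral_prod _ hSm]
      rw [he1, lintegral_finset_sum' _ hFjm]
      calc (∑ j ∈ Finset.range N, ∫⁻ p, Fj j p ∂π)
          ≤ ∑ _j ∈ Finset.range N, K := Finset.sum_le_sum hjbound
        _ = (N:ℝ≥0∞) * K := by
            rw [Finset.sum_const, Finset.card_range, nsmul_eq_mul]
    have hfactor : ENNReal.ofReal (C * σ ^ 2) =
        ENNReal.ofReal C * ((N:ℝ≥0∞) * ((N:ℝ≥0∞) * ENNReal.ofReal (ε ^ 2))) := by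
      rw [ENNReal.ofReal_mul hC0.le]
      congr 1
      rw [hσdef, mul_pow, ENNReal.ofReal_mul (sq_nonneg _),
        ENNReal.ofReal_pow (Nat.cast_nonneg N), ENNReal.ofReal_natCast]
      ring
    calc ∫⁻ x in A, ENNReal.ofReal (((∫ ξ in Bd, u (x + σ • ξ) * φ ξ) - u x) ^ 2)
        ≤ ∫⁻ x in A, (ENNReal.ofReal C *
            ∫⁻ ξ in Bd, ENNReal.ofReal ((u (x + σ • ξ) - u x) ^ 2)) :=
          lintegral_mono_ae ((ae_restrict_mem hAm).mono step1)
      _ = ENNReal.ofReal C *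
            ∫⁻ x in A, ∫⁻ ξ in Bd, ENNReal.ofReal ((u (x + σ • ξ) - u x) ^ 2) :=
          lintegral_const_mul' _ _ ENNReal.ofReal_ne_top
      _ ≤ ENNReal.ofReal C *
            ((N:ℝ≥0∞) * ∫⁻ x in A, ∫⁻ ξ in Bd, (∑ j ∈ Finset.range N, Fj j (x, ξ))) :=
          mul_le_mul_right hmono1 _
      _ ≤ ENNReal.ofReal C * ((N:ℝ≥0∞) * ((N:ℝ≥0∞) * K)) :=
          mul_le_mul_right (mul_le_mul_right hsum2 _) _
      _ = ENNReal.ofReal (C * σ ^ 2) * Kfin := by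
          rw [hKKfin, hfactor]
          ring

  · -- second inequality
    refine mul_le_mul_left (ENNReal.ofReal_le_ofReal ?_) _
    have h1 : σ ^ 2 ≤ δ ^ 2 := pow_le_pow_left₀ hσpos.le hσδ 2
    nlinarith
end

section
/- Let d ≥ 1, let D₁, D₂ ⊂ ℝ^d be bounded open sets, set D = D₁ ∪ D₂, and suppose there is an open cube B̃ ⊂ D with |B̃ ∩ D₁| ≥ |B̃|/2 and |B̃ ∩ D₂| ≥ |B̃|/2. Fix ε > 0, r > 0 and C > 0, and assume that for each G ∈ {D₁, D₂, B̃} and every u ∈ L²(G): ∫_G ∫_G (u(x) − u(y))² dx dy ≤ C ε^{−d} ∫_G ∫_{{y ∈ G : |y−x| < εr}} ((u(x) − u(y))/ε)² dy dx. Then there is a constant C′, depending only on d, C, and the Lebesgue measures |D|, |D₁|, |D₂|, |B̃ ∩ D₁|, |B̃ ∩ D₂| (and not on ε or u), such that for every u ∈ L²(D): ∫_D (u(x) − u_D)² dx ≤ C′ ε^{−d} ∫_D ∫_{{y ∈ D : |y−x| < εr}} ((u(x) − u(y))/ε)² dy dx, where u_D = (1/|D|) ∫_D u dx. -/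
open MeasureTheory Metric
open scoped ENNReal

section helpers
variable {α : Type*} [MeasurableSpace α]

lemma cs_sq (ν : Measure α) (g : α → ℝ≥0∞) (hg : AEMeasurable g ν) :
    (∫⁻ y, g y ∂ν) ^ 2 ≤ ν Set.univ * ∫⁻ y, (g y) ^ 2 ∂ν := by
  have hpq : Real.HolderConjugate 2 2 := by constructor <;> norm_num
  have h := ENNReal.lintegral_mul_le_Lp_mul_Lq ν hpq hg (aemeasurable_const (b := (1 : ℝ≥0∞)))
  simp only [Pi.mul_apply, mul_one, lintegral_const, ENNReal.one_rpow, one_mul] at h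
  have h2 : (∫⁻ y, g y ∂ν) ^ 2 ≤
      ((∫⁻ a, g a ^ (2:ℝ) ∂ν) ^ (1/(2:ℝ)) * (ν Set.univ) ^ (1/(2:ℝ))) ^ 2 := by
    gcongr
  calc (∫⁻ y, g y ∂ν) ^ 2 ≤ _ := h2
    _ = ν Set.univ * ∫⁻ y, (g y) ^ 2 ∂ν := by
        rw [mul_pow, ← ENNReal.rpow_natCast ((∫⁻ a, g a ^ (2:ℝ) ∂ν) ^ (1/(2:ℝ))) 2,
          ← ENNReal.rpow_natCast ((ν Set.univ) ^ (1/(2:ℝ))) 2,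
          ← ENNReal.rpow_mul, ← ENNReal.rpow_mul]
        norm_num
        exact mul_comm _ _

lemma avg_bound (ν : Measure α) (v : α → ℝ)
    (hvi : Integrable v ν) (h0 : ν Set.univ ≠ 0) (ht : ν Set.univ ≠ ⊤) (a : ℝ) :
    ENNReal.ofReal ((a - (∫ y, v y ∂ν) / (ν Set.univ).toReal) ^ 2) ≤
      (ν Set.univ)⁻¹ * ∫⁻ y, ENNReal.ofReal ((a - v y) ^ 2) ∂ν := by
  haveI : IsFiniteMeasure ν := ⟨ht.lt_top⟩
  set m := (ν Set.univ).toReal with hm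
  have hm0 : 0 < m := ENNReal.toReal_pos h0 ht
  have hint : Integrable (fun y => a - v y) ν := (integrable_const a).sub hvi
  have key : a - (∫ y, v y ∂ν) / m = (∫ y, (a - v y) ∂ν) / m := by
    rw [integral_sub (integrable_const a) hvi, integral_const, smul_eq_mul]
    field_simp
    rw [measureReal_def]
  have habs : |a - (∫ y, v y ∂ν) / m| ≤ (∫ y, |a - v y| ∂ν) / m := by
    rw [key, abs_div, abs_of_pos hm0]
    gcongr
    simpa [Real.norm_eq_abs] using norm_integral_le_integral_norm (μ := ν) (fun y => a - v y)
  set g : α → ℝ≥0∞ := fun y => ENNReal.ofReal |a - v y| with hg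
  have hgm : AEMeasurable g ν := by
    refine ENNReal.measurable_ofReal.comp_aemeasurable ?_
    exact measurable_abs.comp_aemeasurable (aemeasurable_const.sub hvi.aemeasurable)
  have h1 : ENNReal.ofReal (∫ y, |a - v y| ∂ν) = ∫⁻ y, g y ∂ν := by
    rw [ofReal_integral_eq_lintegral_ofReal hint.abs]
    exact Filter.Eventually.of_forall fun y => abs_nonneg _
  have h2 : ∀ y, g y ^ 2 = ENNReal.ofReal ((a - v y) ^ 2) := by
    intro y
    rw [hg, ← ENNReal.ofReal_pow (abs_nonneg _), sq_abs]
  calc ENNReal.ofReal ((a - (∫ y, v y ∂ν) / m) ^ 2)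
      = ENNReal.ofReal (|a - (∫ y, v y ∂ν) / m|) ^ 2 := by
        rw [← ENNReal.ofReal_pow (abs_nonneg _), sq_abs]
    _ ≤ ENNReal.ofReal ((∫ y, |a - v y| ∂ν) / m) ^ 2 := by
        exact pow_le_pow_left' (ENNReal.ofReal_le_ofReal habs) 2
    _ = ((∫⁻ y, g y ∂ν) * (ν Set.univ)⁻¹) ^ 2 := by
        rw [ENNReal.ofReal_div_of_pos hm0, ENNReal.ofReal_toReal ht, h1, div_eq_mul_inv]
    _ = (∫⁻ y, g y ∂ν) ^ 2 * ((ν Set.univ)⁻¹) ^ 2 := by rw [mul_pow]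
    _ ≤ (ν Set.univ * ∫⁻ y, g y ^ 2 ∂ν) * ((ν Set.univ)⁻¹) ^ 2 := by
        gcongr
        · exact cs_sq ν g hgm
    _ = (ν Set.univ * (ν Set.univ)⁻¹) * ((ν Set.univ)⁻¹ * ∫⁻ y, g y ^ 2 ∂ν) := by ring
    _ = (ν Set.univ)⁻¹ * ∫⁻ y, g y ^ 2 ∂ν := by
        rw [ENNReal.mul_inv_cancel h0 ht, one_mul]
    _ = (ν Set.univ)⁻¹ * ∫⁻ y, ENNReal.ofReal ((a - v y) ^ 2) ∂ν := by
        congr 1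
        exact lintegral_congr fun y => h2 y

/-- set version of `avg_bound` -/
lemma avg_bound_set (A : Set α) (μ : Measure α) (v : α → ℝ)
    (hvi : Integrable v (μ.restrict A)) (h0 : μ A ≠ 0) (ht : μ A ≠ ⊤) (a : ℝ) :
    ENNReal.ofReal ((a - (∫ y in A, v y ∂μ) / (μ A).toReal) ^ 2) ≤
      (μ A)⁻¹ * ∫⁻ y in A, ENNReal.ofReal ((a - v y) ^ 2) ∂μ := by
  have := avg_bound (μ.restrict A) v hvi (by rwa [Measure.restrict_apply_univ])
    (by rwa [Measure.restrict_apply_univ]) a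
  rwa [Measure.restrict_apply_univ] at this

end helpers

lemma cross_bound {α : Type*} [MeasurableSpace α] (μ : Measure α) (S T : Set α)
    (v : α → ℝ) (hv : Measurable v) (hTt : μ T ≠ ⊤) (q1 q2 : ℝ) :
    (∫⁻ x in S, ∫⁻ y in T, ENNReal.ofReal ((v x - v y) ^ 2) ∂μ ∂μ) ≤
      3 * μ T * (∫⁻ x in S, ENNReal.ofReal ((v x - q1) ^ 2) ∂μ)
      + 3 * μ S * μ T * ENNReal.ofReal ((q1 - q2) ^ 2)
      + 3 * μ S * (∫⁻ y in T, ENNReal.ofReal ((v y - q2) ^ 2) ∂μ) := by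
  have hpt : ∀ p s : ℝ, ENNReal.ofReal ((p - s) ^ 2) ≤
      3 * ENNReal.ofReal ((p - q1) ^ 2) + 3 * ENNReal.ofReal ((q1 - q2) ^ 2)
        + 3 * ENNReal.ofReal ((s - q2) ^ 2) := by
    intro p s
    rw [show (3 : ℝ≥0∞) = ENNReal.ofReal 3 by simp,
      ← ENNReal.ofReal_mul (by norm_num), ← ENNReal.ofReal_mul (by norm_num),
      ← ENNReal.ofReal_mul (by norm_num),
      ← ENNReal.ofReal_add (by positivity) (by positivity),
      ← ENNReal.ofReal_add (by positivity) (by positivity)]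
    refine ENNReal.ofReal_le_ofReal ?_
    nlinarith [sq_nonneg (p - q1 - (q1 - q2)), sq_nonneg (q1 - q2 - (q2 - s)),
      sq_nonneg (p - q1 - (q2 - s))]
  have hgm : Measurable fun y => (3 : ℝ≥0∞) * ENNReal.ofReal ((v y - q2) ^ 2) :=
    (measurable_const.mul (ENNReal.measurable_ofReal.comp ((hv.sub measurable_const).pow_const 2)))
  have hgm1 : Measurable fun x => (3 : ℝ≥0∞) * μ T * ENNReal.ofReal ((v x - q1) ^ 2) :=
    (measurable_const.mul (ENNReal.measurable_ofReal.comp ((hv.sub measurable_const).pow_const 2)))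
  calc (∫⁻ x in S, ∫⁻ y in T, ENNReal.ofReal ((v x - v y) ^ 2) ∂μ ∂μ)
      ≤ ∫⁻ x in S, ∫⁻ y in T,
          ((3 * ENNReal.ofReal ((v x - q1) ^ 2) + 3 * ENNReal.ofReal ((q1 - q2) ^ 2))
            + 3 * ENNReal.ofReal ((v y - q2) ^ 2)) ∂μ ∂μ :=
        lintegral_mono fun x => lintegral_mono fun y => hpt (v x) (v y)
    _ = ∫⁻ x in S,
          ((3 * ENNReal.ofReal ((v x - q1) ^ 2) + 3 * ENNReal.ofReal ((q1 - q2) ^ 2)) * μ T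
            + 3 * (∫⁻ y in T, ENNReal.ofReal ((v y - q2) ^ 2) ∂μ)) ∂μ := by
        refine lintegral_congr fun x => ?_
        rw [lintegral_add_right _ hgm, setLIntegral_const,
          lintegral_const_mul' _ _ (by norm_num)]
    _ = ∫⁻ x in S,
          (3 * μ T * ENNReal.ofReal ((v x - q1) ^ 2)
            + (3 * ENNReal.ofReal ((q1 - q2) ^ 2) * μ T
              + 3 * (∫⁻ y in T, ENNReal.ofReal ((v y - q2) ^ 2) ∂μ))) ∂μ := by
        refine lintegral_congr fun x => ?_
        ring
    _ = 3 * μ T * (∫⁻ x in S, ENNReal.ofReal ((v x - q1) ^ 2) ∂μ)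
          + (3 * ENNReal.ofReal ((q1 - q2) ^ 2) * μ T
            + 3 * (∫⁻ y in T, ENNReal.ofReal ((v y - q2) ^ 2) ∂μ)) * μ S := by
        rw [lintegral_add_left hgm1, setLIntegral_const,
          lintegral_const_mul' _ _ (ENNReal.mul_ne_top (by norm_num) hTt)]
    _ = 3 * μ T * (∫⁻ x in S, ENNReal.ofReal ((v x - q1) ^ 2) ∂μ)
          + 3 * μ S * μ T * ENNReal.ofReal ((q1 - q2) ^ 2)
          + 3 * μ S * (∫⁻ y in T, ENNReal.ofReal ((v y - q2) ^ 2) ∂μ) := by ring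

/-- Gluing Poincaré–Wirtinger inequalities on a union `D = D₁ ∪ D₂`
through a common cube `B̃ ⊆ D` meeting both parts in at least half of its measure:
if the double-difference Poincaré inequality holds (with constant `C`) on `D₁`, `D₂` and
`B̃`, then the mean-value Poincaré inequality holds on `D` with a constant `C′` depending
only on `d`, `C` and the measures `|D|, |D₁|, |D₂|, |B̃∩D₁|, |B̃∩D₂|` (not on `ε` or `u`). -/
theorem stmt_6 (d : ℕ) (hd : 1 ≤ d)
    (D₁ D₂ : Set (EuclideanSpace ℝ (Fin d)))
    (hD₁o : IsOpen D₁) (hD₂o : IsOpen D₂)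
    (hD₁b : Bornology.IsBounded D₁) (hD₂b : Bornology.IsBounded D₂)
    (B : Set (EuclideanSpace ℝ (Fin d)))
    (hBcube : ∃ (x₀ : EuclideanSpace ℝ (Fin d)) (T : ℝ), 0 < T ∧
      B = {x : EuclideanSpace ℝ (Fin d) | ∀ i, |x i - x₀ i| < T / 2})
    (hBsub : B ⊆ D₁ ∪ D₂)
    (hB₁ : volume B / 2 ≤ volume (B ∩ D₁))
    (hB₂ : volume B / 2 ≤ volume (B ∩ D₂))
    (C : ℝ) (hC : 0 < C) :
    ∃ C' : ℝ, 0 < C' ∧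
      ∀ ε r : ℝ, 0 < ε → 0 < r →
        (∀ G ∈ ({D₁, D₂, B} : Set (Set (EuclideanSpace ℝ (Fin d)))),
          ∀ u : EuclideanSpace ℝ (Fin d) → ℝ, MemLp u 2 (volume.restrict G) →
            (∫⁻ x in G, ∫⁻ y in G, ENNReal.ofReal ((u x - u y) ^ 2)) ≤
              ENNReal.ofReal (C / ε ^ d) *
                ∫⁻ x in G, ∫⁻ y in {y ∈ G | dist y x < ε * r},
                  ENNReal.ofReal (((u x - u y) / ε) ^ 2)) →
        ∀ u : EuclideanSpace ℝ (Fin d) → ℝ, MemLp u 2 (volume.restrict (D₁ ∪ D₂)) →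
          (∫⁻ x in D₁ ∪ D₂,
              ENNReal.ofReal
                ((u x - (∫ y in D₁ ∪ D₂, u y) / (volume (D₁ ∪ D₂)).toReal) ^ 2)) ≤
            ENNReal.ofReal (C' / ε ^ d) *
              ∫⁻ x in D₁ ∪ D₂, ∫⁻ y in {y ∈ D₁ ∪ D₂ | dist y x < ε * r},
                ENNReal.ofReal (((u x - u y) / ε) ^ 2) := by
  obtain ⟨x₀, T, hT, hBeq⟩ := hBcube
  set D : Set (EuclideanSpace ℝ (Fin d)) := D₁ ∪ D₂ with hDdef
  set A₁ : Set (EuclideanSpace ℝ (Fin d)) := B ∩ D₁ with hA₁def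
  set A₂ : Set (EuclideanSpace ℝ (Fin d)) := B ∩ D₂ with hA₂def
  -- basic facts
  have hBopen : IsOpen B := by
    rw [hBeq]
    have : {x : EuclideanSpace ℝ (Fin d) | ∀ i, |x i - x₀ i| < T / 2} =
        ⋂ i, {x : EuclideanSpace ℝ (Fin d) | |x i - x₀ i| < T / 2} := by
      ext x; simp [Set.mem_iInter]
    rw [this]
    refine isOpen_iInter_of_finite fun i => ?_
    have hc : Continuous fun x : EuclideanSpace ℝ (Fin d) => |x i - x₀ i| :=
      (((continuous_apply i).comp (PiLp.continuous_ofLp 2 _)).sub continuous_const).abs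
    exact isOpen_lt hc continuous_const
  have hBne : B.Nonempty := ⟨x₀, by simp [hBeq, hT]⟩
  have hBpos : 0 < volume B := hBopen.measure_pos volume hBne
  have hDb : Bornology.IsBounded D := hD₁b.union hD₂b
  have hμDt : volume D ≠ ⊤ := hDb.measure_lt_top.ne
  have hμ1t : volume D₁ ≠ ⊤ := hD₁b.measure_lt_top.ne
  have hμ2t : volume D₂ ≠ ⊤ := hD₂b.measure_lt_top.ne
  have hμD0 : volume D ≠ 0 := by
    refine (lt_of_lt_of_le hBpos (measure_mono hBsub)).ne'
  have ha₁0 : volume A₁ ≠ 0 := by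
    refine (lt_of_lt_of_le (ENNReal.div_pos hBpos.ne' (by norm_num)) hB₁).ne'
  have ha₂0 : volume A₂ ≠ 0 := by
    refine (lt_of_lt_of_le (ENNReal.div_pos hBpos.ne' (by norm_num)) hB₂).ne'
  have ha₁t : volume A₁ ≠ ⊤ :=
    ((measure_mono (Set.inter_subset_right)).trans_lt hμ1t.lt_top).ne
  have ha₂t : volume A₂ ≠ ⊤ :=
    ((measure_mono (Set.inter_subset_right)).trans_lt hμ2t.lt_top).ne
  set K : ℝ≥0∞ := (volume D)⁻¹ *
    (1 + 6 * (volume D₁ + volume D₂ + volume D₁ * volume D₂) *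
      ((volume A₁)⁻¹ + (volume A₂)⁻¹ + (volume A₁)⁻¹ * (volume A₂)⁻¹)) with hKdef
  have hK0 : K ≠ 0 := by
    refine mul_ne_zero (ENNReal.inv_ne_zero.mpr hμDt) ?_
    exact (lt_of_lt_of_le zero_lt_one le_self_add).ne'
  have hKt : K ≠ ⊤ := by
    refine ENNReal.mul_ne_top (ENNReal.inv_ne_top.mpr hμD0) ?_
    refine ENNReal.add_ne_top.mpr ⟨ENNReal.one_ne_top, ?_⟩
    refine ENNReal.mul_ne_top (ENNReal.mul_ne_top (by norm_num) ?_) ?_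
    · exact ENNReal.add_ne_top.mpr ⟨ENNReal.add_ne_top.mpr ⟨hμ1t, hμ2t⟩,
        ENNReal.mul_ne_top hμ1t hμ2t⟩
    · exact ENNReal.add_ne_top.mpr ⟨ENNReal.add_ne_top.mpr
        ⟨ENNReal.inv_ne_top.mpr ha₁0, ENNReal.inv_ne_top.mpr ha₂0⟩,
        ENNReal.mul_ne_top (ENNReal.inv_ne_top.mpr ha₁0) (ENNReal.inv_ne_top.mpr ha₂0)⟩
  have hKtR : 0 < K.toReal := ENNReal.toReal_pos hK0 hKt
  refine ⟨3 * K.toReal * C, by positivity, ?_⟩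
  intro ε r hε hr H u hu
  -- measurable representative
  obtain ⟨v, hvsm, hveq⟩ : ∃ v, StronglyMeasurable v ∧ u =ᵐ[volume.restrict D] v :=
    ⟨hu.1.mk u, hu.1.stronglyMeasurable_mk, hu.1.ae_eq_mk⟩
  have hvmeas : Measurable v := hvsm.measurable
  have hsub1 : D₁ ⊆ D := Set.subset_union_left
  have hsub2 : D₂ ⊆ D := Set.subset_union_right
  have hA₁B : A₁ ⊆ B := Set.inter_subset_left
  have hA₂B : A₂ ⊆ B := Set.inter_subset_left
  have hA₁D : A₁ ⊆ D := hA₁B.trans hBsub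
  have hA₂D : A₂ ⊆ D := hA₂B.trans hBsub
  have hres : ∀ S : Set (EuclideanSpace ℝ (Fin d)), S ⊆ D → u =ᵐ[volume.restrict S] v :=
    fun S hS => hveq.filter_mono (ae_mono (Measure.restrict_mono hS le_rfl))
  have hu' : MemLp v 2 (volume.restrict D) := hu.ae_eq hveq
  have hmem : ∀ S : Set (EuclideanSpace ℝ (Fin d)), S ⊆ D → MemLp v 2 (volume.restrict S) :=
    fun S hS => hu'.mono_measure (Measure.restrict_mono hS le_rfl)
  haveI : IsFiniteMeasure (volume.restrict D) :=
    ⟨by rw [Measure.restrict_apply_univ]; exact hμDt.lt_top⟩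
  haveI : IsFiniteMeasure (volume.restrict A₁) :=
    ⟨by rw [Measure.restrict_apply_univ]; exact ha₁t.lt_top⟩
  haveI : IsFiniteMeasure (volume.restrict A₂) :=
    ⟨by rw [Measure.restrict_apply_univ]; exact ha₂t.lt_top⟩
  have hvD : Integrable v (volume.restrict D) := hu'.integrable one_le_two
  have hv1 : Integrable v (volume.restrict A₁) := (hmem A₁ hA₁D).integrable one_le_two
  have hv2 : Integrable v (volume.restrict A₂) := (hmem A₂ hA₂D).integrable one_le_two
  set c₁ : ℝ := (∫ y in A₁, v y) / (volume A₁).toReal with hc₁def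
  set c₂ : ℝ := (∫ y in A₂, v y) / (volume A₂).toReal with hc₂def
  -- reduce the goal to the measurable representative v
  have hLHS : (∫⁻ x in D,
        ENNReal.ofReal ((u x - (∫ y in D, u y) / (volume D).toReal) ^ 2)) =
      ∫⁻ x in D, ENNReal.ofReal ((v x - (∫ y in D, v y) / (volume D).toReal) ^ 2) := by
    rw [integral_congr_ae hveq]
    exact lintegral_congr_ae (hveq.mono fun x hx => by simp only [hx])
  have hRHS : (∫⁻ x in D, ∫⁻ y in {y ∈ D | dist y x < ε * r},
        ENNReal.ofReal (((u x - u y) / ε) ^ 2)) =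
      ∫⁻ x in D, ∫⁻ y in {y ∈ D | dist y x < ε * r},
        ENNReal.ofReal (((v x - v y) / ε) ^ 2) := by
    refine lintegral_congr_ae (hveq.mono fun x hx => ?_)
    refine lintegral_congr_ae (((hres _ (Set.sep_subset _ _)).mono fun y hy => ?_))
    simp only [hx, hy]
  rw [hLHS, hRHS]
  -- notation
  set I11 := ∫⁻ x in D₁, ∫⁻ y in D₁, ENNReal.ofReal ((v x - v y) ^ 2) with hI11def
  set I22 := ∫⁻ x in D₂, ∫⁻ y in D₂, ENNReal.ofReal ((v x - v y) ^ 2) with hI22def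
  set IBB := ∫⁻ x in B, ∫⁻ y in B, ENNReal.ofReal ((v x - v y) ^ 2) with hIBBdef
  set JD := ∫⁻ x in D, ∫⁻ y in {y ∈ D | dist y x < ε * r},
    ENNReal.ofReal (((v x - v y) / ε) ^ 2) with hJDdef
  set P1 := ∫⁻ x in D₁, ENNReal.ofReal ((v x - c₁) ^ 2) with hP1def
  set P2 := ∫⁻ x in D₂, ENNReal.ofReal ((v x - c₂) ^ 2) with hP2def
  set Q := ENNReal.ofReal ((c₁ - c₂) ^ 2) with hQdef
  -- measurability of partial integrals
  have hker : Measurable fun p : EuclideanSpace ℝ (Fin d) × EuclideanSpace ℝ (Fin d) =>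
      ENNReal.ofReal ((v p.1 - v p.2) ^ 2) :=
    ENNReal.measurable_ofReal.comp
      (((hvmeas.comp measurable_fst).sub (hvmeas.comp measurable_snd)).pow_const 2)
  have hF : ∀ S : Set (EuclideanSpace ℝ (Fin d)),
      Measurable fun x => ∫⁻ y in S, ENNReal.ofReal ((v x - v y) ^ 2) :=
    fun S => Measurable.lintegral_prod_right' hker
  -- averaging bounds
  have havg1 : ∀ a : ℝ, ENNReal.ofReal ((a - c₁) ^ 2) ≤
      (volume A₁)⁻¹ * ∫⁻ y in A₁, ENNReal.ofReal ((a - v y) ^ 2) :=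
    fun a => avg_bound_set A₁ volume v hv1 ha₁0 ha₁t a
  have havg2 : ∀ a : ℝ, ENNReal.ofReal ((a - c₂) ^ 2) ≤
      (volume A₂)⁻¹ * ∫⁻ y in A₂, ENNReal.ofReal ((a - v y) ^ 2) :=
    fun a => avg_bound_set A₂ volume v hv2 ha₂0 ha₂t a
  -- P bounds
  have hmono12 : ∀ (S S' : Set (EuclideanSpace ℝ (Fin d))), S ⊆ S' →
      ∀ x, (∫⁻ y in S, ENNReal.ofReal ((v x - v y) ^ 2)) ≤
        ∫⁻ y in S', ENNReal.ofReal ((v x - v y) ^ 2) :=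
    fun S S' hS x => lintegral_mono' (Measure.restrict_mono hS le_rfl) le_rfl
  have hP1le : P1 ≤ (volume A₁)⁻¹ * I11 := by
    calc P1 ≤ ∫⁻ x in D₁, (volume A₁)⁻¹ * ∫⁻ y in A₁, ENNReal.ofReal ((v x - v y) ^ 2) :=
          lintegral_mono fun x => havg1 (v x)
      _ = (volume A₁)⁻¹ * ∫⁻ x in D₁, ∫⁻ y in A₁, ENNReal.ofReal ((v x - v y) ^ 2) :=
          lintegral_const_mul' _ _ (ENNReal.inv_ne_top.mpr ha₁0)
      _ ≤ (volume A₁)⁻¹ * I11 :=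
          mul_le_mul_right (lintegral_mono fun x => hmono12 A₁ D₁ Set.inter_subset_right x) _
  have hP2le : P2 ≤ (volume A₂)⁻¹ * I22 := by
    calc P2 ≤ ∫⁻ x in D₂, (volume A₂)⁻¹ * ∫⁻ y in A₂, ENNReal.ofReal ((v x - v y) ^ 2) :=
          lintegral_mono fun x => havg2 (v x)
      _ = (volume A₂)⁻¹ * ∫⁻ x in D₂, ∫⁻ y in A₂, ENNReal.ofReal ((v x - v y) ^ 2) :=
          lintegral_const_mul' _ _ (ENNReal.inv_ne_top.mpr ha₂0)
      _ ≤ (volume A₂)⁻¹ * I22 :=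
          mul_le_mul_right (lintegral_mono fun x => hmono12 A₂ D₂ Set.inter_subset_right x) _
  have hQle : Q ≤ (volume A₁)⁻¹ * ((volume A₂)⁻¹ * IBB) := by
    calc Q = ENNReal.ofReal ((c₂ - c₁) ^ 2) := by rw [hQdef, show (c₁ - c₂) ^ 2 = (c₂ - c₁) ^ 2 by ring]
      _ ≤ (volume A₁)⁻¹ * ∫⁻ y in A₁, ENNReal.ofReal ((c₂ - v y) ^ 2) := havg1 c₂
      _ ≤ (volume A₁)⁻¹ * ∫⁻ y in A₁,
            ((volume A₂)⁻¹ * ∫⁻ z in A₂, ENNReal.ofReal ((v y - v z) ^ 2)) := by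
          gcongr with y
          calc ENNReal.ofReal ((c₂ - v y) ^ 2)
              = ENNReal.ofReal ((v y - c₂) ^ 2) := by rw [show (c₂ - v y) ^ 2 = (v y - c₂) ^ 2 by ring]
            _ ≤ _ := havg2 (v y)
      _ = (volume A₁)⁻¹ * ((volume A₂)⁻¹ *
            ∫⁻ y in A₁, ∫⁻ z in A₂, ENNReal.ofReal ((v y - v z) ^ 2)) := by
          rw [lintegral_const_mul' _ _ (ENNReal.inv_ne_top.mpr ha₂0)]
      _ ≤ (volume A₁)⁻¹ * ((volume A₂)⁻¹ * IBB) := by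
          gcongr
          refine lintegral_mono' (Measure.restrict_mono hA₁B le_rfl) fun y => ?_
          exact hmono12 A₂ B hA₂B y
  -- splitting the double integral over D
  have hsplit : (∫⁻ x in D, ∫⁻ y in D, ENNReal.ofReal ((v x - v y) ^ 2)) ≤
      I11 + (∫⁻ x in D₁, ∫⁻ y in D₂, ENNReal.ofReal ((v x - v y) ^ 2))
        + ((∫⁻ x in D₂, ∫⁻ y in D₁, ENNReal.ofReal ((v x - v y) ^ 2)) + I22) := by
    calc (∫⁻ x in D, ∫⁻ y in D, ENNReal.ofReal ((v x - v y) ^ 2))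
        ≤ ∫⁻ x in D, ((∫⁻ y in D₁, ENNReal.ofReal ((v x - v y) ^ 2))
            + ∫⁻ y in D₂, ENNReal.ofReal ((v x - v y) ^ 2)) :=
          lintegral_mono fun x => lintegral_union_le _ _ _
      _ ≤ (∫⁻ x in D₁, ((∫⁻ y in D₁, ENNReal.ofReal ((v x - v y) ^ 2))
            + ∫⁻ y in D₂, ENNReal.ofReal ((v x - v y) ^ 2)))
          + ∫⁻ x in D₂, ((∫⁻ y in D₁, ENNReal.ofReal ((v x - v y) ^ 2))
            + ∫⁻ y in D₂, ENNReal.ofReal ((v x - v y) ^ 2)) := lintegral_union_le _ _ _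
      _ = I11 + (∫⁻ x in D₁, ∫⁻ y in D₂, ENNReal.ofReal ((v x - v y) ^ 2))
          + ((∫⁻ x in D₂, ∫⁻ y in D₁, ENNReal.ofReal ((v x - v y) ^ 2)) + I22) := by
          rw [lintegral_add_left (hF D₁), lintegral_add_left (hF D₁)]
  -- cross bounds
  have hcross12 : (∫⁻ x in D₁, ∫⁻ y in D₂, ENNReal.ofReal ((v x - v y) ^ 2)) ≤
      3 * volume D₂ * P1 + 3 * volume D₁ * volume D₂ * Q + 3 * volume D₁ * P2 :=
    cross_bound volume D₁ D₂ v hvmeas hμ2t c₁ c₂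
  have hcross21 : (∫⁻ x in D₂, ∫⁻ y in D₁, ENNReal.ofReal ((v x - v y) ^ 2)) ≤
      3 * volume D₁ * P2 + 3 * volume D₂ * volume D₁ * Q + 3 * volume D₂ * P1 := by
    have := cross_bound volume D₂ D₁ v hvmeas hμ1t c₂ c₁
    rwa [show (c₂ - c₁) ^ 2 = (c₁ - c₂) ^ 2 by ring] at this
  -- hypothesis applications
  have hJle : ∀ G : Set (EuclideanSpace ℝ (Fin d)), G ⊆ D →
      (∫⁻ x in G, ∫⁻ y in {y ∈ G | dist y x < ε * r},
        ENNReal.ofReal (((v x - v y) / ε) ^ 2)) ≤ JD := by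
    intro G hG
    refine lintegral_mono' (Measure.restrict_mono hG le_rfl) fun x => ?_
    refine lintegral_mono' (Measure.restrict_mono (fun y hy => ?_) le_rfl) le_rfl
    exact ⟨hG hy.1, hy.2⟩
  have hH1 : I11 ≤ ENNReal.ofReal (C / ε ^ d) * JD := by
    refine (H D₁ (by simp) v (hmem D₁ hsub1)).trans ?_
    exact mul_le_mul_right (hJle D₁ hsub1) _
  have hH2 : I22 ≤ ENNReal.ofReal (C / ε ^ d) * JD := by
    refine (H D₂ (by simp) v (hmem D₂ hsub2)).trans ?_
    exact mul_le_mul_right (hJle D₂ hsub2) _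
  have hHB : IBB ≤ ENNReal.ofReal (C / ε ^ d) * JD := by
    refine (H B (by simp) v (hmem B hBsub)).trans ?_
    exact mul_le_mul_right (hJle B hBsub) _
  -- coefficient bounds
  set K2 : ℝ≥0∞ := 1 + 6 * (volume D₁ + volume D₂ + volume D₁ * volume D₂) *
      ((volume A₁)⁻¹ + (volume A₂)⁻¹ + (volume A₁)⁻¹ * (volume A₂)⁻¹) with hK2def
  have hcoef1 : 1 + 6 * volume D₂ * (volume A₁)⁻¹ ≤ K2 := by
    rw [hK2def]
    gcongr
    · exact le_add_self.trans le_self_add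
    · exact le_self_add.trans le_self_add
  have hcoef2 : 1 + 6 * volume D₁ * (volume A₂)⁻¹ ≤ K2 := by
    rw [hK2def]
    gcongr
    · exact le_self_add.trans le_self_add
    · exact le_add_self.trans le_self_add
  have hcoef3 : 6 * (volume D₁ * volume D₂) * ((volume A₁)⁻¹ * (volume A₂)⁻¹) ≤ K2 := by
    rw [hK2def]
    refine le_add_self.trans' ?_
    gcongr
    · exact le_add_self
    · exact le_add_self
  -- main chain
  have hmain : (∫⁻ x in D,
      ENNReal.ofReal ((v x - (∫ y in D, v y) / (volume D).toReal) ^ 2)) ≤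
        K * (I11 + I22 + IBB) := by
    calc (∫⁻ x in D, ENNReal.ofReal ((v x - (∫ y in D, v y) / (volume D).toReal) ^ 2))
        ≤ ∫⁻ x in D, (volume D)⁻¹ * ∫⁻ y in D, ENNReal.ofReal ((v x - v y) ^ 2) :=
          lintegral_mono fun x => avg_bound_set D volume v hvD hμD0 hμDt (v x)
      _ = (volume D)⁻¹ * ∫⁻ x in D, ∫⁻ y in D, ENNReal.ofReal ((v x - v y) ^ 2) :=
          lintegral_const_mul' _ _ (ENNReal.inv_ne_top.mpr hμD0)
      _ ≤ (volume D)⁻¹ * (I11 + (3 * volume D₂ * P1 + 3 * volume D₁ * volume D₂ * Q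
            + 3 * volume D₁ * P2)
          + ((3 * volume D₁ * P2 + 3 * volume D₂ * volume D₁ * Q + 3 * volume D₂ * P1)
            + I22)) := by
          gcongr
          exact hsplit.trans (by gcongr)
      _ = (volume D)⁻¹ * (I11 + I22 + 6 * volume D₂ * P1 + 6 * volume D₁ * P2
            + 6 * (volume D₁ * volume D₂) * Q) := by ring_nf
      _ ≤ (volume D)⁻¹ * (I11 + I22 + 6 * volume D₂ * ((volume A₁)⁻¹ * I11)
            + 6 * volume D₁ * ((volume A₂)⁻¹ * I22)
            + 6 * (volume D₁ * volume D₂) * ((volume A₁)⁻¹ * ((volume A₂)⁻¹ * IBB))) := by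
          gcongr
      _ = (volume D)⁻¹ * ((1 + 6 * volume D₂ * (volume A₁)⁻¹) * I11
            + (1 + 6 * volume D₁ * (volume A₂)⁻¹) * I22
            + (6 * (volume D₁ * volume D₂) * ((volume A₁)⁻¹ * (volume A₂)⁻¹)) * IBB) := by
          ring_nf
      _ ≤ (volume D)⁻¹ * (K2 * I11 + K2 * I22 + K2 * IBB) := by
          gcongr
      _ = K * (I11 + I22 + IBB) := by
          rw [hKdef]
          ring
  -- conclude
  have hsum : I11 + I22 + IBB ≤ ENNReal.ofReal (C / ε ^ d) * (3 * JD) := by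
    calc I11 + I22 + IBB ≤ ENNReal.ofReal (C / ε ^ d) * JD + ENNReal.ofReal (C / ε ^ d) * JD
          + ENNReal.ofReal (C / ε ^ d) * JD := by gcongr <;> assumption
      _ = ENNReal.ofReal (C / ε ^ d) * (3 * JD) := by ring
  have hconst : ENNReal.ofReal (3 * K.toReal * C / ε ^ d) =
      3 * K * ENNReal.ofReal (C / ε ^ d) := by
    rw [show 3 * K.toReal * C / ε ^ d = (3 * K.toReal) * (C / ε ^ d) by ring,
      ENNReal.ofReal_mul (by positivity), ENNReal.ofReal_mul (by norm_num : (0:ℝ) ≤ 3),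
      ENNReal.ofReal_toReal hKt, ENNReal.ofReal_ofNat]
  calc (∫⁻ x in D, ENNReal.ofReal ((v x - (∫ y in D, v y) / (volume D).toReal) ^ 2))
      ≤ K * (I11 + I22 + IBB) := hmain
    _ ≤ K * (ENNReal.ofReal (C / ε ^ d) * (3 * JD)) := mul_le_mul_right hsum _
    _ = (3 * K * ENNReal.ofReal (C / ε ^ d)) * JD := by ring
    _ = ENNReal.ofReal (3 * K.toReal * C / ε ^ d) * JD := by rw [hconst]
end

section
/- Let D ⊂ ℝ^d be a bounded open set and let ε > 0. Then there is a constant C, depending only on d and the diameter of D, such that for every u ∈ L²(ℝ^d) satisfying u = 0 almost everywhere on ℝ^d ∖ D and u = 0 almost everywhere on {x ∈ D : dist(x, ∂D) < 2ε}: ∫_D u(x)² dx ≤ C ε^{−(d+2)} ∫_D ∫_{{|ξ| ≤ ε}} (u(x+ξ) − u(x))² dξ dx. -/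
/-!
Fix a step `h` with `ε/2 < ‖h‖ < ε` and `n > 2 diam D / ε`. For `x ∈ D` the chain
`x, x + h, …, x + n h` leaves `D`, where `u` vanishes, so Cauchy–Schwarz along the chain and
translation invariance give `∫_D u² ≤ n² ∫ (u(· + h) − u)²`. Since `u` also vanishes on the
collar of width `2ε > ‖h‖` around `∂D`, that difference vanishes off `D`, so the last integral
may be taken over `D`. Averaging over all `h` in a ball of radius `ε/4` inside the annulus
`ε/2 < ‖h‖ < ε`, of volume `≍ ε^d`, gives the factor `n² / ε^d ≍ diam(D)² / ε^(d+2)`.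
If `u` is not a.e. zero the collar condition forces `2ε ≤ diam D`, which keeps `n ≲ diam D / ε`.
-/

open MeasureTheory Metric Set
open scoped ENNReal

def innerParallelSet {E : Type*} [PseudoMetricSpace E] (D : Set E) (δ : ℝ) : Set E :=
  {x ∈ D | δ ≤ infDist x (frontier D)}

theorem MeasurableSet.innerParallelSet {E : Type*} [PseudoMetricSpace E] [MeasurableSpace E]
    [OpensMeasurableSpace E] {D : Set E} (hD : MeasurableSet D) (δ : ℝ) :
    MeasurableSet (innerParallelSet D δ) :=
  hD.inter (measurableSet_le measurable_const (continuous_infDist_pt _).measurable)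

theorem sq_sub_le_mul_sum_sq_sub (f : ℕ → ℝ) (n : ℕ) :
    (f n - f 0) ^ 2 ≤ n * ∑ i ∈ Finset.range n, (f (i + 1) - f i) ^ 2 := by
  have := sq_sum_le_card_mul_sum_sq (s := Finset.range n) (f := fun i => f (i + 1) - f i)
  rwa [Finset.sum_range_sub, Finset.card_range] at this

theorem MeasureTheory.AEStronglyMeasurable.exists_measurable_ae_eq_of_ae_eq_zero_off
    {α β : Type*} [MeasurableSpace α] [TopologicalSpace β]
    [TopologicalSpace.PseudoMetrizableSpace β] [MeasurableSpace β] [BorelSpace β] [Zero β]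
    {μ : Measure α} {u : α → β} (hu : AEStronglyMeasurable u μ) {G : Set α}
    (hG : MeasurableSet G) (hu0 : ∀ᵐ x ∂μ, x ∉ G → u x = 0) :
    ∃ v : α → β, Measurable v ∧ u =ᵐ[μ] v ∧ ∀ x ∉ G, v x = 0 := by
  refine ⟨G.indicator (hu.mk u), hu.stronglyMeasurable_mk.measurable.indicator hG, ?_,
    fun x hx => indicator_of_notMem hx _⟩
  filter_upwards [hu.ae_eq_mk, hu0] with x hx hx0
  by_cases hxG : x ∈ G
  · simp [hxG, hx]
  · simp [hxG, hx0 hxG]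

theorem setLIntegral_setLIntegral_sq_sub_congr_ae {G : Type*} [MeasurableSpace G] [Add G]
    [MeasurableAdd G] {μ : Measure G} [μ.IsAddLeftInvariant] {u v : G → ℝ} (huv : u =ᵐ[μ] v)
    (s t : Set G) :
    ∫⁻ x in s, ∫⁻ ξ in t, ENNReal.ofReal ((u (x + ξ) - u x) ^ 2) ∂μ ∂μ =
      ∫⁻ x in s, ∫⁻ ξ in t, ENNReal.ofReal ((v (x + ξ) - v x) ^ 2) ∂μ ∂μ := by
  refine lintegral_congr_ae (ae_restrict_of_ae ?_)
  filter_upwards [huv] with x hx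
  refine lintegral_congr_ae (ae_restrict_of_ae ?_)
  filter_upwards [(measurePreserving_add_left μ x).quasiMeasurePreserving.ae_eq_comp huv]
    with ξ hξ
  simp only [Function.comp_apply] at hξ
  rw [hx, hξ]

section FiniteDimensional

variable {E : Type*} [NormedAddCommGroup E] [NormedSpace ℝ E] [FiniteDimensional ℝ E]

theorem infDist_frontier_le_infDist_compl {D : Set E} {x : E} (hx : x ∈ D) :
    infDist x (frontier D) ≤ infDist x Dᶜ := by
  rcases eq_or_ne D univ with rfl | hD
  · simp
  obtain ⟨y, hy, hxy⟩ := exists_mem_frontier_infDist_compl_eq_dist hx hD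
  exact hxy ▸ infDist_le_dist_of_mem hy

theorem add_notMem_innerParallelSet {D : Set E} {δ : ℝ} {y h : E} (hy : y ∉ D)
    (hh : ‖h‖ < δ) : y + h ∉ innerParallelSet D δ := by
  rintro ⟨hyh, hδ⟩
  have := (infDist_frontier_le_infDist_compl hyh).trans
    (infDist_le_dist_of_mem (mem_compl hy))
  rw [dist_self_add_left] at this
  linarith

theorem le_diam_of_mem_innerParallelSet [Nontrivial E] {D : Set E} {δ : ℝ} {x : E}
    (hD : Bornology.IsBounded D) (hx : x ∈ innerParallelSet D δ) : δ ≤ diam D := by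
  have hD_ne : D ≠ univ := fun h => NormedSpace.unbounded_univ ℝ E (h ▸ hD)
  obtain ⟨y, hy, -⟩ := exists_mem_frontier_infDist_compl_eq_dist hx.1 hD_ne
  calc δ ≤ infDist x (frontier D) := hx.2
    _ ≤ dist x y := infDist_le_dist_of_mem hy
    _ ≤ diam D := by
      rw [← diam_closure]
      exact dist_le_diam_of_mem hD.closure (subset_closure hx.1) hy.1

theorem setLIntegral_sq_sub_eq_lintegral [MeasurableSpace E] {μ : Measure E} {v : E → ℝ}
    {D : Set E} {δ : ℝ} (hvD : ∀ y ∉ innerParallelSet D δ, v y = 0) {h : E} (hh : ‖h‖ < δ) :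
    ∫⁻ y in D, ENNReal.ofReal ((v (y + h) - v y) ^ 2) ∂μ =
      ∫⁻ y, ENNReal.ofReal ((v (y + h) - v y) ^ 2) ∂μ := by
  refine setLIntegral_eq_of_support_subset fun y hy => by_contra fun hyD => hy ?_
  simp [hvD y fun hy' => hyD hy'.1, hvD (y + h) (add_notMem_innerParallelSet hyD hh)]

end FiniteDimensional

section Measure

variable {E : Type*} [NormedAddCommGroup E] [NormedSpace ℝ E] [MeasurableSpace E] [BorelSpace E]
  {μ : Measure E}

theorem setLIntegral_sq_le_of_forall_add_smul_eq_zero [μ.IsAddRightInvariant] {v : E → ℝ}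
    (hv : Measurable v) {D : Set E} (hD : MeasurableSet D) {h : E} {n : ℕ}
    (hvn : ∀ x ∈ D, v (x + (n : ℝ) • h) = 0) :
    ∫⁻ x in D, ENNReal.ofReal (v x ^ 2) ∂μ ≤
      n ^ 2 * ∫⁻ y, ENNReal.ofReal ((v (y + h) - v y) ^ 2) ∂μ := by
  set g : ℕ → E → ℝ≥0∞ := fun i x =>
    ENNReal.ofReal ((v (x + (i : ℝ) • h + h) - v (x + (i : ℝ) • h)) ^ 2)
  have hg (i : ℕ) : Measurable (g i) := by fun_prop
  have hchain : ∀ x ∈ D, ENNReal.ofReal (v x ^ 2) ≤ n * ∑ i ∈ Finset.range n, g i x := by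
    intro x hx
    have := sq_sub_le_mul_sum_sq_sub (fun i : ℕ => v (x + (i : ℝ) • h)) n
    simp only [hvn x hx, Nat.cast_zero, zero_smul, add_zero, Nat.cast_add, Nat.cast_one,
      add_smul, one_smul, ← add_assoc, zero_sub, neg_sq] at this
    rw [← ENNReal.ofReal_natCast, ← ENNReal.ofReal_sum_of_nonneg fun i _ => sq_nonneg _,
      ← ENNReal.ofReal_mul (Nat.cast_nonneg n)]
    exact ENNReal.ofReal_le_ofReal this
  have hshift (i : ℕ) :
      ∫⁻ x, g i x ∂μ = ∫⁻ y, ENNReal.ofReal ((v (y + h) - v y) ^ 2) ∂μ :=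
    lintegral_add_right_eq_self (fun y => ENNReal.ofReal ((v (y + h) - v y) ^ 2)) _
  calc ∫⁻ x in D, ENNReal.ofReal (v x ^ 2) ∂μ
      ≤ ∫⁻ x in D, n * ∑ i ∈ Finset.range n, g i x ∂μ := setLIntegral_mono' hD hchain
    _ ≤ n * ∑ i ∈ Finset.range n, ∫⁻ x, g i x ∂μ := by
      rw [lintegral_const_mul _ (Finset.measurable_sum _ fun i _ => hg i),
        lintegral_finsetSum _ fun i _ => hg i]
      gcongr
      exact Measure.restrict_le_self
    _ = n ^ 2 * ∫⁻ y, ENNReal.ofReal ((v (y + h) - v y) ^ 2) ∂μ := by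
      simp only [hshift, Finset.sum_const, Finset.card_range, nsmul_eq_mul, sq, mul_assoc]

variable [FiniteDimensional ℝ E] [Nontrivial E] [μ.IsAddHaarMeasure]

theorem setLIntegral_sq_mul_measure_ball_le {v : E → ℝ} (hv : Measurable v) {D : Set E}
    (hDm : MeasurableSet D) (hD : Bornology.IsBounded D) {ε δ : ℝ} (hε : 0 < ε) (hεδ : ε ≤ δ)
    (hvD : ∀ y ∉ innerParallelSet D δ, v y = 0) {n : ℕ} (hn : diam D < n * (ε / 2)) :
    (∫⁻ x in D, ENNReal.ofReal (v x ^ 2) ∂μ) * μ (ball 0 (ε / 4)) ≤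
      n ^ 2 * ∫⁻ x in D, ∫⁻ ξ in closedBall 0 ε, ENNReal.ofReal ((v (x + ξ) - v x) ^ 2) ∂μ ∂μ := by
  obtain ⟨c, hc⟩ := exists_norm_eq E (by positivity : (0 : ℝ) ≤ 3 * ε / 4)
  have hnorm : ∀ h ∈ ball c (ε / 4), ε / 2 < ‖h‖ ∧ ‖h‖ < ε := by
    intro h hh
    rw [mem_ball, dist_eq_norm] at hh
    constructor
    · linarith [norm_sub_norm_le c h, norm_sub_rev h c]
    · linarith [norm_le_norm_add_norm_sub' h c]
  have hescape : ∀ h ∈ ball c (ε / 4), ∀ x ∈ D, v (x + (n : ℝ) • h) = 0 := by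
    intro h hh x hx
    refine hvD _ fun hG => ?_
    have hdist := dist_le_diam_of_mem hD hx hG.1
    rw [dist_self_add_right, norm_smul, Real.norm_natCast] at hdist
    nlinarith [(hnorm h hh).1]
  calc (∫⁻ x in D, ENNReal.ofReal (v x ^ 2) ∂μ) * μ (ball 0 (ε / 4))
      = ∫⁻ _ in ball c (ε / 4), ∫⁻ x in D, ENNReal.ofReal (v x ^ 2) ∂μ ∂μ := by
        rw [setLIntegral_const, Measure.addHaar_ball_center μ c]
    _ ≤ ∫⁻ h in ball c (ε / 4), n ^ 2 * ∫⁻ y in D, ENNReal.ofReal ((v (y + h) - v y) ^ 2) ∂μ ∂μ :=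
        setLIntegral_mono' measurableSet_ball fun h hh =>
          (setLIntegral_sq_le_of_forall_add_smul_eq_zero hv hDm (hescape h hh)).trans_eq <| by
            rw [setLIntegral_sq_sub_eq_lintegral hvD ((hnorm h hh).2.trans_le hεδ)]
    _ ≤ ∫⁻ h in closedBall 0 ε, n ^ 2 * ∫⁻ y in D, ENNReal.ofReal ((v (y + h) - v y) ^ 2) ∂μ ∂μ :=
        lintegral_mono_set fun h hh => mem_closedBall_zero_iff.2 (hnorm h hh).2.le
    _ = n ^ 2 * ∫⁻ x in D, ∫⁻ ξ in closedBall 0 ε,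
          ENNReal.ofReal ((v (x + ξ) - v x) ^ 2) ∂μ ∂μ := by
        rw [lintegral_const_mul' _ _ (by simp), lintegral_lintegral_swap (by fun_prop)]

theorem setLIntegral_sq_le_of_diam_le {v : E → ℝ} (hv : Measurable v) {D : Set E}
    (hDm : MeasurableSet D) (hD : Bornology.IsBounded D) {R ε δ : ℝ} (hdiam : diam D ≤ R)
    (hε : 0 < ε) (hεδ : ε ≤ δ) (hvD : ∀ y ∉ innerParallelSet D δ, v y = 0) :
    ∫⁻ x in D, ENNReal.ofReal (v x ^ 2) ∂μ ≤
      ENNReal.ofReal (9 * R ^ 2 * 4 ^ Module.finrank ℝ E / (μ (ball 0 1)).toReal /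
          ε ^ (Module.finrank ℝ E + 2)) *
        ∫⁻ x in D, ∫⁻ ξ in closedBall 0 ε, ENNReal.ofReal ((v (x + ξ) - v x) ^ 2) ∂μ ∂μ := by
  rcases (innerParallelSet D δ).eq_empty_or_nonempty with hG | ⟨x, hx⟩
  · have hv0 (y : E) : v y = 0 := hvD y (by simp [hG])
    simp [hv0]
  have hεR : ε ≤ R := hεδ.trans ((le_diam_of_mem_innerParallelSet hD hx).trans hdiam)
  set d := Module.finrank ℝ E
  set b := (μ (ball 0 1)).toReal
  have hb : 0 < b := ENNReal.toReal_pos (measure_ball_pos μ 0 one_pos).ne' measure_ball_lt_top.ne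
  set n := ⌊2 * R / ε⌋₊ + 1
  have hn : diam D < n * (ε / 2) := by
    have := Nat.lt_floor_add_one (2 * R / ε)
    rw [div_lt_iff₀ hε] at this
    push_cast [n]
    linarith
  have hn' : (n : ℝ) ≤ 3 * R / ε := by
    have := Nat.floor_le (div_nonneg (by linarith) hε.le : 0 ≤ 2 * R / ε)
    have : 1 ≤ R / ε := (one_le_div hε).2 hεR
    push_cast [n]
    linarith [show 3 * R / ε = 2 * R / ε + R / ε by ring]
  have hball : μ (ball 0 (ε / 4)) = ENNReal.ofReal ((ε / 4) ^ d * b) := by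
    rw [Measure.addHaar_ball μ 0 (by positivity), ENNReal.ofReal_mul (by positivity),
      ENNReal.ofReal_toReal measure_ball_lt_top.ne]
  have hconst : 9 * R ^ 2 * 4 ^ d / b / ε ^ (d + 2) * ((ε / 4) ^ d * b) = (3 * R / ε) ^ 2 := by
    rw [div_pow ε]
    field_simp
    ring
  rw [← ENNReal.mul_le_mul_iff_left (measure_ball_pos μ (0 : E) (by positivity : 0 < ε / 4)).ne'
    measure_ball_lt_top.ne]
  refine (setLIntegral_sq_mul_measure_ball_le hv hDm hD hε hεδ hvD hn).trans ?_
  rw [mul_right_comm, hball, ← ENNReal.ofReal_mul (by positivity), hconst,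
    ← ENNReal.ofReal_natCast, ← ENNReal.ofReal_pow (Nat.cast_nonneg n)]
  gcongr

end Measure

/-- Poincaré inequality with zero boundary data for convolution energies:
there is a constant `C` depending only on the dimension `d` and (a bound `R` on) the
diameter of `D`, such that for every bounded open `D` with `diam D ≤ R`, every `ε > 0`,
and every `u ∈ L²(ℝ^d)` vanishing a.e. outside `D` and a.e. on the `2ε`-neighbourhood of
`∂D` inside `D`:
`∫_D u² ≤ C ε^{−(d+2)} ∫_D ∫_{|ξ|≤ε} (u(x+ξ)−u(x))² dξ dx`. -/
theorem stmt_8 (d : ℕ) (hd : 1 ≤ d) (R : ℝ) (hR : 0 < R) :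
    ∃ C : ℝ, 0 < C ∧
      ∀ D : Set (EuclideanSpace ℝ (Fin d)), IsOpen D → Bornology.IsBounded D →
        Metric.diam D ≤ R →
        ∀ ε : ℝ, 0 < ε →
          ∀ u : EuclideanSpace ℝ (Fin d) → ℝ, MemLp u 2 (volume : Measure (EuclideanSpace ℝ (Fin d))) →
            (∀ᵐ x : EuclideanSpace ℝ (Fin d), x ∉ D → u x = 0) →
            (∀ᵐ x : EuclideanSpace ℝ (Fin d), x ∈ D → infDist x (frontier D) < 2 * ε → u x = 0) →
            (∫⁻ x in D, ENNReal.ofReal ((u x) ^ 2)) ≤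
              ENNReal.ofReal (C / ε ^ (d + 2)) *
                ∫⁻ x in D, ∫⁻ ξ in closedBall (0 : EuclideanSpace ℝ (Fin d)) ε,
                  ENNReal.ofReal ((u (x + ξ) - u x) ^ 2) := by
  have : Nonempty (Fin d) := ⟨⟨0, hd⟩⟩
  have hb : 0 < (volume (ball (0 : EuclideanSpace ℝ (Fin d)) 1)).toReal :=
    ENNReal.toReal_pos (measure_ball_pos _ 0 one_pos).ne' measure_ball_lt_top.ne
  refine ⟨9 * R ^ 2 * 4 ^ d / (volume (ball (0 : EuclideanSpace ℝ (Fin d)) 1)).toReal,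
    by positivity, fun D hDo hDb hdiam ε hε u hu hout hcollar => ?_⟩
  obtain ⟨v, hv, huv, hvD⟩ := hu.aestronglyMeasurable.exists_measurable_ae_eq_of_ae_eq_zero_off
    (hDo.measurableSet.innerParallelSet (2 * ε)) <| by
      filter_upwards [hout, hcollar] with x hx hx' hxG
      by_cases hxD : x ∈ D
      · exact hx' hxD (not_le.1 fun h => hxG ⟨hxD, h⟩)
      · exact hx hxD
  rw [lintegral_congr_ae (ae_restrict_of_ae (huv.mono fun x hx => by rw [hx])),
    setLIntegral_setLIntegral_sq_sub_congr_ae huv]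
  simpa [finrank_euclideanSpace_fin] using
    setLIntegral_sq_le_of_diam_le hv hDo.measurableSet hDb hdiam hε (by linarith) hvD
end

section
/- Let ε > 0 and let u ∈ L²(ℝ) satisfy u = 0 almost everywhere on ℝ ∖ (2ε, 1−2ε). Then ∫_0^1 u(x)² dx ≤ (2/ε³) ∫_{−∞}^{+∞} ∫_{x−2ε}^{x+2ε} (u(y) − u(x))² dy dx. -/
open MeasureTheory
open scoped ENNReal

private lemma chain_sq (ε : ℝ) (hε : 0 < ε) (u : ℝ → ℝ) (N : ℕ)
    (hN : 1 ≤ (N : ℝ) * ε)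
    (hz : ∀ x, x ∉ Set.Ioo (2 * ε) (1 - 2 * ε) → u x = 0)
    {x h : ℝ} (hx : x ∈ Set.Ioo (0 : ℝ) 1) (hh : h ∈ Set.Ioo ε (2 * ε)) :
    (u x) ^ 2 ≤ (N : ℝ) * ∑ k ∈ Finset.range N,
      (u (x - (k : ℝ) * h) - u (x - ((k : ℝ) + 1) * h)) ^ 2 := by
  have hNc : (0 : ℝ) ≤ (N : ℝ) := Nat.cast_nonneg N
  have hNh : (1 : ℝ) ≤ (N : ℝ) * h := by nlinarith [hh.1]
  have h0 : u (x - (N : ℝ) * h) = 0 := by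
    apply hz
    intro hmem
    have h1 := hmem.1
    have hx2 := hx.2
    linarith
  have htel : ∑ k ∈ Finset.range N,
      (u (x - (k : ℝ) * h) - u (x - ((k : ℝ) + 1) * h)) = u x := by
    have := Finset.sum_range_sub' (fun k : ℕ => u (x - (k : ℝ) * h)) N
    simp only [Nat.cast_zero, zero_mul, sub_zero, Nat.cast_add, Nat.cast_one] at this
    calc ∑ k ∈ Finset.range N, (u (x - (k : ℝ) * h) - u (x - ((k : ℝ) + 1) * h))
        = u x - u (x - (N : ℝ) * h) := this
      _ = u x := by rw [h0, sub_zero]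
  calc (u x) ^ 2
      = (∑ k ∈ Finset.range N,
          (u (x - (k : ℝ) * h) - u (x - ((k : ℝ) + 1) * h))) ^ 2 := by rw [htel]
    _ ≤ (N : ℝ) * ∑ k ∈ Finset.range N,
          (u (x - (k : ℝ) * h) - u (x - ((k : ℝ) + 1) * h)) ^ 2 := by
        simpa using sq_sum_le_card_mul_sum_sq
          (s := Finset.range N)
          (f := fun k : ℕ => u (x - (k : ℝ) * h) - u (x - ((k : ℝ) + 1) * h))

private lemma main_ineq (ε : ℝ) (hε : 0 < ε) (hε4 : ε < 1 / 4) (u : ℝ → ℝ)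
    (hum : Measurable u)
    (hz : ∀ x, x ∉ Set.Ioo (2 * ε) (1 - 2 * ε) → u x = 0) :
    ∫⁻ x in Set.Ioo (0 : ℝ) 1, ENNReal.ofReal ((u x) ^ 2) ≤
      ENNReal.ofReal (2 / ε ^ 3) *
        ∫⁻ x : ℝ, ∫⁻ y in Set.Ioo (x - 2 * ε) (x + 2 * ε),
          ENNReal.ofReal ((u y - u x) ^ 2) := by
  set N : ℕ := ⌈1 / ε⌉₊ with hNdef
  have hεinv : (0 : ℝ) ≤ 1 / ε := by positivity
  have hN1 : 1 ≤ (N : ℝ) * ε := by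
    have := Nat.le_ceil (1 / ε)
    calc (1 : ℝ) = (1 / ε) * ε := by field_simp
      _ ≤ (N : ℝ) * ε := by
        apply mul_le_mul_of_nonneg_right _ hε.le
        exact this
  have hN2 : (N : ℝ) < 1 / ε + 1 := Nat.ceil_lt_add_one hεinv
  -- measurability helpers
  have hmf : Measurable fun p : ℝ × ℝ =>
      ENNReal.ofReal ((u p.2 - u (p.2 - p.1)) ^ 2) := by
    apply Measurable.ennreal_ofReal
    exact ((hum.comp measurable_snd).sub
      (hum.comp (measurable_snd.sub measurable_fst))).pow_const 2
  set J : ℝ → ℝ≥0∞ := fun h => ∫⁻ z : ℝ, ENNReal.ofReal ((u z - u (z - h)) ^ 2)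
    with hJdef
  have hJm : Measurable J := hmf.lintegral_prod_right'
  set L : ℝ≥0∞ := ∫⁻ x in Set.Ioo (0 : ℝ) 1, ENNReal.ofReal ((u x) ^ 2) with hLdef
  set I : ℝ≥0∞ := ∫⁻ x : ℝ, ∫⁻ y in Set.Ioo (x - 2 * ε) (x + 2 * ε),
      ENNReal.ofReal ((u y - u x) ^ 2) with hIdef
  -- Step A : for each h in (ε, 2ε), L ≤ N^2 * J h
  have stepA : ∀ h ∈ Set.Ioo ε (2 * ε), L ≤ (N : ℝ≥0∞) ^ 2 * J h := by
    intro h hh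
    have hmk : ∀ k : ℕ, Measurable fun x : ℝ =>
        ENNReal.ofReal ((u (x - (k : ℝ) * h) - u (x - ((k : ℝ) + 1) * h)) ^ 2) := by
      intro k
      apply Measurable.ennreal_ofReal
      exact ((hum.comp (measurable_id.sub_const ((k : ℝ) * h))).sub
        (hum.comp (measurable_id.sub_const (((k : ℝ) + 1) * h)))).pow_const 2
    have step1 : L ≤ ∫⁻ x in Set.Ioo (0 : ℝ) 1,
        (N : ℝ≥0∞) * ∑ k ∈ Finset.range N,
          ENNReal.ofReal ((u (x - (k : ℝ) * h) - u (x - ((k : ℝ) + 1) * h)) ^ 2) := by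
      apply setLIntegral_mono
      · exact Measurable.const_mul (Finset.measurable_sum _ fun k _ => hmk k) _
      · intro x hx
        calc ENNReal.ofReal ((u x) ^ 2)
            ≤ ENNReal.ofReal ((N : ℝ) * ∑ k ∈ Finset.range N,
                (u (x - (k : ℝ) * h) - u (x - ((k : ℝ) + 1) * h)) ^ 2) :=
              ENNReal.ofReal_le_ofReal (chain_sq ε hε u N hN1 hz hx hh)
          _ = (N : ℝ≥0∞) * ∑ k ∈ Finset.range N,
                ENNReal.ofReal ((u (x - (k : ℝ) * h) - u (x - ((k : ℝ) + 1) * h)) ^ 2) := by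
              rw [ENNReal.ofReal_mul (Nat.cast_nonneg N), ENNReal.ofReal_natCast,
                ENNReal.ofReal_sum_of_nonneg (fun _ _ => sq_nonneg _)]
    have step2 : ∀ k : ℕ, (∫⁻ x in Set.Ioo (0 : ℝ) 1,
        ENNReal.ofReal ((u (x - (k : ℝ) * h) - u (x - ((k : ℝ) + 1) * h)) ^ 2)) ≤ J h := by
      intro k
      calc (∫⁻ x in Set.Ioo (0 : ℝ) 1,
          ENNReal.ofReal ((u (x - (k : ℝ) * h) - u (x - ((k : ℝ) + 1) * h)) ^ 2))
          ≤ ∫⁻ x : ℝ,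
            ENNReal.ofReal ((u (x - (k : ℝ) * h) - u (x - ((k : ℝ) + 1) * h)) ^ 2) :=
            setLIntegral_le_lintegral _ _
        _ = ∫⁻ x : ℝ, (fun z : ℝ => ENNReal.ofReal ((u z - u (z - h)) ^ 2))
              (x + -((k : ℝ) * h)) := by
            apply lintegral_congr
            intro x
            simp only
            rw [show x + -((k : ℝ) * h) = x - (k : ℝ) * h by ring,
              show x - (k : ℝ) * h - h = x - ((k : ℝ) + 1) * h by ring]
        _ = J h := by
            exact (measurePreserving_add_right (volume : Measure ℝ)
              (-((k : ℝ) * h))).lintegral_comp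
              (by
                apply Measurable.ennreal_ofReal
                exact (hum.sub (hum.comp (measurable_id.sub_const h))).pow_const 2)
    calc L ≤ ∫⁻ x in Set.Ioo (0 : ℝ) 1,
          (N : ℝ≥0∞) * ∑ k ∈ Finset.range N,
            ENNReal.ofReal ((u (x - (k : ℝ) * h) - u (x - ((k : ℝ) + 1) * h)) ^ 2) := step1
      _ = (N : ℝ≥0∞) * ∑ k ∈ Finset.range N, ∫⁻ x in Set.Ioo (0 : ℝ) 1,
            ENNReal.ofReal ((u (x - (k : ℝ) * h) - u (x - ((k : ℝ) + 1) * h)) ^ 2) := by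
          rw [lintegral_const_mul _ (Finset.measurable_sum _ fun k _ => hmk k),
            lintegral_finset_sum _ fun k _ => hmk k]
      _ ≤ (N : ℝ≥0∞) * ∑ _k ∈ Finset.range N, J h := by
          gcongr with k hk
          exact step2 k
      _ = (N : ℝ≥0∞) ^ 2 * J h := by
          rw [Finset.sum_const, Finset.card_range]
          rw [nsmul_eq_mul]
          ring
  -- Step B : (ofReal ε) * L ≤ N^2 * ∫⁻ h in Ioo ε 2ε, J h
  have stepB : ENNReal.ofReal ε * L ≤
      (N : ℝ≥0∞) ^ 2 * ∫⁻ h in Set.Ioo ε (2 * ε), J h := by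
    have hvol : (volume : Measure ℝ) (Set.Ioo ε (2 * ε)) = ENNReal.ofReal ε := by
      rw [Real.volume_Ioo]
      congr 1
      ring
    calc ENNReal.ofReal ε * L = ∫⁻ _h in Set.Ioo ε (2 * ε), L := by
          rw [setLIntegral_const, hvol, mul_comm]
      _ ≤ ∫⁻ h in Set.Ioo ε (2 * ε), (N : ℝ≥0∞) ^ 2 * J h := by
          apply setLIntegral_mono (hJm.const_mul _)
          intro h hh
          exact stepA h hh
      _ = (N : ℝ≥0∞) ^ 2 * ∫⁻ h in Set.Ioo ε (2 * ε), J h := by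
          rw [lintegral_const_mul _ hJm]
  -- Step C : ∫⁻ h in Ioo ε 2ε, J h ≤ I
  have stepC : (∫⁻ h in Set.Ioo ε (2 * ε), J h) ≤ I := by
    have hswap : (∫⁻ h in Set.Ioo ε (2 * ε), J h) =
        ∫⁻ z : ℝ, ∫⁻ h in Set.Ioo ε (2 * ε),
          ENNReal.ofReal ((u z - u (z - h)) ^ 2) := by
      exact lintegral_lintegral_swap hmf.aemeasurable
    rw [hswap]
    apply lintegral_mono
    intro z
    beta_reduce
    have hpre : (fun h : ℝ => z - h) ⁻¹' Set.Ioo (z - 2 * ε) (z - ε) =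
        Set.Ioo ε (2 * ε) := by
      ext h
      simp only [Set.mem_preimage, Set.mem_Ioo]
      constructor
      · rintro ⟨a, b⟩; constructor <;> linarith
      · rintro ⟨a, b⟩; constructor <;> linarith
    have hψm : Measurable fun y : ℝ => ENNReal.ofReal ((u z - u y) ^ 2) := by
      apply Measurable.ennreal_ofReal
      exact ((measurable_const.sub hum)).pow_const 2
    have hsub : (∫⁻ h in Set.Ioo ε (2 * ε),
        ENNReal.ofReal ((u z - u (z - h)) ^ 2)) =
        ∫⁻ y in Set.Ioo (z - 2 * ε) (z - ε), ENNReal.ofReal ((u z - u y) ^ 2) := by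
      have := (Measure.measurePreserving_sub_left (volume : Measure ℝ)
        z).setLIntegral_comp_preimage_emb
        (MeasurableEquiv.subLeft z).measurableEmbedding
        (fun y : ℝ => ENNReal.ofReal ((u z - u y) ^ 2))
        (Set.Ioo (z - 2 * ε) (z - ε))
      rw [hpre] at this
      exact this
    rw [hsub]
    calc (∫⁻ y in Set.Ioo (z - 2 * ε) (z - ε), ENNReal.ofReal ((u z - u y) ^ 2))
        ≤ ∫⁻ y in Set.Ioo (z - 2 * ε) (z + 2 * ε),
            ENNReal.ofReal ((u z - u y) ^ 2) := by
          apply lintegral_mono_set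
          apply Set.Ioo_subset_Ioo le_rfl
          linarith
      _ = ∫⁻ y in Set.Ioo (z - 2 * ε) (z + 2 * ε),
            ENNReal.ofReal ((u y - u z) ^ 2) := by
          apply lintegral_congr
          intro y
          rw [show (u z - u y) ^ 2 = (u y - u z) ^ 2 by ring]
  -- arithmetic
  have hNsq : (N : ℝ≥0∞) ^ 2 ≤ ENNReal.ofReal (2 / ε ^ 3) * ENNReal.ofReal ε := by
    rw [← ENNReal.ofReal_mul (by positivity)]
    have h1 : (2 : ℝ) / ε ^ 3 * ε = 2 / ε ^ 2 := by
      field_simp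
    rw [h1, show ((N : ℝ≥0∞)) ^ 2 = ENNReal.ofReal ((N : ℝ) ^ 2) by
      rw [ENNReal.ofReal_pow (Nat.cast_nonneg N), ENNReal.ofReal_natCast]]
    apply ENNReal.ofReal_le_ofReal
    have hN2' : (N : ℝ) * ε ≤ 1 + ε := by
      have := mul_le_mul_of_nonneg_right hN2.le hε.le
      calc (N : ℝ) * ε ≤ (1 / ε + 1) * ε := this
        _ = 1 + ε := by field_simp
    have key : (N : ℝ) ^ 2 * ε ^ 2 ≤ 2 := by
      nlinarith [Nat.cast_nonneg (α := ℝ) N, sq_nonneg ((N : ℝ) * ε)]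
    rw [le_div_iff₀ (by positivity)]
    exact key
  -- combine
  have hmain : ENNReal.ofReal ε * L ≤ ENNReal.ofReal ε * (ENNReal.ofReal (2 / ε ^ 3) * I) := by
    calc ENNReal.ofReal ε * L
        ≤ (N : ℝ≥0∞) ^ 2 * ∫⁻ h in Set.Ioo ε (2 * ε), J h := stepB
      _ ≤ ((ENNReal.ofReal (2 / ε ^ 3)) * ENNReal.ofReal ε) * I := by
          exact mul_le_mul' hNsq stepC
      _ = ENNReal.ofReal ε * (ENNReal.ofReal (2 / ε ^ 3) * I) := by ring
  have hε0 : ENNReal.ofReal ε ≠ 0 := by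
    simp [ENNReal.ofReal_eq_zero, not_le, hε]
  exact (ENNReal.mul_le_mul_iff_right hε0 ENNReal.ofReal_ne_top).mp hmain

/-- One-dimensional Poincaré inequality with zero boundary data:
if `u ∈ L²(ℝ)` vanishes a.e. outside `(2ε, 1-2ε)`, then
`∫_0^1 u² ≤ (2/ε³) ∫_ℝ ∫_{x-2ε}^{x+2ε} (u(y)-u(x))² dy dx`. -/
theorem stmt_9 (ε : ℝ) (hε : 0 < ε) (u : ℝ → ℝ)
    (hu : MemLp u 2 (volume : Measure ℝ))
    (hzero : ∀ᵐ x : ℝ, x ∉ Set.Ioo (2 * ε) (1 - 2 * ε) → u x = 0) :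
    ∫⁻ x in Set.Ioo (0 : ℝ) 1, ENNReal.ofReal ((u x) ^ 2) ≤
      ENNReal.ofReal (2 / ε ^ 3) *
        ∫⁻ x : ℝ, ∫⁻ y in Set.Ioo (x - 2 * ε) (x + 2 * ε),
          ENNReal.ofReal ((u y - u x) ^ 2) := by
  by_cases hε4 : ε < 1 / 4
  · -- replace u by a measurable representative vanishing outside the interval
    set s : Set ℝ := Set.Ioo (2 * ε) (1 - 2 * ε) with hs
    set g : ℝ → ℝ := s.indicator (hu.1.mk u) with hg
    have hgm : Measurable g :=
      (hu.1.stronglyMeasurable_mk.measurable).indicator measurableSet_Ioo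
    have hgz : ∀ x, x ∉ s → g x = 0 := fun x hx => Set.indicator_of_notMem hx _
    have hug : u =ᵐ[volume] g := by
      filter_upwards [hu.1.ae_eq_mk, hzero] with x h1 h2
      by_cases hx : x ∈ s
      · rw [hg]; simp only [Set.indicator_of_mem hx]; exact h1
      · rw [hg]; simp only [Set.indicator_of_notMem hx]; exact h2 hx
    have hL : (∫⁻ x in Set.Ioo (0 : ℝ) 1, ENNReal.ofReal ((u x) ^ 2)) =
        ∫⁻ x in Set.Ioo (0 : ℝ) 1, ENNReal.ofReal ((g x) ^ 2) := by
      apply lintegral_congr_ae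
      exact ae_restrict_of_ae (hug.mono fun x hx => by simp only [hx])
    have hR : (∫⁻ x : ℝ, ∫⁻ y in Set.Ioo (x - 2 * ε) (x + 2 * ε),
        ENNReal.ofReal ((u y - u x) ^ 2)) =
        ∫⁻ x : ℝ, ∫⁻ y in Set.Ioo (x - 2 * ε) (x + 2 * ε),
          ENNReal.ofReal ((g y - g x) ^ 2) := by
      apply lintegral_congr_ae
      filter_upwards [hug] with x hx
      apply lintegral_congr_ae
      exact ae_restrict_of_ae (hug.mono fun y hy => by simp only [hx, hy])
    rw [hL, hR]
    exact main_ineq ε hε hε4 g hgm hgz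
  · -- the interval (2ε, 1-2ε) is empty, so u = 0 a.e.
    push_neg at hε4
    have hemp : Set.Ioo (2 * ε) (1 - 2 * ε) = ∅ := by
      apply Set.Ioo_eq_empty
      intro hlt
      linarith
    have hu0 : ∀ᵐ x : ℝ, u x = 0 := by
      filter_upwards [hzero] with x hx
      exact hx (by rw [hemp]; exact Set.notMem_empty x)
    have hL0 : (∫⁻ x in Set.Ioo (0 : ℝ) 1, ENNReal.ofReal ((u x) ^ 2)) = 0 := by
      have : (∫⁻ x in Set.Ioo (0 : ℝ) 1, ENNReal.ofReal ((u x) ^ 2)) =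
          ∫⁻ _x in Set.Ioo (0 : ℝ) 1, 0 := by
        apply lintegral_congr_ae
        exact ae_restrict_of_ae (hu0.mono fun x hx => by simp [hx])
      rw [this, lintegral_zero]
    rw [hL0]
    exact zero_le
end

section
/- Let u ∈ L²(ℝ), ε > 0 and a ∈ ℝ. Then ∫_{a−ε}^{a+ε} ∫_{x−2ε}^{x+2ε} (u(y) − u(x))² dy dx ≥ ε ( √(∫_{a−ε}^{a} u(x)² dx) − √(∫_{a}^{a+ε} u(y)² dy) )². -/
open MeasureTheory

/-- Cauchy–Schwarz on a set of measure `c`. -/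
lemma cs_aux {f : ℝ → ℝ} {s : Set ℝ} {c : ℝ} (hc : 0 < c)
    (hm : (volume : Measure ℝ) s = ENNReal.ofReal c)
    (hf : IntegrableOn f s) (hf2 : IntegrableOn (fun x => f x ^ 2) s) :
    (∫ x in s, f x) ^ 2 ≤ c * ∫ x in s, f x ^ 2 := by
  set S := ∫ x in s, f x with hS
  set A := ∫ x in s, f x ^ 2 with hA
  have key : 0 ≤ ∫ x in s, (c * f x - S) ^ 2 := by
    exact integral_nonneg fun x => sq_nonneg _
  have hexp : (fun x => (c * f x - S) ^ 2)
      = fun x => (c ^ 2 * f x ^ 2 - (2 * c * S) * f x) + S ^ 2 := by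
    funext x; ring
  have hfin : (volume : Measure ℝ) s < ⊤ := by rw [hm]; exact ENNReal.ofReal_lt_top
  have h1 : Integrable (fun x => c ^ 2 * f x ^ 2 - (2 * c * S) * f x)
      ((volume : Measure ℝ).restrict s) := (hf2.const_mul _).sub (hf.const_mul _)
  have h2 : Integrable (fun _ : ℝ => S ^ 2) ((volume : Measure ℝ).restrict s) :=
    integrableOn_const hfin.ne
  rw [hexp, integral_add h1 h2,
    integral_sub (hf2.const_mul _) (hf.const_mul _), integral_const_mul, integral_const_mul,
    setIntegral_const, measureReal_def, hm, ENNReal.toReal_ofReal hc.le, smul_eq_mul] at key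
  nlinarith [key, hc, sq_nonneg S]

/-- Expansion of `∫ (f y - r)^2` over a set of measure `c`. -/
lemma expand_aux {f : ℝ → ℝ} {t : Set ℝ} {c r : ℝ} (hc : 0 ≤ c)
    (hm : (volume : Measure ℝ) t = ENNReal.ofReal c)
    (hf : IntegrableOn f t) (hf2 : IntegrableOn (fun y => f y ^ 2) t) :
    ∫ y in t, (f y - r) ^ 2
      = (∫ y in t, f y ^ 2) - 2 * r * (∫ y in t, f y) + c * r ^ 2 := by
  have hexp : (fun y => (f y - r) ^ 2)
      = fun y => (f y ^ 2 - (2 * r) * f y) + r ^ 2 := by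
    funext y; ring
  have hfin : (volume : Measure ℝ) t < ⊤ := by rw [hm]; exact ENNReal.ofReal_lt_top
  have h1 : Integrable (fun y => f y ^ 2 - (2 * r) * f y)
      ((volume : Measure ℝ).restrict t) := hf2.sub (hf.const_mul _)
  have h2 : Integrable (fun _ : ℝ => r ^ 2) ((volume : Measure ℝ).restrict t) :=
    integrableOn_const hfin.ne
  rw [hexp, integral_add h1 h2,
    integral_sub hf2 (hf.const_mul _), integral_const_mul, setIntegral_const, measureReal_def, hm,
    ENNReal.toReal_ofReal hc, smul_eq_mul]
  try ring

/-- For `u ∈ L²(ℝ)`, `ε > 0` and `a ∈ ℝ`, the local double-difference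
energy on the window `(a-ε, a+ε)` dominates
`ε (√(∫_{a-ε}^a u²) − √(∫_a^{a+ε} u²))²`. -/
theorem stmt_10 (u : ℝ → ℝ) (hu : MemLp u 2 (volume : Measure ℝ))
    (ε : ℝ) (hε : 0 < ε) (a : ℝ) :
    ε * (Real.sqrt (∫ x in Set.Ioo (a - ε) a, (u x) ^ 2) -
          Real.sqrt (∫ y in Set.Ioo a (a + ε), (u y) ^ 2)) ^ 2 ≤
      ∫ x in Set.Ioo (a - ε) (a + ε),
        ∫ y in Set.Ioo (x - 2 * ε) (x + 2 * ε), (u y - u x) ^ 2 := by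
  -- basic integrability facts
  have hsq : Integrable (fun x => u x ^ 2) (volume : Measure ℝ) := hu.integrable_sq
  have huFin : ∀ s : Set ℝ, volume s < ⊤ → IntegrableOn u s := by
    intro s hs
    haveI : IsFiniteMeasure ((volume : Measure ℝ).restrict s) :=
      ⟨by simpa [Measure.restrict_apply_univ] using hs⟩
    exact (hu.restrict s).integrable one_le_two
  have huIoo : ∀ c d : ℝ, IntegrableOn u (Set.Ioo c d) := fun c d =>
    huFin _ measure_Ioo_lt_top
  have hInt2 : ∀ (r c d : ℝ), IntegrableOn (fun y => (u y - r) ^ 2) (Set.Ioo c d) := by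
    intro r c d
    have hexp : (fun y => (u y - r) ^ 2)
        = fun y => (u y ^ 2 - (2 * r) * u y) + r ^ 2 := by funext y; ring
    rw [hexp]
    exact ((hsq.integrableOn.sub ((huIoo c d).const_mul _)).add
      (integrableOn_const measure_Ioo_lt_top.ne))
  set I := Set.Ioo (a - ε) a with hI
  set J := Set.Ioo a (a + ε) with hJ
  set K := Set.Ioo (a - ε) (a + ε) with hK
  have hvolI : (volume : Measure ℝ) I = ENNReal.ofReal ε := by
    rw [hI, Real.volume_Ioo]; norm_num
  have hvolJ : (volume : Measure ℝ) J = ENNReal.ofReal ε := by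
    rw [hJ, Real.volume_Ioo]; norm_num
  set A := ∫ x in I, u x ^ 2 with hA
  set B := ∫ y in J, u y ^ 2 with hB
  set SI := ∫ x in I, u x with hSI
  set SJ := ∫ y in J, u y with hSJ
  have hA0 : 0 ≤ A := integral_nonneg fun x => sq_nonneg _
  have hB0 : 0 ≤ B := integral_nonneg fun x => sq_nonneg _
  have hcsI : SI ^ 2 ≤ ε * A := cs_aux hε hvolI (huIoo _ _) hsq.integrableOn
  have hcsJ : SJ ^ 2 ≤ ε * B := cs_aux hε hvolJ (huIoo _ _) hsq.integrableOn
  -- the inner integral restricted to J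
  set g : ℝ → ℝ := fun x => ∫ y in J, (u y - u x) ^ 2 with hg
  have hgexp : ∀ x, g x = B - 2 * u x * SJ + ε * u x ^ 2 := by
    intro x
    rw [hg]
    simpa using expand_aux hε.le hvolJ (huIoo _ _) hsq.integrableOn (r := u x)
  -- the full inner integral
  set G : ℝ → ℝ := fun x => ∫ y in Set.Ioo (x - 2 * ε) (x + 2 * ε), (u y - u x) ^ 2 with hG
  have hvolW : ∀ x : ℝ, (volume : Measure ℝ) (Set.Ioo (x - 2 * ε) (x + 2 * ε))
      = ENNReal.ofReal (4 * ε) := by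
    intro x; rw [Real.volume_Ioo]; congr 1; ring
  have hGexp : ∀ x, G x =
      (∫ y in Set.Ioo (x - 2 * ε) (x + 2 * ε), u y ^ 2)
        - 2 * u x * (∫ y in Set.Ioo (x - 2 * ε) (x + 2 * ε), u y)
        + (4 * ε) * u x ^ 2 := by
    intro x
    simpa using expand_aux (by positivity : (0:ℝ) ≤ 4 * ε) (hvolW x)
      (huIoo _ _) hsq.integrableOn (r := u x)
  -- continuity of the moving-window integrals
  have huII : ∀ c d : ℝ, IntervalIntegrable u volume c d := fun c d =>
    ⟨huFin _ measure_Ioc_lt_top, huFin _ measure_Ioc_lt_top⟩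
  set P : ℝ → ℝ := fun t => ∫ s in (0:ℝ)..t, u s ^ 2 with hP
  set Q : ℝ → ℝ := fun t => ∫ s in (0:ℝ)..t, u s with hQ
  have hPcont : Continuous P := hsq.continuous_primitive 0
  have hQcont : Continuous Q := intervalIntegral.continuous_primitive huII 0
  have hFeq : ∀ x : ℝ, (∫ y in Set.Ioo (x - 2 * ε) (x + 2 * ε), u y ^ 2)
      = P (x + 2 * ε) - P (x - 2 * ε) := by
    intro x
    rw [hP]
    have h1 := intervalIntegral.integral_interval_sub_left
      (f := fun s => u s ^ 2) (μ := volume) (a := 0) (b := x + 2 * ε) (c := x - 2 * ε)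
      hsq.intervalIntegrable hsq.intervalIntegrable
    rw [h1, intervalIntegral.integral_of_le (by linarith), integral_Ioc_eq_integral_Ioo]
  have hGeq : ∀ x : ℝ, (∫ y in Set.Ioo (x - 2 * ε) (x + 2 * ε), u y)
      = Q (x + 2 * ε) - Q (x - 2 * ε) := by
    intro x
    rw [hQ]
    have h1 := intervalIntegral.integral_interval_sub_left
      (f := u) (μ := volume) (a := 0) (b := x + 2 * ε) (c := x - 2 * ε)
      (huII _ _) (huII _ _)
    rw [h1, intervalIntegral.integral_of_le (by linarith), integral_Ioc_eq_integral_Ioo]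
  -- integrability of G on K
  have hT0 : 0 ≤ ∫ x : ℝ, u x ^ 2 := integral_nonneg fun x => sq_nonneg _
  set T := ∫ x : ℝ, u x ^ 2 with hT
  have hwinT : ∀ x : ℝ, (∫ y in Set.Ioo (x - 2 * ε) (x + 2 * ε), u y ^ 2) ≤ T := by
    intro x
    exact setIntegral_le_integral hsq (Filter.Eventually.of_forall fun y => sq_nonneg _)
  have hwin0 : ∀ x : ℝ, 0 ≤ ∫ y in Set.Ioo (x - 2 * ε) (x + 2 * ε), u y ^ 2 :=
    fun x => integral_nonneg fun y => sq_nonneg _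
  have hQbdd : ∀ x : ℝ, |∫ y in Set.Ioo (x - 2 * ε) (x + 2 * ε), u y|
      ≤ Real.sqrt (4 * ε * T) := by
    intro x
    have h2 : (∫ y in Set.Ioo (x - 2 * ε) (x + 2 * ε), u y) ^ 2
        ≤ (4 * ε) * ∫ y in Set.Ioo (x - 2 * ε) (x + 2 * ε), u y ^ 2 :=
      cs_aux (by positivity) (hvolW x) (huIoo _ _) hsq.integrableOn
    have h3 : (∫ y in Set.Ioo (x - 2 * ε) (x + 2 * ε), u y) ^ 2 ≤ 4 * ε * T := by
      have := mul_le_mul_of_nonneg_left (hwinT x) (by positivity : (0:ℝ) ≤ 4 * ε)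
      linarith
    calc |∫ y in Set.Ioo (x - 2 * ε) (x + 2 * ε), u y|
        = Real.sqrt ((∫ y in Set.Ioo (x - 2 * ε) (x + 2 * ε), u y) ^ 2) :=
          (Real.sqrt_sq_eq_abs _).symm
      _ ≤ Real.sqrt (4 * ε * T) := Real.sqrt_le_sqrt h3
  have hGmeas : G = fun x => (P (x + 2 * ε) - P (x - 2 * ε))
      - 2 * u x * (Q (x + 2 * ε) - Q (x - 2 * ε)) + (4 * ε) * u x ^ 2 := by
    funext x; rw [hGexp x, hFeq x, hGeq x]
  have hIntG : IntegrableOn G K := by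
    rw [hGmeas]
    apply Integrable.add
    apply Integrable.sub
    · -- continuous bounded part
      have hc : Continuous fun x : ℝ => P (x + 2 * ε) - P (x - 2 * ε) :=
        (hPcont.comp (continuous_id.add continuous_const)).sub
          (hPcont.comp (continuous_id.sub continuous_const))
      exact (hc.integrableOn_Icc (a := a - ε) (b := a + ε)).mono_set Set.Ioo_subset_Icc_self
    · -- u times bounded continuous
      have hc : Continuous fun x : ℝ => Q (x + 2 * ε) - Q (x - 2 * ε) :=
        (hQcont.comp (continuous_id.add continuous_const)).sub
          (hQcont.comp (continuous_id.sub continuous_const))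
      have hb : Integrable (fun x => (Q (x + 2 * ε) - Q (x - 2 * ε)) * (2 * u x))
          ((volume : Measure ℝ).restrict K) := by
        apply Integrable.bdd_mul (c := Real.sqrt (4 * ε * T)) ((huIoo _ _).const_mul 2)
          (hc.aestronglyMeasurable.restrict)
        refine Filter.Eventually.of_forall fun x => ?_
        rw [Real.norm_eq_abs]
        have := hQbdd x
        rwa [hGeq x] at this
      have : (fun x => 2 * u x * (Q (x + 2 * ε) - Q (x - 2 * ε)))
          = fun x => (Q (x + 2 * ε) - Q (x - 2 * ε)) * (2 * u x) := by
        funext x; ring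
      rw [this]
      exact hb
    · exact hsq.integrableOn.const_mul _
  -- G is pointwise ≥ g on I, integrability of g
  have hgint : IntegrableOn (fun x => B - 2 * u x * SJ + ε * u x ^ 2) K := by
    apply Integrable.add
    apply Integrable.sub
    · exact integrableOn_const measure_Ioo_lt_top.ne
    · have : (fun x : ℝ => 2 * u x * SJ) = fun x => (2 * SJ) * u x := by funext x; ring
      rw [this]; exact (huIoo _ _).const_mul _
    · exact hsq.integrableOn.const_mul _
  have hgI : IntegrableOn g I := by
    have : g = fun x => B - 2 * u x * SJ + ε * u x ^ 2 := funext hgexp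
    rw [this]
    exact hgint.mono_set (by rw [hI, hK]; exact Set.Ioo_subset_Ioo le_rfl (by linarith))
  have hIK : I ⊆ K := by rw [hI, hK]; exact Set.Ioo_subset_Ioo le_rfl (by linarith)
  -- pointwise g ≤ G on I
  have hptwise : ∀ x ∈ I, g x ≤ G x := by
    intro x hx
    rw [hg, hG]
    apply setIntegral_mono_set (hInt2 (u x) _ _)
    · exact Filter.Eventually.of_forall fun y => sq_nonneg _
    · refine Filter.Eventually.of_forall ?_
      intro y hy
      obtain ⟨hx1, hx2⟩ := hx
      obtain ⟨hy1, hy2⟩ := hy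
      exact ⟨by linarith, by linarith⟩
  -- chain of inequalities
  have step1 : (∫ x in I, g x) ≤ ∫ x in I, G x :=
    setIntegral_mono_on hgI (hIntG.mono_set hIK) measurableSet_Ioo hptwise
  have step2 : (∫ x in I, G x) ≤ ∫ x in K, G x := by
    apply setIntegral_mono_set hIntG
    · exact Filter.Eventually.of_forall fun x => integral_nonneg fun y => sq_nonneg _
    · exact Filter.Eventually.of_forall hIK
  have step3 : (∫ x in I, g x) = ε * B - 2 * SI * SJ + ε * A := by
    have : (∫ x in I, g x) = ∫ x in I, (B - (2 * SJ) * u x + ε * u x ^ 2) := by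
      apply setIntegral_congr_fun measurableSet_Ioo
      intro x _
      rw [hgexp x]; ring
    have h1 : Integrable (fun x => B - (2 * SJ) * u x)
        ((volume : Measure ℝ).restrict I) :=
      (integrableOn_const measure_Ioo_lt_top.ne).sub ((huIoo _ _).const_mul _)
    have h2 : Integrable (fun x => ε * u x ^ 2) ((volume : Measure ℝ).restrict I) :=
      hsq.integrableOn.const_mul _
    rw [this, integral_add h1 h2,
      integral_sub (integrableOn_const (C := B) measure_Ioo_lt_top.ne)
        ((huIoo _ _).const_mul _),
      setIntegral_const, integral_const_mul, integral_const_mul, measureReal_def, hvolI,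
      ENNReal.toReal_ofReal hε.le, smul_eq_mul]
    rw [← hSI, ← hA]
    ring
  -- final algebra
  have habsI : |SI| ≤ Real.sqrt ε * Real.sqrt A := by
    rw [← Real.sqrt_sq_eq_abs, ← Real.sqrt_mul hε.le]
    exact Real.sqrt_le_sqrt hcsI
  have habsJ : |SJ| ≤ Real.sqrt ε * Real.sqrt B := by
    rw [← Real.sqrt_sq_eq_abs, ← Real.sqrt_mul hε.le]
    exact Real.sqrt_le_sqrt hcsJ
  have hprod : SI * SJ ≤ ε * (Real.sqrt A * Real.sqrt B) := by
    calc SI * SJ ≤ |SI * SJ| := le_abs_self _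
      _ = |SI| * |SJ| := abs_mul _ _
      _ ≤ (Real.sqrt ε * Real.sqrt A) * (Real.sqrt ε * Real.sqrt B) := by
          apply mul_le_mul habsI habsJ (abs_nonneg _) (by positivity)
      _ = (Real.sqrt ε * Real.sqrt ε) * (Real.sqrt A * Real.sqrt B) := by ring
      _ = ε * (Real.sqrt A * Real.sqrt B) := by rw [Real.mul_self_sqrt hε.le]
  have hsaA : Real.sqrt A ^ 2 = A := Real.sq_sqrt hA0
  have hsbB : Real.sqrt B ^ 2 = B := Real.sq_sqrt hB0
  have final : ε * (Real.sqrt A - Real.sqrt B) ^ 2 ≤ ε * B - 2 * SI * SJ + ε * A := by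
    nlinarith [hprod, hsaA, hsbB, hε]
  calc ε * (Real.sqrt A - Real.sqrt B) ^ 2
      ≤ ε * B - 2 * SI * SJ + ε * A := final
    _ = ∫ x in I, g x := step3.symm
    _ ≤ ∫ x in I, G x := step1
    _ ≤ ∫ x in K, G x := step2
end

section
/- Let d ≥ 1, C₀ > 0, and κ ∈ (0,1), and let b : ℝ^d × ℝ^d → [0,∞) be measurable with b(x,y) ≤ C₀ (1+|x−y|)^{−(d+2+κ)} for all x, y, and with b(x,y) = 0 whenever |x−y| ≥ K, for some K ≥ 1. Then there is a constant C, depending only on C₀, d, and κ, such that for every z ∈ ℝ^d and every R ≥ 1: ∫_{Q_R} ∫_{ℝ^d ∖ Q_R} b(x,y) ⟨z, x−y⟩² dy dx ≤ C |z|² K^{1−κ} R^{d−1}. -/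
open MeasureTheory Metric
open scoped ENNReal

section Stmt14Aux

lemma ofReal_add_ofReal_neg (a : ℝ) :
    ENNReal.ofReal a + ENNReal.ofReal (-a) = ENNReal.ofReal |a| := by
  rcases le_total 0 a with h | h
  · rw [show ENNReal.ofReal (-a) = 0 from ENNReal.ofReal_of_nonpos (by linarith),
      abs_of_nonneg h, add_zero]
  · rw [show ENNReal.ofReal a = 0 from ENNReal.ofReal_of_nonpos h, abs_of_nonpos h, zero_add]

lemma abs_apply_le_norm {d : ℕ} (u : EuclideanSpace ℝ (Fin d)) (i : Fin d) : |u i| ≤ ‖u‖ := by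
  have h : ‖u i‖ ^ 2 ≤ ∑ j, ‖u j‖ ^ 2 :=
    Finset.single_le_sum (f := fun j => ‖u j‖ ^ 2) (fun j _ => sq_nonneg _) (Finset.mem_univ i)
  have h2 := Real.sqrt_le_sqrt h
  rwa [Real.sqrt_sq_eq_abs, abs_norm, Real.norm_eq_abs, ← EuclideanSpace.norm_eq] at h2

lemma oneD (p K : ℝ) (hp0 : 0 < p) (hp1 : p < 1) (hK : 1 ≤ K) :
    ∫ t in Set.Icc (-K) K, (1 + |t|) ^ (-p) ≤ 4 / (1 - p) * K ^ (1 - p) := by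
  have hKpos : (0:ℝ) < K := by linarith
  have h1p : (0:ℝ) < 1 - p := by linarith
  have hf : Continuous fun t : ℝ => (1 + |t|) ^ (-p) :=
    (continuous_const.add continuous_abs).rpow_const (fun t => Or.inl (by positivity : (0:ℝ) < 1 + |t|).ne')
  have hint : ∀ a b : ℝ, IntervalIntegrable (fun t => (1 + |t|) ^ (-p)) volume a b :=
    fun a b => hf.intervalIntegrable a b
  have key : ∫ t in (0:ℝ)..K, (1 + |t|) ^ (-p) ≤ (2 * K ^ (1 - p)) / (1 - p) := by
    have h1 : ∫ t in (0:ℝ)..K, (1 + |t|) ^ (-p) = ∫ t in (0:ℝ)..K, (1 + t) ^ (-p) := by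
      apply intervalIntegral.integral_congr
      intro t ht
      rw [Set.uIcc_of_le (le_of_lt hKpos)] at ht
      show (1 + |t|) ^ (-p) = (1 + t) ^ (-p)
      rw [abs_of_nonneg ht.1]
    have h2 : ∫ t in (0:ℝ)..K, (1 + t) ^ (-p) = ∫ x in (1:ℝ)..(1 + K), x ^ (-p) := by
      simpa using intervalIntegral.integral_comp_add_left (a := 0) (b := K) (fun x => x ^ (-p)) 1
    rw [h1, h2, integral_rpow (Or.inl (by linarith))]
    have hone : (1:ℝ) ^ (-p + 1) = 1 := Real.one_rpow _
    rw [hone, show -p + 1 = 1 - p from by ring]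
    have hb1 : (1 + K : ℝ) ^ (1 - p) ≤ (2 * K) ^ (1 - p) :=
      Real.rpow_le_rpow (by linarith) (by linarith) (le_of_lt h1p)
    have hb2 : (2 * K : ℝ) ^ (1 - p) = 2 ^ (1 - p) * K ^ (1 - p) :=
      Real.mul_rpow (by norm_num) (le_of_lt hKpos)
    have hb3 : (2:ℝ) ^ (1 - p) ≤ 2 := by
      calc (2:ℝ) ^ (1 - p) ≤ 2 ^ (1:ℝ) :=
            Real.rpow_le_rpow_of_exponent_le (by norm_num) (by linarith)
        _ = 2 := Real.rpow_one 2
    have hKp : (0:ℝ) ≤ K ^ (1 - p) := Real.rpow_nonneg (le_of_lt hKpos) _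
    have hup : (1 + K : ℝ) ^ (1 - p) - 1 ≤ 2 * K ^ (1 - p) := by
      have := mul_le_mul_of_nonneg_right hb3 hKp
      nlinarith
    gcongr
  have hneg : ∫ t in (-K)..(0:ℝ), (1 + |t|) ^ (-p) = ∫ t in (0:ℝ)..K, (1 + |t|) ^ (-p) := by
    have h := intervalIntegral.integral_comp_neg (a := 0) (b := K) (fun t : ℝ => (1 + |t|) ^ (-p))
    simpa [abs_neg] using h.symm
  have hsplit : ∫ t in Set.Icc (-K) K, (1 + |t|) ^ (-p)
      = (∫ t in (-K)..(0:ℝ), (1 + |t|) ^ (-p)) + ∫ t in (0:ℝ)..K, (1 + |t|) ^ (-p) := by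
    rw [MeasureTheory.integral_Icc_eq_integral_Ioc,
      ← intervalIntegral.integral_of_le (by linarith : (-K:ℝ) ≤ K),
      ← intervalIntegral.integral_add_adjacent_intervals (hint (-K) 0) (hint 0 K)]
  rw [hsplit, hneg, show (4:ℝ) / (1 - p) * K ^ (1 - p)
      = (2 * K ^ (1 - p)) / (1 - p) + (2 * K ^ (1 - p)) / (1 - p) from by ring]
  exact add_le_add key key

lemma oneD_nonneg (p K : ℝ) :
    0 ≤ ∫ t in Set.Icc (-K) K, (1 + |t|) ^ (-p) :=
  integral_nonneg fun t => Real.rpow_nonneg (by positivity) _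

lemma slab_bound {d : ℕ} (R : ℝ) (hR : 0 < R) (u : EuclideanSpace ℝ (Fin d)) :
    volume ({x : EuclideanSpace ℝ (Fin d) | ∀ i, |x i| ≤ R / 2} ∩
      (fun x => x - u) ⁻¹' {x : EuclideanSpace ℝ (Fin d) | ∀ i, |x i| ≤ R / 2}ᶜ) ≤
    ENNReal.ofReal ((∑ i, |u i|) * R ^ (d - 1)) := by
  classical
  set t : Fin d → Fin d → Set ℝ := fun i j =>
    if j = i then Set.Ico (-(R/2)) (u i - R/2) ∪ Set.Ioc (u i + R/2) (R/2)
    else Set.Icc (-(R/2)) (R/2) with ht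
  have htm : ∀ i j, MeasurableSet (t i j) := by
    intro i j
    rw [ht]
    dsimp only
    split_ifs
    · exact (measurableSet_Ico.union measurableSet_Ioc)
    · exact measurableSet_Icc
  set P : Fin d → Set (EuclideanSpace ℝ (Fin d)) := fun i =>
    (⇑((MeasurableEquiv.toLp 2 (Fin d → ℝ)).symm)) ⁻¹' (Set.pi Set.univ (t i)) with hP
  have hsub : ({x : EuclideanSpace ℝ (Fin d) | ∀ i, |x i| ≤ R / 2} ∩
      (fun x => x - u) ⁻¹' {x : EuclideanSpace ℝ (Fin d) | ∀ i, |x i| ≤ R / 2}ᶜ) ⊆ ⋃ i, P i := by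
    rintro x ⟨hx, hx2⟩
    simp only [Set.mem_preimage, Set.mem_compl_iff, Set.mem_setOf_eq, not_forall] at hx2
    obtain ⟨i, hi⟩ := hx2
    rw [PiLp.sub_apply, not_le] at hi
    refine Set.mem_iUnion.2 ⟨i, ?_⟩
    rw [hP, Set.mem_preimage, Set.mem_univ_pi]
    intro j
    change x j ∈ t i j
    rw [ht]
    dsimp only
    by_cases hj : j = i
    · subst hj
      rw [if_pos rfl]
      have hxi := abs_le.mp (hx j)
      rcases lt_abs.mp hi with h | h
      · right
        exact ⟨by linarith, hxi.2⟩
      · left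
        exact ⟨hxi.1, by linarith⟩
    · rw [if_neg hj]
      exact Set.mem_Icc.mpr (abs_le.mp (hx j))
  refine (measure_mono hsub).trans ((measure_iUnion_le _).trans ?_)
  rw [tsum_fintype]
  have hTi : ∀ i, volume (t i i) ≤ ENNReal.ofReal |u i| := by
    intro i
    rw [ht]
    dsimp only
    rw [if_pos rfl]
    refine (measure_union_le _ _).trans ?_
    rw [Real.volume_Ico, Real.volume_Ioc]
    rw [show u i - R/2 - -(R/2) = u i from by ring, show R/2 - (u i + R/2) = -(u i) from by ring]
    exact le_of_eq (ofReal_add_ofReal_neg _)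
  have hP_le : ∀ i, volume (P i) ≤ ENNReal.ofReal (|u i| * R ^ (d - 1)) := by
    intro i
    rw [hP, (EuclideanSpace.volume_preserving_symm_measurableEquiv_toLp (Fin d)).measure_preimage
      ((MeasurableSet.univ_pi (htm i)).nullMeasurableSet), volume_pi_pi]
    rw [← Finset.mul_prod_erase Finset.univ _ (Finset.mem_univ i)]
    have hrest : ∏ j ∈ Finset.univ.erase i, volume (t i j) = ENNReal.ofReal R ^ (d - 1) := by
      rw [Finset.prod_congr rfl (fun j hj => ?_), Finset.prod_const,
        Finset.card_erase_of_mem (Finset.mem_univ i), Finset.card_univ, Fintype.card_fin]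
      rw [ht]
      dsimp only
      rw [if_neg (Finset.mem_erase.mp hj).1, Real.volume_Icc,
        show R/2 - -(R/2) = R from by ring]
    rw [hrest]
    calc volume (t i i) * ENNReal.ofReal R ^ (d - 1)
        ≤ ENNReal.ofReal |u i| * ENNReal.ofReal R ^ (d - 1) :=
          mul_le_mul_left (hTi i) _
      _ = ENNReal.ofReal (|u i| * R ^ (d - 1)) := by
          rw [← ENNReal.ofReal_pow (le_of_lt hR), ← ENNReal.ofReal_mul (abs_nonneg _)]
  calc ∑ i, volume (P i) ≤ ∑ i, ENNReal.ofReal (|u i| * R ^ (d - 1)) :=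
        Finset.sum_le_sum fun i _ => hP_le i
    _ = ENNReal.ofReal (∑ i, |u i| * R ^ (d - 1)) :=
        (ENNReal.ofReal_sum_of_nonneg fun i _ => by positivity).symm
    _ = ENNReal.ofReal ((∑ i, |u i|) * R ^ (d - 1)) := by rw [← Finset.sum_mul]

end Stmt14Aux

set_option maxHeartbeats 2000000 in
/-- Boundary-layer estimate for a truncated kernel: for `κ ∈ (0,1)` and
a measurable kernel `b` with decay `b(x,y) ≤ C₀(1+|x−y|)^{−(d+2+κ)}` vanishing when
`|x−y| ≥ K` (`K ≥ 1`), there is a constant `C`, depending only on `C₀`, `d` and `κ`,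
such that for every `z ∈ ℝ^d` and every `R ≥ 1`,
`∫_{Q_R} ∫_{ℝ^d ∖ Q_R} b(x,y) ⟨z, x−y⟩² dy dx ≤ C |z|² K^{1−κ} R^{d−1}`. -/
theorem stmt_14 (d : ℕ) (hd : 1 ≤ d) (C₀ κ : ℝ) (hC₀ : 0 < C₀)
    (hκ : κ ∈ Set.Ioo (0 : ℝ) 1) :
    ∃ C : ℝ, 0 < C ∧
      ∀ K : ℝ, 1 ≤ K →
        ∀ b : EuclideanSpace ℝ (Fin d) → EuclideanSpace ℝ (Fin d) → ℝ,
          Measurable (Function.uncurry b) →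
          (∀ x y, 0 ≤ b x y) →
          (∀ x y, b x y ≤ C₀ * (1 + dist x y) ^ (-((d : ℝ) + 2 + κ))) →
          (∀ x y, K ≤ dist x y → b x y = 0) →
          ∀ (z : EuclideanSpace ℝ (Fin d)) (R : ℝ), 1 ≤ R →
            (∫⁻ x in {x : EuclideanSpace ℝ (Fin d) | ∀ i, |x i| ≤ R / 2},
                ∫⁻ y in {y : EuclideanSpace ℝ (Fin d) | ∀ i, |y i| ≤ R / 2}ᶜ,
                  ENNReal.ofReal (b x y * (inner ℝ z (x - y) : ℝ) ^ 2)) ≤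
              ENNReal.ofReal (C * ‖z‖ ^ 2 * K ^ (1 - κ) * R ^ ((d : ℝ) - 1)) := by
  classical
  obtain ⟨hκ0, hκ1⟩ := hκ
  have hd0 : (0:ℝ) < d := by exact_mod_cast Nat.lt_of_lt_of_le Nat.zero_lt_one hd
  have hd1 : (1:ℝ) ≤ d := by exact_mod_cast hd
  set p : ℝ := ((d:ℝ) - 1 + κ) / d with hp_def
  have hp0 : 0 < p := div_pos (by linarith) hd0
  have hp1 : p < 1 := by rw [hp_def, div_lt_one hd0]; linarith
  have h1mp : 1 - p = (1 - κ) / d := by rw [hp_def]; field_simp; ring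
  have hC : 0 < C₀ * d * (4 * d / (1 - κ)) ^ d := by
    have h4 : 0 < 4 * (d:ℝ) / (1 - κ) := div_pos (by linarith) (by linarith)
    exact mul_pos (mul_pos hC₀ hd0) (pow_pos h4 d)
  refine ⟨C₀ * d * (4 * d / (1 - κ)) ^ d, hC, ?_⟩
  intro K hK b hb_meas hb_nonneg hb_decay hb_supp z R hR
  have hK0 : (0:ℝ) < K := by linarith
  have hRpos : (0:ℝ) < R := by linarith
  set Q : Set (EuclideanSpace ℝ (Fin d)) := {x | ∀ i, |x i| ≤ R / 2} with hQdef
  have hQm : MeasurableSet Q := by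
    have : Q = ⋂ i, (fun x : EuclideanSpace ℝ (Fin d) => x i) ⁻¹' Set.Icc (-(R/2)) (R/2) := by
      ext x
      simp [hQdef, abs_le]
    rw [this]
    exact MeasurableSet.iInter fun i => ((measurable_pi_apply i).comp (MeasurableEquiv.toLp 2 (Fin d → ℝ)).symm.measurable) measurableSet_Icc
  have hQc : MeasurableSet Qᶜ := hQm.compl
  set q : ℝ := (d:ℝ) + κ with hq_def
  set G : EuclideanSpace ℝ (Fin d) → ℝ≥0∞ := fun w =>
    Set.indicator {w : EuclideanSpace ℝ (Fin d) | ‖w‖ < K}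
      (fun w => ENNReal.ofReal (C₀ * ‖z‖ ^ 2 * (1 + ‖w‖) ^ (-q))) w with hGdef
  have hGm : Measurable G := by
    apply Measurable.indicator
    · exact (ENNReal.measurable_ofReal.comp
        ((continuous_const.mul ((continuous_const.add continuous_norm).rpow_const
          (fun w => Or.inl (by positivity : (0:ℝ) < 1 + ‖w‖).ne'))).measurable))
    · exact measurableSet_lt continuous_norm.measurable measurable_const
  have hGtop : ∀ w, G w ≠ ⊤ := by
    intro w
    rw [hGdef]
    simp only [Set.indicator_apply]
    split_ifs <;> simp
  -- Step 1: pointwise bound of the integrand by G (x - y)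
  have step1 : ∀ x y : EuclideanSpace ℝ (Fin d),
      ENNReal.ofReal (b x y * (inner ℝ z (x - y) : ℝ) ^ 2) ≤ G (x - y) := by
    intro x y
    by_cases hxy : ‖x - y‖ < K
    · rw [hGdef]
      simp only [Set.indicator_apply, Set.mem_setOf_eq]
      rw [if_pos hxy]
      apply ENNReal.ofReal_le_ofReal
      have hn0 : (0:ℝ) ≤ ‖x - y‖ := norm_nonneg _
      set n : ℝ := ‖x - y‖ with hn
      have h1n : (0:ℝ) < 1 + n := by linarith
      have hinner : (inner ℝ z (x - y) : ℝ) ^ 2 ≤ ‖z‖ ^ 2 * n ^ 2 := by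
        have h := abs_real_inner_le_norm z (x - y)
        calc (inner ℝ z (x - y) : ℝ) ^ 2 = |(inner ℝ z (x - y) : ℝ)| ^ 2 := (sq_abs _).symm
          _ ≤ (‖z‖ * n) ^ 2 := by apply pow_le_pow_left₀ (abs_nonneg _) h
          _ = ‖z‖ ^ 2 * n ^ 2 := by ring
      have hb := hb_decay x y
      rw [dist_eq_norm, ← hn] at hb
      have hrp_nonneg : (0:ℝ) ≤ (1 + n) ^ (-((d:ℝ) + 2 + κ)) := Real.rpow_nonneg (by linarith) _
      have hprod : b x y * (inner ℝ z (x - y) : ℝ) ^ 2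
          ≤ (C₀ * (1 + n) ^ (-((d:ℝ) + 2 + κ))) * (‖z‖ ^ 2 * n ^ 2) :=
        mul_le_mul hb hinner (sq_nonneg _) (mul_nonneg (le_of_lt hC₀) hrp_nonneg)
      refine hprod.trans ?_
      have hn2 : n ^ 2 ≤ (1 + n) ^ 2 := by nlinarith
      have hkey : (1 + n) ^ (-((d:ℝ) + 2 + κ)) * (1 + n) ^ (2:ℕ) ≤ (1 + n) ^ (-q) := by
        rw [← Real.rpow_natCast (1 + n) 2, ← Real.rpow_add h1n]
        apply le_of_eq
        congr 1
        rw [hq_def]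
        push_cast
        ring
      calc C₀ * (1 + n) ^ (-((d:ℝ) + 2 + κ)) * (‖z‖ ^ 2 * n ^ 2)
          ≤ C₀ * (1 + n) ^ (-((d:ℝ) + 2 + κ)) * (‖z‖ ^ 2 * (1 + n) ^ 2) := by
            apply mul_le_mul_of_nonneg_left (mul_le_mul_of_nonneg_left hn2 (sq_nonneg _))
              (mul_nonneg (le_of_lt hC₀) hrp_nonneg)
        _ = C₀ * ‖z‖ ^ 2 * ((1 + n) ^ (-((d:ℝ) + 2 + κ)) * (1 + n) ^ (2:ℕ)) := by ring
        _ ≤ C₀ * ‖z‖ ^ 2 * (1 + n) ^ (-q) := by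
            apply mul_le_mul_of_nonneg_left hkey (mul_nonneg (le_of_lt hC₀) (sq_nonneg _))
    · have hb0 : b x y = 0 := hb_supp x y (by rw [dist_eq_norm]; linarith)
      simp [hb0]
  -- Step 2: rewrite the inner integral via translation invariance
  have inner_eq : ∀ x : EuclideanSpace ℝ (Fin d),
      (∫⁻ y in Qᶜ, G (x - y)) =
      ∫⁻ u, (Qᶜ.indicator (fun _ => (1:ℝ≥0∞)) (x - u)) * G u := by
    intro x
    rw [← lintegral_indicator hQc]
    have hmap : Measure.map (⇑(MeasurableEquiv.subLeft x))
        (volume : Measure (EuclideanSpace ℝ (Fin d))) = volume := by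
      rw [show ⇑(MeasurableEquiv.subLeft x) = fun t : EuclideanSpace ℝ (Fin d) => x - t from rfl]
      exact Measure.map_sub_left_eq_self volume x
    calc ∫⁻ y, Qᶜ.indicator (fun y => G (x - y)) y
        = ∫⁻ y, Qᶜ.indicator (fun y => G (x - y)) y
            ∂(Measure.map (⇑(MeasurableEquiv.subLeft x)) volume) := by rw [hmap]
      _ = ∫⁻ u, Qᶜ.indicator (fun y => G (x - y)) ((MeasurableEquiv.subLeft x) u) :=
          lintegral_map_equiv _ _
      _ = ∫⁻ u, (Qᶜ.indicator (fun _ => (1:ℝ≥0∞)) (x - u)) * G u := by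
          apply lintegral_congr
          intro u
          have hsl : (MeasurableEquiv.subLeft x) u = x - u := rfl
          rw [hsl]
          by_cases h : x - u ∈ Qᶜ
          · rw [Set.indicator_of_mem h, Set.indicator_of_mem h, sub_sub_cancel, one_mul]
          · rw [Set.indicator_of_notMem h, Set.indicator_of_notMem h, zero_mul]
  -- Step 3: Tonelli swap
  have swap_eq :
      (∫⁻ x in Q, ∫⁻ u, (Qᶜ.indicator (fun _ => (1:ℝ≥0∞)) (x - u)) * G u)
        = ∫⁻ u, volume (Q ∩ (fun x => x - u) ⁻¹' Qᶜ) * G u := by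
    rw [← lintegral_indicator hQm]
    have hpt : ∀ x, Set.indicator Q
          (fun x => ∫⁻ u, (Qᶜ.indicator (fun _ => (1:ℝ≥0∞)) (x - u)) * G u) x
        = ∫⁻ u, (Q.indicator (fun _ => (1:ℝ≥0∞)) x) *
            ((Qᶜ.indicator (fun _ => (1:ℝ≥0∞)) (x - u)) * G u) := by
      intro x
      by_cases h : x ∈ Q
      · rw [Set.indicator_of_mem h]
        simp only [Set.indicator_of_mem h, one_mul]
      · rw [Set.indicator_of_notMem h]
        simp only [Set.indicator_of_notMem h, zero_mul, lintegral_zero]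
    simp_rw [hpt]
    have hmeas : AEMeasurable (Function.uncurry fun x u =>
        (Q.indicator (fun _ => (1:ℝ≥0∞)) x) *
          ((Qᶜ.indicator (fun _ => (1:ℝ≥0∞)) (x - u)) * G u))
        ((volume : Measure (EuclideanSpace ℝ (Fin d))).prod volume) := by
      apply Measurable.aemeasurable
      apply Measurable.mul
      · exact (measurable_const.indicator hQm).comp measurable_fst
      · apply Measurable.mul
        · exact (measurable_const.indicator hQc).comp (measurable_fst.sub measurable_snd)
        · exact hGm.comp measurable_snd
    rw [lintegral_lintegral_swap hmeas]
    apply lintegral_congr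
    intro u
    have hpt2 : ∀ x, (Q.indicator (fun _ => (1:ℝ≥0∞)) x) *
        ((Qᶜ.indicator (fun _ => (1:ℝ≥0∞)) (x - u)) * G u)
        = ((Q ∩ (fun x => x - u) ⁻¹' Qᶜ).indicator (fun _ => (1:ℝ≥0∞)) x) * G u := by
      intro x
      simp only [Set.indicator_apply, Set.mem_inter_iff, Set.mem_preimage]
      by_cases h1 : x ∈ Q <;> by_cases h2 : x - u ∈ Qᶜ <;> simp [h1, h2]
    simp_rw [hpt2]
    rw [lintegral_mul_const' _ _ (hGtop u)]
    congr 1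
    have hS : MeasurableSet (Q ∩ (fun x : EuclideanSpace ℝ (Fin d) => x - u) ⁻¹' Qᶜ) :=
      hQm.inter ((measurable_id'.sub measurable_const) hQc)
    rw [lintegral_indicator hS]
    exact setLIntegral_one _
  -- the one-dimensional profile
  set g : ℝ → ℝ := Set.indicator (Set.Icc (-K) K) (fun t => (1 + |t|) ^ (-p)) with hgdef
  have hgc : Continuous fun t : ℝ => (1 + |t|) ^ (-p) :=
    (continuous_const.add continuous_abs).rpow_const (fun t => Or.inl (by positivity : (0:ℝ) < 1 + |t|).ne')
  have hg_nonneg : ∀ t, 0 ≤ g t := fun t =>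
    Set.indicator_nonneg (fun t _ => Real.rpow_nonneg (by positivity) _) t
  have hg_meas : Measurable g := hgc.measurable.indicator measurableSet_Icc
  have hg_int : Integrable g :=
    ((hgc.continuousOn).integrableOn_compact isCompact_Icc).integrable_indicator
      measurableSet_Icc
  -- Step 4: pointwise bound after the swap
  have step4 : ∀ u : EuclideanSpace ℝ (Fin d),
      ENNReal.ofReal ((∑ i, |u i|) * R ^ (d - 1)) * G u ≤
      ENNReal.ofReal (C₀ * ‖z‖ ^ 2 * d * R ^ (d - 1)) * ENNReal.ofReal (∏ i, g (u i)) := by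
    intro u
    by_cases h : ‖u‖ < K
    · rw [hGdef]
      simp only [Set.indicator_apply, Set.mem_setOf_eq]
      rw [if_pos h, ← ENNReal.ofReal_mul (by positivity), ← ENNReal.ofReal_mul (by positivity)]
      apply ENNReal.ofReal_le_ofReal
      have hm0 : (0:ℝ) ≤ ‖u‖ := norm_nonneg _
      set m : ℝ := ‖u‖ with hm
      have h1m : (0:ℝ) < 1 + m := by linarith
      have hsum : ∑ i, |u i| ≤ (d:ℝ) * m := by
        calc ∑ i, |u i| ≤ ∑ _i : Fin d, m := Finset.sum_le_sum fun i _ => abs_apply_le_norm u i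
          _ = (d:ℝ) * m := by rw [Finset.sum_const, Finset.card_univ, Fintype.card_fin,
            nsmul_eq_mul]
      have key1 : m * (1 + m) ^ (-q) ≤ (1 + m) ^ (1 - q) := by
        have : (1 + m) ^ (1 - q) = (1 + m) * (1 + m) ^ (-q) := by
          rw [show (1:ℝ) - q = 1 + (-q) from by ring, Real.rpow_add h1m, Real.rpow_one]
        rw [this]
        exact mul_le_mul_of_nonneg_right (by linarith) (Real.rpow_nonneg (le_of_lt h1m) _)
      have key2 : (1 + m) ^ (1 - q) ≤ ∏ i, g (u i) := by
        have hgu : ∀ i, g (u i) = (1 + |u i|) ^ (-p) := by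
          intro i
          rw [hgdef]
          apply Set.indicator_of_mem
          have := abs_apply_le_norm u i
          exact Set.mem_Icc.mpr (abs_le.mp (by rw [← hm] at this; linarith [this]))
        have hprod1 : ∏ i, (1 + |u i|) ^ p ≤ (1 + m) ^ (p * (d:ℝ)) := by
          have h2 : ∏ i, (1 + |u i|) ^ p ≤ ∏ _i : Fin d, (1 + m) ^ p :=
            Finset.prod_le_prod (fun i _ => Real.rpow_nonneg (by positivity) _)
              (fun i _ => Real.rpow_le_rpow (by positivity)
                (by linarith [abs_apply_le_norm u i]) (le_of_lt hp0))
          calc ∏ i, (1 + |u i|) ^ p ≤ ∏ _i : Fin d, (1 + m) ^ p := h2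
            _ = ((1 + m) ^ p) ^ (d:ℕ) := by
                rw [Finset.prod_const, Finset.card_univ, Fintype.card_fin]
            _ = (1 + m) ^ (p * (d:ℝ)) := by
                rw [← Real.rpow_natCast ((1 + m) ^ p) d, ← Real.rpow_mul (le_of_lt h1m)]
        have hpd : p * (d:ℝ) = (d:ℝ) - 1 + κ := by
          rw [hp_def]; field_simp
        have h1q : (1:ℝ) - q = -(p * (d:ℝ)) := by rw [hq_def, hpd]; ring
        have hprodpos : 0 < ∏ i, (1 + |u i|) ^ p :=
          Finset.prod_pos fun i _ => Real.rpow_pos_of_pos (by positivity) _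
        calc (1 + m) ^ (1 - q) = ((1 + m) ^ (p * (d:ℝ)))⁻¹ := by
              rw [h1q, Real.rpow_neg (le_of_lt h1m)]
          _ ≤ (∏ i, (1 + |u i|) ^ p)⁻¹ := by
              apply inv_anti₀ hprodpos hprod1
          _ = ∏ i, ((1 + |u i|) ^ p)⁻¹ := by rw [← Finset.prod_inv_distrib]
          _ = ∏ i, g (u i) := by
              apply Finset.prod_congr rfl
              intro i _
              rw [hgu i, Real.rpow_neg (by positivity)]
      calc (∑ i, |u i|) * R ^ (d - 1) * (C₀ * ‖z‖ ^ 2 * (1 + m) ^ (-q))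
          ≤ ((d:ℝ) * m) * R ^ (d - 1) * (C₀ * ‖z‖ ^ 2 * (1 + m) ^ (-q)) := by
            apply mul_le_mul_of_nonneg_right (mul_le_mul_of_nonneg_right hsum (by positivity))
            positivity
        _ = C₀ * ‖z‖ ^ 2 * (d:ℝ) * R ^ (d - 1) * (m * (1 + m) ^ (-q)) := by ring
        _ ≤ C₀ * ‖z‖ ^ 2 * (d:ℝ) * R ^ (d - 1) * ((1 + m) ^ (1 - q)) := by
            apply mul_le_mul_of_nonneg_left key1 (by positivity)
        _ ≤ C₀ * ‖z‖ ^ 2 * (d:ℝ) * R ^ (d - 1) * ∏ i, g (u i) := by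
            apply mul_le_mul_of_nonneg_left key2 (by positivity)
    · rw [hGdef]
      simp only [Set.indicator_apply, Set.mem_setOf_eq]
      rw [if_neg h, mul_zero]
      exact zero_le
  -- transfer the product integral to the pi space and evaluate
  have hpi : (∫⁻ u : EuclideanSpace ℝ (Fin d), ENNReal.ofReal (∏ i, g (u i)))
      = ∫⁻ v : Fin d → ℝ, ENNReal.ofReal (∏ i, g (v i)) := by
    have h := lintegral_map_equiv (μ := (volume : Measure (EuclideanSpace ℝ (Fin d))))
      (fun v : Fin d → ℝ => ENNReal.ofReal (∏ i, g (v i)))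
      ((MeasurableEquiv.toLp 2 (Fin d → ℝ)).symm)
    rw [(EuclideanSpace.volume_preserving_symm_measurableEquiv_toLp (Fin d)).map_eq] at h
    exact h.symm
  have hInt : Integrable (fun v : Fin d → ℝ => ∏ i, g (v i)) :=
    Integrable.fintype_prod (𝕜 := ℝ) (f := fun _ : Fin d => g) fun i => hg_int
  have hofReal : (∫⁻ v : Fin d → ℝ, ENNReal.ofReal (∏ i, g (v i)))
      = ENNReal.ofReal (∫ v : Fin d → ℝ, ∏ i, g (v i)) :=
    (ofReal_integral_eq_lintegral_ofReal hInt
      (Filter.Eventually.of_forall fun v => Finset.prod_nonneg fun i _ => hg_nonneg _)).symm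
  have hprod_int : (∫ v : Fin d → ℝ, ∏ i, g (v i)) = (∫ t, g t) ^ d := by
    have := integral_fintype_prod_eq_pow (ι := Fin d) g (μ := (volume : Measure ℝ))
    rw [← volume_pi, Fintype.card_fin] at this
    exact this
  have hg_val : (∫ t, g t) = ∫ t in Set.Icc (-K) K, (1 + |t|) ^ (-p) := by
    rw [hgdef, integral_indicator measurableSet_Icc]
  have hpow : (∫ t, g t) ^ d ≤ (4 / (1 - p) * K ^ (1 - p)) ^ d := by
    apply pow_le_pow_left₀ (by rw [hg_val]; exact oneD_nonneg p K)
    rw [hg_val]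
    exact oneD p K hp0 hp1 hK
  have hc1 : (0:ℝ) ≤ C₀ * ‖z‖ ^ 2 * d * R ^ (d - 1) := by positivity
  have final_eq : C₀ * ‖z‖ ^ 2 * (d:ℝ) * R ^ (d - 1) * (4 / (1 - p) * K ^ (1 - p)) ^ d
      = C₀ * (d:ℝ) * (4 * d / (1 - κ)) ^ d * ‖z‖ ^ 2 * K ^ (1 - κ) * R ^ ((d:ℝ) - 1) := by
    have e1 : (4:ℝ) / (1 - p) = 4 * d / (1 - κ) := by
      rw [h1mp]
      field_simp
    have e2 : (K ^ (1 - p)) ^ (d:ℕ) = K ^ (1 - κ) := by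
      rw [← Real.rpow_natCast (K ^ (1 - p)) d, ← Real.rpow_mul (le_of_lt hK0), h1mp,
        div_mul_cancel₀ _ (ne_of_gt hd0)]
    have e3 : (R:ℝ) ^ ((d:ℝ) - 1) = R ^ (d - 1 : ℕ) := by
      rw [← Real.rpow_natCast R (d - 1), Nat.cast_sub hd, Nat.cast_one]
    rw [mul_pow, e2, e1, e3]
    ring
  calc (∫⁻ x in Q, ∫⁻ y in Qᶜ, ENNReal.ofReal (b x y * (inner ℝ z (x - y) : ℝ) ^ 2))
      ≤ ∫⁻ x in Q, ∫⁻ y in Qᶜ, G (x - y) :=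
        lintegral_mono fun x => lintegral_mono fun y => step1 x y
    _ = ∫⁻ x in Q, ∫⁻ u, (Qᶜ.indicator (fun _ => (1:ℝ≥0∞)) (x - u)) * G u :=
        lintegral_congr fun x => inner_eq x
    _ = ∫⁻ u, volume (Q ∩ (fun x => x - u) ⁻¹' Qᶜ) * G u := swap_eq
    _ ≤ ∫⁻ u, ENNReal.ofReal ((∑ i, |u i|) * R ^ (d - 1)) * G u :=
        lintegral_mono fun u => mul_le_mul_left (slab_bound R hRpos u) _
    _ ≤ ∫⁻ u, ENNReal.ofReal (C₀ * ‖z‖ ^ 2 * d * R ^ (d - 1)) *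
          ENNReal.ofReal (∏ i, g (u i)) := lintegral_mono step4
    _ = ENNReal.ofReal (C₀ * ‖z‖ ^ 2 * d * R ^ (d - 1)) *
          ∫⁻ u : EuclideanSpace ℝ (Fin d), ENNReal.ofReal (∏ i, g (u i)) :=
        lintegral_const_mul' _ _ ENNReal.ofReal_ne_top
    _ = ENNReal.ofReal (C₀ * ‖z‖ ^ 2 * d * R ^ (d - 1)) *
          ENNReal.ofReal ((∫ t, g t) ^ d) := by rw [hpi, hofReal, hprod_int]
    _ ≤ ENNReal.ofReal (C₀ * ‖z‖ ^ 2 * d * R ^ (d - 1)) *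
          ENNReal.ofReal ((4 / (1 - p) * K ^ (1 - p)) ^ d) :=
        mul_le_mul_right (ENNReal.ofReal_le_ofReal hpow) _
    _ = ENNReal.ofReal (C₀ * ‖z‖ ^ 2 * d * R ^ (d - 1) * (4 / (1 - p) * K ^ (1 - p)) ^ d) :=
        (ENNReal.ofReal_mul hc1).symm
    _ = ENNReal.ofReal (C₀ * (d:ℝ) * (4 * d / (1 - κ)) ^ d * ‖z‖ ^ 2 * K ^ (1 - κ) *
          R ^ ((d:ℝ) - 1)) := by rw [final_eq]
end
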